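/- arXiv:2210.12411 — 5 statements merged into one kernel-verified Lean document; each statement's English description precedes it below -/
import Mathlib

section
/- Let n ∈ ℕ and let c be a Riviera configuration of length n. Then c is maximal if and only if for every index i with 0 ≤ i ≤ n−1 none of the following four patterns occurs in the zero-padded configuration: (1) c(i−1) = c(i) = c(i+1) = true; (2) c(i−1) = c(i) = c(i+1) = false; (3) c(i−2) = false, c(i−1) = true, c(i) = false, c(i+1) = false; (4) c(i−1) = false, c(i) = false, c(i+1) = true, c(i+2) = false. -/
/-- A Riviera configuration of length `n`: zero-padded outside `{0, …, n−1}`. -/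
def RivieraConfig (n : ℕ) (c : ℤ → Bool) : Prop :=
  ∀ j : ℤ, j < 0 ∨ (n : ℤ) ≤ j → c j = false

/-- Permissibility: no occupied lot has both neighbors occupied. -/
def RivieraPermissible (c : ℤ → Bool) : Prop :=
  ¬ ∃ i : ℤ, c (i - 1) = true ∧ c i = true ∧ c (i + 1) = true

/-- Maximality: permissible and no house can be added. -/
def RivieraMaximal (n : ℕ) (c : ℤ → Bool) : Prop :=
  RivieraPermissible c ∧
    ∀ j : ℤ, 0 ≤ j → j < (n : ℤ) → c j = false →
      ¬ RivieraPermissible (Function.update c j true)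

lemma perm_update_aux (c : ℤ → Bool) (hperm : RivieraPermissible c) (j : ℤ)
    (h1 : c (j-2) = false ∨ c (j-1) = false)
    (h2 : c (j-1) = false ∨ c (j+1) = false)
    (h3 : c (j+1) = false ∨ c (j+2) = false) :
    RivieraPermissible (Function.update c j true) := by
  rintro ⟨k, hk1, hk2, hk3⟩
  simp only [Function.update_apply] at hk1 hk2 hk3
  by_cases e2 : k = j
  · rw [if_neg (by omega : ¬ (k - 1 = j)), show k - 1 = j - 1 by omega] at hk1
    rw [if_neg (by omega : ¬ (k + 1 = j)), show k + 1 = j + 1 by omega] at hk3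
    rcases h2 with h | h
    · rw [h] at hk1; exact absurd hk1 (by simp)
    · rw [h] at hk3; exact absurd hk3 (by simp)
  · by_cases e1 : k - 1 = j
    · rw [if_neg e2] at hk2
      rw [if_neg (by omega : ¬ (k + 1 = j))] at hk3
      rcases h3 with h | h
      · rw [show k = j + 1 by omega, h] at hk2; exact absurd hk2 (by simp)
      · rw [show k + 1 = j + 2 by omega, h] at hk3; exact absurd hk3 (by simp)
    · by_cases e3 : k + 1 = j
      · rw [if_neg e1] at hk1
        rw [if_neg e2] at hk2
        rcases h1 with h | h
        · rw [show k - 1 = j - 2 by omega, h] at hk1; exact absurd hk1 (by simp)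
        · rw [show k = j - 1 by omega, h] at hk2; exact absurd hk2 (by simp)
      · rw [if_neg e1] at hk1; rw [if_neg e2] at hk2; rw [if_neg e3] at hk3
        exact hperm ⟨k, hk1, hk2, hk3⟩

theorem riviera_maximal_iff_no_forbidden_patterns (n : ℕ) (c : ℤ → Bool)
    (hc : RivieraConfig n c) :
    RivieraMaximal n c ↔
      ∀ i : ℤ, 0 ≤ i → i < (n : ℤ) →
        ¬ (c (i - 1) = true ∧ c i = true ∧ c (i + 1) = true) ∧
        ¬ (c (i - 1) = false ∧ c i = false ∧ c (i + 1) = false) ∧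
        ¬ (c (i - 2) = false ∧ c (i - 1) = true ∧ c i = false ∧ c (i + 1) = false) ∧
        ¬ (c (i - 1) = false ∧ c i = false ∧ c (i + 1) = true ∧ c (i + 2) = false) := by
  have hrange : ∀ i : ℤ, c i = true → 0 ≤ i ∧ i < (n : ℤ) := by
    intro i hi
    by_contra h
    rw [hc i (by omega)] at hi
    exact absurd hi (by simp)
  constructor
  · rintro ⟨hperm, hmax⟩ i hi0 hin
    refine ⟨fun ⟨h1, h2, h3⟩ => hperm ⟨i, h1, h2, h3⟩, ?_, ?_, ?_⟩
    · rintro ⟨h1, h2, h3⟩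
      exact hmax i hi0 hin h2 (perm_update_aux c hperm i (Or.inr h1) (Or.inl h1) (Or.inl h3))
    · rintro ⟨h0, h1, h2, h3⟩
      exact hmax i hi0 hin h2 (perm_update_aux c hperm i (Or.inl h0) (Or.inr h3) (Or.inl h3))
    · rintro ⟨h1, h2, h3, h4⟩
      exact hmax i hi0 hin h2 (perm_update_aux c hperm i (Or.inr h1) (Or.inl h1) (Or.inr h4))
  · intro h
    constructor
    · rintro ⟨i, h1, h2, h3⟩
      obtain ⟨hi0, hin⟩ := hrange i h2
      exact (h i hi0 hin).1 ⟨h1, h2, h3⟩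
    · intro j hj0 hjn hcj hupd
      obtain ⟨-, hp2, hp3, hp4⟩ := h j hj0 hjn
      have h2 : c (j - 1) = true ∨ c (j + 1) = true := by
        rcases Bool.eq_false_or_eq_true (c (j - 1)) with hl | hl
        · exact Or.inl hl
        · rcases Bool.eq_false_or_eq_true (c (j + 1)) with hr | hr
          · exact Or.inr hr
          · exact absurd ⟨hl, hcj, hr⟩ hp2
      have triple_center : c (j - 1) = true → c (j + 1) = true → False := by
        intro hl hr
        refine hupd ⟨j, ?_, ?_, ?_⟩
        · rw [Function.update_apply, if_neg (by omega : ¬ (j - 1 = j))]; exact hl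
        · rw [Function.update_apply, if_pos rfl]
        · rw [Function.update_apply, if_neg (by omega : ¬ (j + 1 = j))]; exact hr
      rcases h2 with hl | hr
      · have h3 : c (j - 2) = true ∨ c (j + 1) = true := by
          rcases Bool.eq_false_or_eq_true (c (j - 2)) with ha | ha
          · exact Or.inl ha
          · rcases Bool.eq_false_or_eq_true (c (j + 1)) with hb | hb
            · exact Or.inr hb
            · exact absurd ⟨ha, hl, hcj, hb⟩ hp3
        rcases h3 with ha | hb
        · refine hupd ⟨j - 1, ?_, ?_, ?_⟩
          · rw [Function.update_apply, if_neg (by omega : ¬ (j - 1 - 1 = j)),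
              show j - 1 - 1 = j - 2 by ring]; exact ha
          · rw [Function.update_apply, if_neg (by omega : ¬ (j - 1 = j))]; exact hl
          · rw [Function.update_apply, if_pos (by omega : j - 1 + 1 = j)]
        · exact triple_center hl hb
      · have h3 : c (j - 1) = true ∨ c (j + 2) = true := by
          rcases Bool.eq_false_or_eq_true (c (j - 1)) with ha | ha
          · exact Or.inl ha
          · rcases Bool.eq_false_or_eq_true (c (j + 2)) with hb | hb
            · exact Or.inr hb
            · exact absurd ⟨ha, hcj, hr, hb⟩ hp4
        rcases h3 with ha | hb
        · exact triple_center ha hr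
        · refine hupd ⟨j + 1, ?_, ?_, ?_⟩
          · rw [Function.update_apply, if_pos (by omega : j + 1 - 1 = j)]
          · rw [Function.update_apply, if_neg (by omega : ¬ (j + 1 = j))]; exact hr
          · rw [Function.update_apply, if_neg (by omega : ¬ (j + 1 + 1 = j)),
              show j + 1 + 1 = j + 2 by ring]; exact hb
end

section
/- Let a_n denote the number of maximal Riviera configurations of length n. Then a_1 = 1, a_2 = 1, a_3 = 3, a_4 = 3, a_5 = 4, a_6 = 6, and for every n ≥ 7 one has a_n + a_{n−6} = a_{n−2} + a_{n−3} + a_{n−4} (equivalently, a_n = a_{n−2} + a_{n−3} + a_{n−4} − a_{n−6}). -/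
/-- `rivieraCount n` = the number of maximal Riviera configurations of length `n`. -/
noncomputable def rivieraCount (n : ℕ) : ℕ :=
  Nat.card {c : ℤ → Bool // RivieraConfig n c ∧ RivieraMaximal n c}


/-! ### auxiliary machinery -/

def pat (c : ℤ → Bool) (j : ℤ) : Prop :=
  (c (j-2) = true ∧ c (j-1) = true) ∨ (c (j-1) = true ∧ c (j+1) = true) ∨
    (c (j+1) = true ∧ c (j+2) = true)

lemma cB {c : ℤ → Bool} {x y : ℤ} (h : y = x) (hx : c x = true) : c y = true := by
  rw [h]; exact hx

lemma conf_true {n : ℕ} {d : ℤ → Bool} (h : RivieraConfig n d) {y : ℤ}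
    (hy : d y = true) : 0 ≤ y ∧ y < (n : ℤ) := by
  constructor
  · by_contra h0; rw [h y (Or.inl (by omega))] at hy; cases hy
  · by_contra h1; rw [h y (Or.inr (by omega))] at hy; cases hy

lemma flip_iff {c : ℤ → Bool} {j : ℤ} (hp : RivieraPermissible c) (hj : c j = false) :
    ¬ RivieraPermissible (Function.update c j true) ↔ pat c j := by
  constructor
  · intro h
    obtain ⟨i, h1, h2, h3⟩ := not_not.mp h
    by_cases e2 : i = j
    · subst e2
      refine Or.inr (Or.inl ⟨?_, ?_⟩)
      · rwa [Function.update_of_ne (by omega)] at h1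
      · rwa [Function.update_of_ne (by omega)] at h3
    · by_cases e1 : i - 1 = j
      · refine Or.inr (Or.inr ⟨?_, ?_⟩)
        · rw [Function.update_of_ne e2] at h2; exact cB (by omega) h2
        · rw [Function.update_of_ne (by omega)] at h3; exact cB (by omega) h3
      · by_cases e3 : i + 1 = j
        · refine Or.inl ⟨?_, ?_⟩
          · rw [Function.update_of_ne (by omega)] at h1; exact cB (by omega) h1
          · rw [Function.update_of_ne e2] at h2; exact cB (by omega) h2
        · exact absurd ⟨i, by rwa [Function.update_of_ne e1] at h1,
            by rwa [Function.update_of_ne e2] at h2,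
            by rwa [Function.update_of_ne e3] at h3⟩ hp
  · rintro (⟨h1, h2⟩ | ⟨h1, h2⟩ | ⟨h1, h2⟩) hp'
    · exact hp' ⟨j - 1, by rw [Function.update_of_ne (by omega)]; exact cB (by ring) h1,
        by rw [Function.update_of_ne (by omega)]; exact h2,
        by rw [show j - 1 + 1 = j by ring, Function.update_self]⟩
    · exact hp' ⟨j, by rw [Function.update_of_ne (by omega)]; exact h1,
        by rw [Function.update_self],
        by rw [Function.update_of_ne (by omega)]; exact h2⟩
    · exact hp' ⟨j + 1, by rw [show j + 1 - 1 = j by ring, Function.update_self],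
        by rw [Function.update_of_ne (by omega)]; exact h1,
        by rw [Function.update_of_ne (by omega)]; exact cB (by ring) h2⟩

lemma cfg_iff {n : ℕ} {c : ℤ → Bool} :
    (RivieraConfig n c ∧ RivieraMaximal n c) ↔
      RivieraConfig n c ∧ RivieraPermissible c ∧
        (∀ j : ℤ, 0 ≤ j → j < (n : ℤ) → c j = false → pat c j) := by
  constructor
  · rintro ⟨hc, hp, hm⟩
    exact ⟨hc, hp, fun j h0 hn hj => (flip_iff hp hj).1 (hm j h0 hn hj)⟩
  · rintro ⟨hc, hp, hm⟩
    exact ⟨hc, hp, fun j h0 hn hj => (flip_iff hp hj).2 (hm j h0 hn hj)⟩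

/-! ### shifts and prepends -/

def tsh (k : ℕ) (c : ℤ → Bool) : ℤ → Bool := fun j => if j < 0 then false else c (j + k)

lemma tsh_nonneg {k : ℕ} {c : ℤ → Bool} {j : ℤ} (h : 0 ≤ j) : tsh k c j = c (j + k) :=
  if_neg (by omega)

lemma tsh_neg {k : ℕ} {c : ℤ → Bool} {j : ℤ} (h : j < 0) : tsh k c j = false := if_pos h

lemma tsh_true {k : ℕ} {c : ℤ → Bool} {j : ℤ} (h : tsh k c j = true) :
    0 ≤ j ∧ c (j + k) = true := by
  by_cases hj : j < 0
  · rw [tsh_neg hj] at h; cases h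
  · exact ⟨by omega, by rwa [tsh_nonneg (by omega)] at h⟩

lemma tsh_eq_true {k : ℕ} {c : ℤ → Bool} {j : ℤ} (h0 : 0 ≤ j) (h : c (j + k) = true) :
    tsh k c j = true := by rw [tsh_nonneg h0]; exact h

lemma perm_tsh {k : ℕ} {c : ℤ → Bool} (hp : RivieraPermissible c) :
    RivieraPermissible (tsh k c) := by
  rintro ⟨i, h1, h2, h3⟩
  obtain ⟨hi1, hc1⟩ := tsh_true h1
  obtain ⟨hi2, hc2⟩ := tsh_true h2
  obtain ⟨hi3, hc3⟩ := tsh_true h3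
  exact hp ⟨i + k, cB (by ring) hc1, hc2, cB (by ring) hc3⟩

lemma conf_tsh {n k : ℕ} {c : ℤ → Bool} (h : RivieraConfig (n + k) c) :
    RivieraConfig n (tsh k c) := by
  intro j hj
  by_cases hneg : j < 0
  · exact tsh_neg hneg
  · rw [tsh_nonneg (by omega)]
    refine h (j + k) (Or.inr ?_)
    push_cast
    omega

def pre0 (d : ℤ → Bool) : ℤ → Bool := fun j => if j ≤ 0 then false else d (j - 1)

def pre10 (d : ℤ → Bool) : ℤ → Bool :=
  fun j => if j = 0 then true else if j ≤ 1 then false else d (j - 2)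

def pre110 (d : ℤ → Bool) : ℤ → Bool :=
  fun j => if j = 0 ∨ j = 1 then true else if j ≤ 2 then false else d (j - 3)

lemma pre0_eq {d : ℤ → Bool} {x : ℤ} (h : 1 ≤ x) : pre0 d x = d (x - 1) :=
  if_neg (by omega)

lemma pre0_true {d : ℤ → Bool} {x : ℤ} (h : pre0 d x = true) : 1 ≤ x ∧ d (x - 1) = true := by
  by_cases hx : x ≤ 0
  · rw [pre0, if_pos hx] at h; cases h
  · exact ⟨by omega, by rwa [pre0_eq (by omega)] at h⟩

lemma pre10_eq {d : ℤ → Bool} {x : ℤ} (h : 2 ≤ x) : pre10 d x = d (x - 2) := by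
  rw [pre10]; rw [if_neg (by omega), if_neg (by omega)]

lemma pre10_true {d : ℤ → Bool} {x : ℤ} (h : pre10 d x = true) :
    x = 0 ∨ (2 ≤ x ∧ d (x - 2) = true) := by
  by_cases h0 : x = 0
  · exact Or.inl h0
  · by_cases h1 : x ≤ 1
    · rw [pre10, if_neg h0, if_pos h1] at h; cases h
    · exact Or.inr ⟨by omega, by rwa [pre10_eq (by omega)] at h⟩

lemma pre110_eq {d : ℤ → Bool} {x : ℤ} (h : 3 ≤ x) : pre110 d x = d (x - 3) := by
  rw [pre110]; rw [if_neg (by omega), if_neg (by omega)]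

lemma pre110_true {d : ℤ → Bool} {x : ℤ} (h : pre110 d x = true) :
    x = 0 ∨ x = 1 ∨ (3 ≤ x ∧ d (x - 3) = true) := by
  by_cases h01 : x = 0 ∨ x = 1
  · tauto
  · by_cases h2 : x ≤ 2
    · rw [pre110, if_neg h01, if_pos h2] at h; cases h
    · exact Or.inr (Or.inr ⟨by omega, by rwa [pre110_eq (by omega)] at h⟩)

/-! ### counting utilities -/

lemma finite_sub (n : ℕ) {P : (ℤ → Bool) → Prop}
    (h : ∀ c, P c → RivieraConfig n c) : Finite {c : ℤ → Bool // P c} := by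
  refine Finite.of_injective
    (fun x => (fun i : Fin n => x.1 (i.1 : ℤ) : Fin n → Bool)) ?_
  intro a b hab
  apply Subtype.ext
  funext j
  by_cases hj : 0 ≤ j ∧ j < (n : ℤ)
  · have jn : j.toNat < n := by omega
    have := congrFun hab ⟨j.toNat, jn⟩
    simpa [Int.toNat_of_nonneg hj.1] using this
  · rw [h a.1 a.2 j (by omega), h b.1 b.2 j (by omega)]

lemma card_split {α : Type*} (P Q : α → Prop) (hf : Finite {x // P x}) :
    Nat.card {x // P x} = Nat.card {x // P x ∧ Q x} + Nat.card {x // P x ∧ ¬ Q x} := by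
  classical
  haveI : Finite {x // P x ∧ Q x} := Finite.of_injective
    (fun y => (⟨y.1, y.2.1⟩ : {x // P x}))
    (by intro a b h; apply Subtype.ext; simpa [Subtype.ext_iff] using h)
  haveI : Finite {x // P x ∧ ¬ Q x} := Finite.of_injective
    (fun y => (⟨y.1, y.2.1⟩ : {x // P x}))
    (by intro a b h; apply Subtype.ext; simpa [Subtype.ext_iff] using h)
  have e : {x // P x ∧ Q x} ⊕ {x // P x ∧ ¬ Q x} ≃ {x // P x} :=
    { toFun := Sum.elim (fun y => ⟨y.1, y.2.1⟩) (fun y => ⟨y.1, y.2.1⟩)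
      invFun := fun x => if h : Q x.1 then .inl ⟨x.1, x.2, h⟩ else .inr ⟨x.1, x.2, h⟩
      left_inv := by rintro (⟨x, hx, hq⟩ | ⟨x, hx, hq⟩) <;> simp [hq]
      right_inv := by rintro ⟨x, hx⟩; by_cases h : Q x <;> simp [h] }
  rw [← Nat.card_congr e, Nat.card_sum]

/-! ### the refined counts -/

noncomputable def Na (n : ℕ) : ℕ :=
  Nat.card {c : ℤ → Bool // RivieraConfig n c ∧ RivieraMaximal n c}

noncomputable def N1 (n : ℕ) : ℕ :=
  Nat.card {c : ℤ → Bool // (RivieraConfig n c ∧ RivieraMaximal n c) ∧ c 0 = true}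

noncomputable def N0 (n : ℕ) : ℕ :=
  Nat.card {c : ℤ → Bool // (RivieraConfig n c ∧ RivieraMaximal n c) ∧ c 0 = false}

noncomputable def N2 (n : ℕ) : ℕ :=
  Nat.card {c : ℤ → Bool // (RivieraConfig n c ∧ RivieraMaximal n c) ∧
    c 0 = true ∧ c 1 = true}

noncomputable def N10 (n : ℕ) : ℕ :=
  Nat.card {c : ℤ → Bool // (RivieraConfig n c ∧ RivieraMaximal n c) ∧
    c 0 = true ∧ c 1 = false}

lemma Na_split (n : ℕ) : Na n = N1 n + N0 n := by
  rw [Na, card_split (fun c => RivieraConfig n c ∧ RivieraMaximal n c)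
    (fun c => c 0 = true) (finite_sub n (fun c hc => hc.1))]
  congr 1
  exact Nat.card_congr (Equiv.subtypeEquivRight (fun c => by
    simp [Bool.not_eq_true]))

lemma N1_split (n : ℕ) : N1 n = N2 n + N10 n := by
  rw [N1, card_split (fun c => (RivieraConfig n c ∧ RivieraMaximal n c) ∧ c 0 = true)
    (fun c => c 1 = true) (finite_sub n (fun c hc => hc.1.1))]
  congr 1
  · exact Nat.card_congr (Equiv.subtypeEquivRight (fun c => by tauto))
  · exact Nat.card_congr (Equiv.subtypeEquivRight (fun c => by
      simp [Bool.not_eq_true]; tauto))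

/-! ### base cases -/

lemma Na_zero : Na 0 = 1 := by
  have key : ∀ c : ℤ → Bool, (RivieraConfig 0 c ∧ RivieraMaximal 0 c) ↔
      c = fun _ => false := by
    intro c
    constructor
    · rintro ⟨hc, _⟩; funext j; exact hc j (by omega)
    · rintro rfl
      refine ⟨fun j _ => rfl, ?_, ?_⟩
      · rintro ⟨i, h, _⟩; cases h
      · intro j h0 hn
        exact absurd hn (by push_cast; omega)
  haveI : Unique {c : ℤ → Bool // RivieraConfig 0 c ∧ RivieraMaximal 0 c} :=
    { default := ⟨fun _ => false, (key _).2 rfl⟩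
      uniq := fun x => Subtype.ext ((key x.1).1 x.2) }
  exact Nat.card_unique

lemma N10_zero : N10 0 = 0 := by
  haveI : IsEmpty {c : ℤ → Bool // (RivieraConfig 0 c ∧ RivieraMaximal 0 c) ∧
      c 0 = true ∧ c 1 = false} := by
    refine ⟨?_⟩
    rintro ⟨c, ⟨hconf, _⟩, h0, _⟩
    rw [hconf 0 (by omega)] at h0; cases h0
  exact Nat.card_of_isEmpty

lemma N2_zero : N2 0 = 0 := by
  haveI : IsEmpty {c : ℤ → Bool // (RivieraConfig 0 c ∧ RivieraMaximal 0 c) ∧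
      c 0 = true ∧ c 1 = true} := by
    refine ⟨?_⟩
    rintro ⟨c, ⟨hconf, _⟩, h0, _⟩
    rw [hconf 0 (by omega)] at h0; cases h0
  exact Nat.card_of_isEmpty

lemma N2_one : N2 1 = 0 := by
  haveI : IsEmpty {c : ℤ → Bool // (RivieraConfig 1 c ∧ RivieraMaximal 1 c) ∧
      c 0 = true ∧ c 1 = true} := by
    refine ⟨?_⟩
    rintro ⟨c, ⟨hconf, _⟩, _, h1⟩
    rw [hconf 1 (by norm_num)] at h1; cases h1
  exact Nat.card_of_isEmpty

lemma N10_one : N10 1 = 1 := by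
  set f0 : ℤ → Bool := fun j => if j = 0 then true else false with hf0
  have key : ∀ c : ℤ → Bool, ((RivieraConfig 1 c ∧ RivieraMaximal 1 c) ∧
      c 0 = true ∧ c 1 = false) ↔ c = f0 := by
    intro c
    constructor
    · rintro ⟨⟨hconf, _⟩, h0, _⟩
      funext j
      by_cases hj : j = 0
      · subst hj; rw [h0, hf0]; simp
      · rw [hconf j (by omega), hf0]; simp [hj]
    · rintro rfl
      refine ⟨⟨?_, ?_, ?_⟩, ?_, ?_⟩
      · intro j hj; simp only [hf0]; rw [if_neg (by omega)]
      · rintro ⟨i, h1, h2, _⟩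
        simp only [hf0] at h1 h2
        have e1 : i - 1 = 0 := by by_contra hne; rw [if_neg hne] at h1; cases h1
        have e2 : i = 0 := by by_contra hne; rw [if_neg hne] at h2; cases h2
        omega
      · intro j h0 hn hj
        have : j = 0 := by omega
        subst this
        simp only [hf0, if_pos rfl] at hj
        cases hj
      · simp [hf0]
      · simp [hf0]
  haveI : Unique {c : ℤ → Bool // (RivieraConfig 1 c ∧ RivieraMaximal 1 c) ∧
      c 0 = true ∧ c 1 = false} :=
    { default := ⟨f0, (key _).2 rfl⟩
      uniq := fun x => Subtype.ext ((key x.1).1 x.2) }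
  exact Nat.card_unique

lemma N2_two : N2 2 = 1 := by
  set g0 : ℤ → Bool := fun j => if j = 0 ∨ j = 1 then true else false with hg0
  have key : ∀ c : ℤ → Bool, ((RivieraConfig 2 c ∧ RivieraMaximal 2 c) ∧
      c 0 = true ∧ c 1 = true) ↔ c = g0 := by
    intro c
    constructor
    · rintro ⟨⟨hconf, _⟩, h0, h1⟩
      funext j
      by_cases hj : j = 0 ∨ j = 1
      · rcases hj with hj | hj <;> subst hj <;> simp [hg0, h0, h1]
      · rw [hconf j (by omega)]; simp [hg0, hj]; omega
    · rintro rfl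
      refine ⟨⟨?_, ?_, ?_⟩, ?_, ?_⟩
      · intro j hj; simp only [hg0]; rw [if_neg (by push_cast at hj; omega)]
      · rintro ⟨i, h1, h2, h3⟩
        simp only [hg0] at h1 h2 h3
        have e1 : i - 1 = 0 ∨ i - 1 = 1 := by
          by_contra hne; rw [if_neg hne] at h1; cases h1
        have e3 : i + 1 = 0 ∨ i + 1 = 1 := by
          by_contra hne; rw [if_neg hne] at h3; cases h3
        omega
      · intro j h0 hn hj
        have : j = 0 ∨ j = 1 := by push_cast at hn; omega
        simp only [hg0, if_pos this] at hj
        cases hj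
      · simp [hg0]
      · simp [hg0]
  haveI : Unique {c : ℤ → Bool // (RivieraConfig 2 c ∧ RivieraMaximal 2 c) ∧
      c 0 = true ∧ c 1 = true} :=
    { default := ⟨g0, (key _).2 rfl⟩
      uniq := fun x => Subtype.ext ((key x.1).1 x.2) }
  exact Nat.card_unique

/-! ### the equivalence `N2 (n+3) = Na n` -/

lemma c2_false {c : ℤ → Bool} (hp : RivieraPermissible c) (h0 : c 0 = true)
    (h1 : c 1 = true) : c 2 = false := by
  by_contra hc2
  rw [Bool.not_eq_false] at hc2
  exact hp ⟨1, cB (by norm_num) h0, h1, cB (by norm_num) hc2⟩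

lemma fwd2 {n : ℕ} {c : ℤ → Bool}
    (hcfg : RivieraConfig (n+3) c ∧ RivieraMaximal (n+3) c)
    (h0 : c 0 = true) (h1 : c 1 = true) :
    RivieraConfig n (tsh 3 c) ∧ RivieraMaximal n (tsh 3 c) := by
  rw [cfg_iff] at hcfg ⊢
  obtain ⟨hconf, hperm, hflip⟩ := hcfg
  have hc2 : c 2 = false := c2_false hperm h0 h1
  refine ⟨conf_tsh hconf, perm_tsh hperm, ?_⟩
  intro j hj0 hjn hdj
  rw [tsh_nonneg hj0] at hdj
  have hp := hflip (j + 3) (by omega) (by push_cast; omega) hdj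
  rcases hp with ⟨ha, hb⟩ | ⟨ha, hb⟩ | ⟨ha, hb⟩
  · by_cases h2 : 2 ≤ j
    · exact Or.inl ⟨tsh_eq_true (by omega) (cB (by ring) ha),
        tsh_eq_true (by omega) (cB (by ring) hb)⟩
    · exfalso
      interval_cases j
      · exact absurd (cB (by norm_num) hb : c 2 = true) (by simp [hc2])
      · exact absurd (cB (by norm_num) ha : c 2 = true) (by simp [hc2])
  · by_cases h2 : 1 ≤ j
    · exact Or.inr (Or.inl ⟨tsh_eq_true (by omega) (cB (by ring) ha),
        tsh_eq_true (by omega) (cB (by ring) hb)⟩)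
    · exfalso
      interval_cases j
      exact absurd (cB (by norm_num) ha : c 2 = true) (by simp [hc2])
  · exact Or.inr (Or.inr ⟨tsh_eq_true (by omega) (cB (by ring) ha),
      tsh_eq_true (by omega) (cB (by ring) hb)⟩)

lemma bwd2 {n : ℕ} {d : ℤ → Bool}
    (hcfg : RivieraConfig n d ∧ RivieraMaximal n d) :
    (RivieraConfig (n+3) (pre110 d) ∧ RivieraMaximal (n+3) (pre110 d)) ∧
      pre110 d 0 = true ∧ pre110 d 1 = true := by
  rw [cfg_iff] at hcfg
  obtain ⟨hconf, hperm, hflip⟩ := hcfg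
  refine ⟨?_, by simp [pre110], by simp [pre110]⟩
  rw [cfg_iff]
  refine ⟨?_, ?_, ?_⟩
  · intro j hj
    rcases hj with hj | hj
    · rw [pre110, if_neg (by omega), if_pos (by omega)]
    · rw [pre110_eq (by push_cast at hj; omega)]
      exact hconf _ (Or.inr (by push_cast at hj ⊢; omega))
  · rintro ⟨i, h1, h2, h3⟩
    rcases pre110_true h1 with e | e | ⟨hge, hd1⟩
    · rcases pre110_true h3 with f | f | ⟨hf, _⟩ <;> omega
    · rcases pre110_true h2 with f | f | ⟨hf, _⟩ <;> omega
    · obtain ⟨hg2, hd2⟩ := ((pre110_true h2).resolve_left (by omega)).resolve_left (by omega)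
      obtain ⟨hg3, hd3⟩ := ((pre110_true h3).resolve_left (by omega)).resolve_left (by omega)
      exact hperm ⟨i - 3, cB (by ring) hd1, hd2, cB (by ring) hd3⟩
  · intro j hj0 hjn hj
    by_cases hj3 : 3 ≤ j
    · rw [pre110_eq hj3] at hj
      have hp := hflip (j - 3) (by omega) (by push_cast at hjn ⊢; omega) hj
      rcases hp with ⟨ha, hb⟩ | ⟨ha, hb⟩ | ⟨ha, hb⟩
      · have g1 := (conf_true hconf ha).1
        exact Or.inl ⟨by rw [pre110_eq (by omega)]; exact cB (by ring) ha,
          by rw [pre110_eq (by omega)]; exact cB (by ring) hb⟩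
      · have g1 := (conf_true hconf ha).1
        exact Or.inr (Or.inl ⟨by rw [pre110_eq (by omega)]; exact cB (by ring) ha,
          by rw [pre110_eq (by omega)]; exact cB (by ring) hb⟩)
      · exact Or.inr (Or.inr ⟨by rw [pre110_eq (by omega)]; exact cB (by ring) ha,
          by rw [pre110_eq (by omega)]; exact cB (by ring) hb⟩)
    · interval_cases j
      · exact absurd hj (by simp [pre110])
      · exact absurd hj (by simp [pre110])
      · refine Or.inl ⟨?_, ?_⟩
        · rw [show (2:ℤ) - 2 = 0 by norm_num]; simp [pre110]
        · rw [show (2:ℤ) - 1 = 1 by norm_num]; simp [pre110]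

lemma N2_succ (n : ℕ) : N2 (n+3) = Na n := by
  refine Nat.card_congr ?_
  refine
    { toFun := fun x => ⟨tsh 3 x.1, fwd2 x.2.1 x.2.2.1 x.2.2.2⟩
      invFun := fun y => ⟨pre110 y.1, bwd2 y.2⟩
      left_inv := ?_
      right_inv := ?_ }
  · rintro ⟨c, hcfg, h0, h1⟩
    have hc2 : c 2 = false := c2_false hcfg.2.1 h0 h1
    apply Subtype.ext
    funext j
    show pre110 (tsh 3 c) j = c j
    by_cases hj0 : j = 0 ∨ j = 1
    · rw [pre110, if_pos hj0]
      rcases hj0 with rfl | rfl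
      · exact h0.symm
      · exact h1.symm
    · by_cases hj2 : j = 2
      · subst hj2; rw [pre110, if_neg (by omega), if_pos (by norm_num)]
        exact hc2.symm
      · by_cases hjn : j < 0
        · rw [pre110, if_neg (by omega), if_pos (by omega)]
          exact (hcfg.1 j (Or.inl hjn)).symm
        · rw [pre110_eq (by omega), tsh_nonneg (by omega)]
          congr 1; ring
  · rintro ⟨d, hcfg⟩
    apply Subtype.ext
    funext j
    show tsh 3 (pre110 d) j = d j
    by_cases hj : j < 0
    · rw [tsh_neg hj, hcfg.1 j (Or.inl hj)]
    · rw [tsh_nonneg (by omega), pre110_eq (by omega)]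
      congr 1; push_cast; ring

/-! ### the equivalence `N10 (n+2) = N1 n` -/

lemma c2_true {n : ℕ} {c : ℤ → Bool}
    (hconf : RivieraConfig (n+2) c)
    (hflip : ∀ j : ℤ, 0 ≤ j → j < ((n+2 : ℕ) : ℤ) → c j = false → pat c j)
    (h0 : c 0 = true) (h1 : c 1 = false) : c 2 = true := by
  have hm1 : c (-1) = false := hconf (-1) (Or.inl (by norm_num))
  have hp := hflip 1 (by norm_num) (by push_cast; omega) h1
  rcases hp with ⟨ha, hb⟩ | ⟨ha, hb⟩ | ⟨ha, hb⟩
  · exact absurd (cB (by norm_num) ha : c (-1) = true) (by simp [hm1])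
  · exact cB (by norm_num) hb
  · exact cB (by norm_num) ha

lemma fwd10 {n : ℕ} {c : ℤ → Bool}
    (hcfg : RivieraConfig (n+2) c ∧ RivieraMaximal (n+2) c)
    (h0 : c 0 = true) (h1 : c 1 = false) :
    (RivieraConfig n (tsh 2 c) ∧ RivieraMaximal n (tsh 2 c)) ∧ tsh 2 c 0 = true := by
  rw [cfg_iff] at hcfg
  obtain ⟨hconf, hperm, hflip⟩ := hcfg
  have hc2 : c 2 = true := c2_true hconf hflip h0 h1
  refine ⟨?_, by rw [tsh_nonneg le_rfl]; exact cB (by norm_num) hc2⟩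
  rw [cfg_iff]
  refine ⟨conf_tsh hconf, perm_tsh hperm, ?_⟩
  intro j hj0 hjn hdj
  rw [tsh_nonneg hj0] at hdj
  have hp := hflip (j + 2) (by omega) (by push_cast; omega) hdj
  rcases hp with ⟨ha, hb⟩ | ⟨ha, hb⟩ | ⟨ha, hb⟩
  · by_cases h2 : 2 ≤ j
    · exact Or.inl ⟨tsh_eq_true (by omega) (cB (by ring) ha),
        tsh_eq_true (by omega) (cB (by ring) hb)⟩
    · exfalso
      interval_cases j
      · exact absurd (cB (by norm_num) hb : c 1 = true) (by simp [h1])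
      · exact absurd (cB (by norm_num) ha : c 1 = true) (by simp [h1])
  · by_cases h2 : 1 ≤ j
    · exact Or.inr (Or.inl ⟨tsh_eq_true (by omega) (cB (by ring) ha),
        tsh_eq_true (by omega) (cB (by ring) hb)⟩)
    · exfalso
      interval_cases j
      exact absurd (cB (by norm_num) ha : c 1 = true) (by simp [h1])
  · exact Or.inr (Or.inr ⟨tsh_eq_true (by omega) (cB (by ring) ha),
      tsh_eq_true (by omega) (cB (by ring) hb)⟩)

lemma bwd10 {n : ℕ} {d : ℤ → Bool}
    (hcfg : RivieraConfig n d ∧ RivieraMaximal n d) (hd0 : d 0 = true) :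
    (RivieraConfig (n+2) (pre10 d) ∧ RivieraMaximal (n+2) (pre10 d)) ∧
      pre10 d 0 = true ∧ pre10 d 1 = false := by
  rw [cfg_iff] at hcfg
  obtain ⟨hconf, hperm, hflip⟩ := hcfg
  refine ⟨?_, by simp [pre10], by simp [pre10]⟩
  rw [cfg_iff]
  refine ⟨?_, ?_, ?_⟩
  · intro j hj
    rcases hj with hj | hj
    · rw [pre10, if_neg (by omega), if_pos (by omega)]
    · rw [pre10_eq (by push_cast at hj; omega)]
      exact hconf _ (Or.inr (by push_cast at hj ⊢; omega))
  · rintro ⟨i, h1, h2, h3⟩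
    rcases pre10_true h1 with e | ⟨hge, hd1⟩
    · rcases pre10_true h2 with f | ⟨hf, _⟩ <;> omega
    · obtain ⟨hg2, hdd2⟩ := (pre10_true h2).resolve_left (by omega)
      obtain ⟨hg3, hdd3⟩ := (pre10_true h3).resolve_left (by omega)
      exact hperm ⟨i - 2, cB (by ring) hd1, hdd2, cB (by ring) hdd3⟩
  · intro j hj0 hjn hj
    by_cases hj2 : 2 ≤ j
    · rw [pre10_eq hj2] at hj
      have hp := hflip (j - 2) (by omega) (by push_cast at hjn ⊢; omega) hj
      rcases hp with ⟨ha, hb⟩ | ⟨ha, hb⟩ | ⟨ha, hb⟩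
      · have g1 := (conf_true hconf ha).1
        exact Or.inl ⟨by rw [pre10_eq (by omega)]; exact cB (by ring) ha,
          by rw [pre10_eq (by omega)]; exact cB (by ring) hb⟩
      · have g1 := (conf_true hconf ha).1
        exact Or.inr (Or.inl ⟨by rw [pre10_eq (by omega)]; exact cB (by ring) ha,
          by rw [pre10_eq (by omega)]; exact cB (by ring) hb⟩)
      · exact Or.inr (Or.inr ⟨by rw [pre10_eq (by omega)]; exact cB (by ring) ha,
          by rw [pre10_eq (by omega)]; exact cB (by ring) hb⟩)
    · interval_cases j
      · exact absurd hj (by simp [pre10])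
      · refine Or.inr (Or.inl ⟨?_, ?_⟩)
        · rw [show (1:ℤ) - 1 = 0 by norm_num]; simp [pre10]
        · rw [show (1:ℤ) + 1 = 2 by norm_num, pre10_eq (by norm_num)]
          exact cB (by norm_num) hd0
lemma N10_succ (n : ℕ) : N10 (n+2) = N1 n := by
  refine Nat.card_congr ?_
  refine
    { toFun := fun x => ⟨tsh 2 x.1, fwd10 x.2.1 x.2.2.1 x.2.2.2⟩
      invFun := fun y => ⟨pre10 y.1, bwd10 y.2.1 y.2.2⟩
      left_inv := ?_
      right_inv := ?_ }
  · rintro ⟨c, hcfg, h0, h1⟩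
    have hc2 : c 2 = true := by
      rw [cfg_iff] at hcfg
      exact c2_true hcfg.1 hcfg.2.2 h0 h1
    apply Subtype.ext
    funext j
    show pre10 (tsh 2 c) j = c j
    by_cases hj0 : j = 0
    · subst hj0; rw [pre10, if_pos rfl]; exact h0.symm
    · by_cases hj1 : j = 1
      · subst hj1; rw [pre10, if_neg (by norm_num), if_pos le_rfl]
        exact h1.symm
      · by_cases hjn : j < 0
        · rw [pre10, if_neg (by omega), if_pos (by omega)]
          exact (hcfg.1 j (Or.inl hjn)).symm
        · rw [pre10_eq (by omega), tsh_nonneg (by omega)]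
          congr 1; ring
  · rintro ⟨d, hcfg, hd0⟩
    apply Subtype.ext
    funext j
    show tsh 2 (pre10 d) j = d j
    by_cases hj : j < 0
    · rw [tsh_neg hj, hcfg.1 j (Or.inl hj)]
    · rw [tsh_nonneg (by omega), pre10_eq (by omega)]
      congr 1; push_cast; ring

/-! ### the equivalence `N0 (n+1) = N2 n` -/

lemma c12_true {n : ℕ} {c : ℤ → Bool}
    (hconf : RivieraConfig (n+1) c)
    (hflip : ∀ j : ℤ, 0 ≤ j → j < ((n+1 : ℕ) : ℤ) → c j = false → pat c j)
    (h0 : c 0 = false) : c 1 = true ∧ c 2 = true := by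
  have hm1 : c (-1) = false := hconf (-1) (Or.inl (by norm_num))
  have hp := hflip 0 le_rfl (by push_cast; omega) h0
  rcases hp with ⟨ha, hb⟩ | ⟨ha, hb⟩ | ⟨ha, hb⟩
  · exact absurd (cB (by norm_num) hb : c (-1) = true) (by simp [hm1])
  · exact absurd (cB (by norm_num) ha : c (-1) = true) (by simp [hm1])
  · exact ⟨cB (by norm_num) ha, cB (by norm_num) hb⟩

lemma fwd0 {n : ℕ} {c : ℤ → Bool}
    (hcfg : RivieraConfig (n+1) c ∧ RivieraMaximal (n+1) c) (h0 : c 0 = false) :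
    (RivieraConfig n (tsh 1 c) ∧ RivieraMaximal n (tsh 1 c)) ∧
      tsh 1 c 0 = true ∧ tsh 1 c 1 = true := by
  rw [cfg_iff] at hcfg
  obtain ⟨hconf, hperm, hflip⟩ := hcfg
  obtain ⟨hc1, hc2⟩ := c12_true hconf hflip h0
  refine ⟨?_, by rw [tsh_nonneg le_rfl]; exact cB (by norm_num) hc1,
    by rw [tsh_nonneg (by norm_num)]; exact cB (by norm_num) hc2⟩
  rw [cfg_iff]
  refine ⟨conf_tsh hconf, perm_tsh hperm, ?_⟩
  intro j hj0 hjn hdj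
  rw [tsh_nonneg hj0] at hdj
  have hp := hflip (j + 1) (by omega) (by push_cast; omega) hdj
  rcases hp with ⟨ha, hb⟩ | ⟨ha, hb⟩ | ⟨ha, hb⟩
  · by_cases h2 : 2 ≤ j
    · exact Or.inl ⟨tsh_eq_true (by omega) (cB (by ring) ha),
        tsh_eq_true (by omega) (cB (by ring) hb)⟩
    · exfalso
      interval_cases j
      · exact absurd (cB (by norm_num) hb : c 0 = true) (by simp [h0])
      · exact absurd (cB (by norm_num) ha : c 0 = true) (by simp [h0])
  · by_cases h2 : 1 ≤ j
    · exact Or.inr (Or.inl ⟨tsh_eq_true (by omega) (cB (by ring) ha),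
        tsh_eq_true (by omega) (cB (by ring) hb)⟩)
    · exfalso
      interval_cases j
      exact absurd (cB (by norm_num) ha : c 0 = true) (by simp [h0])
  · exact Or.inr (Or.inr ⟨tsh_eq_true (by omega) (cB (by ring) ha),
      tsh_eq_true (by omega) (cB (by ring) hb)⟩)

lemma bwd0 {n : ℕ} {d : ℤ → Bool}
    (hcfg : RivieraConfig n d ∧ RivieraMaximal n d)
    (hd0 : d 0 = true) (hd1 : d 1 = true) :
    (RivieraConfig (n+1) (pre0 d) ∧ RivieraMaximal (n+1) (pre0 d)) ∧
      pre0 d 0 = false := by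
  rw [cfg_iff] at hcfg
  obtain ⟨hconf, hperm, hflip⟩ := hcfg
  refine ⟨?_, by simp [pre0]⟩
  rw [cfg_iff]
  refine ⟨?_, ?_, ?_⟩
  · intro j hj
    rcases hj with hj | hj
    · rw [pre0, if_pos (by omega)]
    · rw [pre0_eq (by push_cast at hj; omega)]
      exact hconf _ (Or.inr (by push_cast at hj ⊢; omega))
  · rintro ⟨i, h1, h2, h3⟩
    obtain ⟨hg1, he1⟩ := pre0_true h1
    obtain ⟨hg2, he2⟩ := pre0_true h2
    obtain ⟨hg3, he3⟩ := pre0_true h3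
    exact hperm ⟨i - 1, cB (by ring) he1, he2, cB (by ring) he3⟩
  · intro j hj0 hjn hj
    by_cases hj1 : 1 ≤ j
    · rw [pre0_eq hj1] at hj
      have hp := hflip (j - 1) (by omega) (by push_cast at hjn ⊢; omega) hj
      rcases hp with ⟨ha, hb⟩ | ⟨ha, hb⟩ | ⟨ha, hb⟩
      · have g1 := (conf_true hconf ha).1
        exact Or.inl ⟨by rw [pre0_eq (by omega)]; exact cB (by ring) ha,
          by rw [pre0_eq (by omega)]; exact cB (by ring) hb⟩
      · have g1 := (conf_true hconf ha).1
        exact Or.inr (Or.inl ⟨by rw [pre0_eq (by omega)]; exact cB (by ring) ha,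
          by rw [pre0_eq (by omega)]; exact cB (by ring) hb⟩)
      · exact Or.inr (Or.inr ⟨by rw [pre0_eq (by omega)]; exact cB (by ring) ha,
          by rw [pre0_eq (by omega)]; exact cB (by ring) hb⟩)
    · interval_cases j
      refine Or.inr (Or.inr ⟨?_, ?_⟩)
      · rw [show (0:ℤ) + 1 = 1 by norm_num, pre0_eq le_rfl]
        exact cB (by norm_num) hd0
      · rw [show (0:ℤ) + 2 = 2 by norm_num, pre0_eq (by norm_num)]
        exact cB (by norm_num) hd1

lemma N0_succ (n : ℕ) : N0 (n+1) = N2 n := by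
  refine Nat.card_congr ?_
  refine
    { toFun := fun x => ⟨tsh 1 x.1, fwd0 x.2.1 x.2.2⟩
      invFun := fun y => ⟨pre0 y.1, bwd0 y.2.1 y.2.2.1 y.2.2.2⟩
      left_inv := ?_
      right_inv := ?_ }
  · rintro ⟨c, hcfg, h0⟩
    apply Subtype.ext
    funext j
    show pre0 (tsh 1 c) j = c j
    by_cases hj0 : j ≤ 0
    · rw [pre0, if_pos hj0]
      by_cases hj : j = 0
      · subst hj; exact h0.symm
      · exact (hcfg.1 j (Or.inl (by omega))).symm
    · rw [pre0_eq (by omega), tsh_nonneg (by omega)]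
      congr 1; ring
  · rintro ⟨d, hcfg, hd0, hd1⟩
    apply Subtype.ext
    funext j
    show tsh 1 (pre0 d) j = d j
    by_cases hj : j < 0
    · rw [tsh_neg hj, hcfg.1 j (Or.inl hj)]
    · rw [tsh_nonneg (by omega), pre0_eq (by omega)]
      congr 1; push_cast; ring

/-! ### numeric evaluations -/

lemma N1_zero : N1 0 = 0 := by
  have h := N1_split 0; rw [h, N2_zero, N10_zero]
  
lemma N1_one : N1 1 = 1 := by
  rw [N1_split 1, N2_one, N10_one]

lemma Na_one : Na 1 = 1 := by
  have h1 : Na 1 = N1 1 + N0 1 := Na_split 1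
  have h3 : N0 1 = N2 0 := N0_succ 0
  rw [h1, h3, N1_one, N2_zero]

lemma N1_two : N1 2 = 1 := by
  have h : N10 2 = N1 0 := N10_succ 0
  rw [N1_split 2, N2_two, h, N1_zero]

lemma Na_two : Na 2 = 1 := by
  have h1 : N0 2 = N2 1 := N0_succ 1
  rw [Na_split 2, h1, N1_two, N2_one]

lemma N2_three : N2 3 = 1 := by
  have h : N2 3 = Na 0 := N2_succ 0
  rw [h, Na_zero]

lemma N1_three : N1 3 = 2 := by
  have h : N10 3 = N1 1 := N10_succ 1
  rw [N1_split 3, N2_three, h, N1_one]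

lemma Na_three : Na 3 = 3 := by
  have h1 : N0 3 = N2 2 := N0_succ 2
  rw [Na_split 3, h1, N1_three, N2_two]

lemma N2_four : N2 4 = 1 := by
  have h : N2 4 = Na 1 := N2_succ 1
  rw [h, Na_one]

lemma N1_four : N1 4 = 2 := by
  have h : N10 4 = N1 2 := N10_succ 2
  rw [N1_split 4, N2_four, h, N1_two]

lemma Na_four : Na 4 = 3 := by
  have h1 : N0 4 = N2 3 := N0_succ 3
  rw [Na_split 4, h1, N1_four, N2_three]

lemma N2_five : N2 5 = 1 := by
  have h : N2 5 = Na 2 := N2_succ 2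
  rw [h, Na_two]

lemma N1_five : N1 5 = 3 := by
  have h : N10 5 = N1 3 := N10_succ 3
  rw [N1_split 5, N2_five, h, N1_three]

lemma Na_five : Na 5 = 4 := by
  have h1 : N0 5 = N2 4 := N0_succ 4
  rw [Na_split 5, h1, N1_five, N2_four]

lemma N2_six : N2 6 = 3 := by
  have h : N2 6 = Na 3 := N2_succ 3
  rw [h, Na_three]

lemma N1_six : N1 6 = 5 := by
  have h : N10 6 = N1 4 := N10_succ 4
  rw [N1_split 6, N2_six, h, N1_four]

lemma Na_six : Na 6 = 6 := by
  have h1 : N0 6 = N2 5 := N0_succ 5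
  rw [Na_split 6, h1, N1_six, N2_five]

lemma Na_key (m : ℕ) : Na (m+7) + Na (m+1) = Na (m+5) + Na (m+4) + Na (m+3) := by
  have h1 : Na (m+7) = N1 (m+7) + N0 (m+7) := Na_split (m+7)
  have h2 : N0 (m+7) = N2 (m+6) := N0_succ (m+6)
  have h3 : N2 (m+6) = Na (m+3) := N2_succ (m+3)
  have h4 : N1 (m+7) = N2 (m+7) + N10 (m+7) := N1_split (m+7)
  have h5 : N2 (m+7) = Na (m+4) := N2_succ (m+4)
  have h6 : N10 (m+7) = N1 (m+5) := N10_succ (m+5)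
  have h7 : N1 (m+5) = N2 (m+5) + N10 (m+5) := N1_split (m+5)
  have h8 : N2 (m+5) = Na (m+2) := N2_succ (m+2)
  have h9 : N10 (m+5) = N1 (m+3) := N10_succ (m+3)
  have h10 : Na (m+5) = N1 (m+5) + N0 (m+5) := Na_split (m+5)
  have h11 : N0 (m+5) = N2 (m+4) := N0_succ (m+4)
  have h12 : N2 (m+4) = Na (m+1) := N2_succ (m+1)
  omega

theorem rivieraCount_recurrence :
    rivieraCount 1 = 1 ∧ rivieraCount 2 = 1 ∧ rivieraCount 3 = 3 ∧
    rivieraCount 4 = 3 ∧ rivieraCount 5 = 4 ∧ rivieraCount 6 = 6 ∧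
    ∀ n : ℕ, 7 ≤ n →
      rivieraCount n + rivieraCount (n - 6) =
        rivieraCount (n - 2) + rivieraCount (n - 3) + rivieraCount (n - 4) := by
  refine ⟨Na_one, Na_two, Na_three, Na_four, Na_five, Na_six, ?_⟩
  intro n hn
  obtain ⟨m, rfl⟩ : ∃ m, n = m + 7 := ⟨n - 7, by omega⟩
  have e1 : m + 7 - 6 = m + 1 := by omega
  have e2 : m + 7 - 2 = m + 5 := by omega
  have e3 : m + 7 - 3 = m + 4 := by omega
  have e4 : m + 7 - 4 = m + 3 := by omega
  rw [e1, e2, e3, e4]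
  exact Na_key m
end

section
/- For every n ∈ ℕ, the number of maximal Riviera configurations of length n equals the number of permutations π of the set {0, 1, …, n+3} (i.e. of Fin (n+4)) satisfying (π(i) : ℤ) − (i : ℤ) ∈ {−2, −1, 2} for every i. -/
namespace Riv

inductive Code : Type
  | b3 : Code
  | b4 : Code
  | odd : ℕ → Code
  deriving DecidableEq

open Code

def clen : Code → ℕ
  | b3 => 3
  | b4 => 4
  | odd k => 2 * k + 5

def wlen (s : List Code) : ℕ := (s.map clen).sum

@[simp] lemma wlen_nil : wlen [] = 0 := rfl
@[simp] lemma wlen_cons (x : Code) (s : List Code) : wlen (x :: s) = clen x + wlen s := rfl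

def w3 : List Bool := [true, true, false]
def w4 : List Bool := [false, true, true, false]

def oddW : ℕ → List Bool
  | 0 => true :: false :: w3
  | k + 1 => true :: false :: oddW k

def cwordL : Code → List Bool
  | b3 => w3
  | b4 => w4
  | odd k => oddW k

@[simp] lemma oddW_length (k : ℕ) : (oddW k).length = 2 * k + 5 := by
  induction k with
  | zero => rfl
  | succ k ih => simp [oddW, ih]; omega

@[simp] lemma cwordL_length (x : Code) : (cwordL x).length = clen x := by
  cases x <;> simp [cwordL, clen, w3, w4]

def cns (a : Bool) (c : ℤ → Bool) : ℤ → Bool :=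
  fun j => if j < 0 then false else if j = 0 then a else c (j - 1)

def appW (l : List Bool) (c : ℤ → Bool) : ℤ → Bool := l.foldr cns c

@[simp] lemma appW_nil (c : ℤ → Bool) : appW [] c = c := rfl
@[simp] lemma appW_cons (a : Bool) (l : List Bool) (c : ℤ → Bool) :
    appW (a :: l) c = cns a (appW l c) := rfl

lemma appW_append (l₁ l₂ : List Bool) (c : ℤ → Bool) :
    appW (l₁ ++ l₂) c = appW l₁ (appW l₂ c) := by
  simp [appW, List.foldr_append]

@[simp] lemma cns_neg (a : Bool) (c : ℤ → Bool) {j : ℤ} (h : j < 0) : cns a c j = false := by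
  simp [cns, h]

@[simp] lemma cns_zero (a : Bool) (c : ℤ → Bool) : cns a c 0 = a := by simp [cns]

lemma cns_succ (a : Bool) (c : ℤ → Bool) {j : ℤ} (h : 0 ≤ j) : cns a c (j + 1) = c j := by
  have h1 : ¬ (j + 1 < 0) := by omega
  have h2 : ¬ (j + 1 = 0) := by omega
  simp [cns, h1, h2]

def Pad (c : ℤ → Bool) : Prop := ∀ j : ℤ, j < 0 → c j = false

lemma Pad.cns {c : ℤ → Bool} (a : Bool) (_ : Pad c) : Pad (Riv.cns a c) :=
  fun _ h => cns_neg _ _ h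

lemma Pad.appW {c : ℤ → Bool} (l : List Bool) (hc : Pad c) : Pad (Riv.appW l c) := by
  induction l with
  | nil => exact hc
  | cons a l ih => exact fun j h => cns_neg _ _ h

lemma appW_pad {l : List Bool} {c : ℤ → Bool} (hc : Pad c) {j : ℤ} (h : j < 0) :
    appW l c j = false := Pad.appW l hc j h

lemma appW_shift (l : List Bool) (c : ℤ → Bool) {j : ℤ} (h : 0 ≤ j) :
    appW l c (j + l.length) = c j := by
  induction l with
  | nil => simp
  | cons a l ih =>
      have : j + (a :: l).length = (j + l.length) + 1 := by simp; omega
      rw [this, appW_cons, cns_succ _ _ (by omega), ih]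

lemma appW_getD (l : List Bool) (c : ℤ → Bool) {j : ℤ} (h0 : 0 ≤ j) (h1 : j < l.length) :
    appW l c j = l.getD j.toNat false := by
  induction l generalizing j with
  | nil => simp at h1; omega
  | cons a l ih =>
      rcases eq_or_lt_of_le h0 with h | h
      · simp [← h]
      · have hj : j = (j - 1) + 1 := by omega
        rw [hj, appW_cons, cns_succ _ _ (by omega), ih (by omega) (by simp at h1 ⊢; omega)]
        have : (j - 1 + 1).toNat = (j-1).toNat + 1 := by omega
        rw [this]
        rfl

def Blocked (c : ℤ → Bool) (j : ℤ) : Prop :=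
  (c (j-2) = true ∧ c (j-1) = true) ∨ (c (j-1) = true ∧ c (j+1) = true) ∨
    (c (j+1) = true ∧ c (j+2) = true)

lemma appW_val0 (a : Bool) (l : List Bool) (c : ℤ → Bool) : appW (a :: l) c 0 = a := by
  simp [appW, cns]

lemma appW_val1 (a b : Bool) (l : List Bool) (c : ℤ → Bool) : appW (a :: b :: l) c 1 = b := by
  simp [appW, cns]

lemma appW_val2 (a b d : Bool) (l : List Bool) (c : ℤ → Bool) :
    appW (a :: b :: d :: l) c 2 = d := by
  simp [appW, cns]

lemma appW_val3 (a b d e : Bool) (l : List Bool) (c : ℤ → Bool) :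
    appW (a :: b :: d :: e :: l) c 3 = e := by
  simp [appW, cns]

lemma appW_val4 (a b d e f : Bool) (l : List Bool) (c : ℤ → Bool) :
    appW (a :: b :: d :: e :: f :: l) c 4 = f := by
  simp [appW, cns]

lemma blocked_appW {c : ℤ → Bool} {j : ℤ} (hc : Pad c) (h : Blocked c j) (l : List Bool) :
    Blocked (appW l c) (j + l.length) := by
  have pos : ∀ p : ℤ, c p = true → 0 ≤ p := by
    intro p hp
    by_contra hneg
    rw [hc p (by omega)] at hp
    exact absurd hp (by simp)
  have sh : ∀ p : ℤ, c p = true → appW l c (p + l.length) = true := by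
    intro p hp
    rw [appW_shift l c (pos p hp)]; exact hp
  rcases h with ⟨h1, h2⟩ | ⟨h1, h2⟩ | ⟨h1, h2⟩
  · left
    constructor
    · have := sh _ h1; rwa [show j - 2 + l.length = j + l.length - 2 by ring] at this
    · have := sh _ h2; rwa [show j - 1 + l.length = j + l.length - 1 by ring] at this
  · right; left
    constructor
    · have := sh _ h1; rwa [show j - 1 + l.length = j + l.length - 1 by ring] at this
    · have := sh _ h2; rwa [show j + 1 + l.length = j + l.length + 1 by ring] at this
  · right; right
    constructor
    · have := sh _ h1; rwa [show j + 1 + l.length = j + l.length + 1 by ring] at this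
    · have := sh _ h2; rwa [show j + 2 + l.length = j + l.length + 2 by ring] at this

def GoodW (c : ℤ → Bool) (M : ℕ) : Prop :=
  Pad c ∧ RivieraPermissible c ∧
    (∀ j : ℤ, 0 ≤ j → j < (M:ℤ) → c j = false → Blocked c j) ∧
    ∀ j : ℤ, (M:ℤ) ≤ j → c j = false

lemma appW_shift' (l : List Bool) (c : ℤ → Bool) {p : ℤ} (h : (l.length : ℤ) ≤ p) :
    appW l c p = c (p - l.length) := by
  have := appW_shift l c (j := p - l.length) (by omega)
  rwa [show p - (l.length:ℤ) + l.length = p by ring] at this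

lemma appW_shift2' (a b : Bool) (c : ℤ → Bool) {p : ℤ} (h : 2 ≤ p) :
    appW [a, b] c p = c (p - 2) := by
  have := appW_shift' [a, b] c (p := p) (by simpa using h)
  simpa using this

lemma appW_shift3' (a b d : Bool) (c : ℤ → Bool) {p : ℤ} (h : 3 ≤ p) :
    appW [a, b, d] c p = c (p - 3) := by
  have := appW_shift' [a, b, d] c (p := p) (by simpa using h)
  simpa using this

lemma appW_shift4' (a b d e : Bool) (c : ℤ → Bool) {p : ℤ} (h : 4 ≤ p) :
    appW [a, b, d, e] c p = c (p - 4) := by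
  have := appW_shift' [a, b, d, e] c (p := p) (by simpa using h)
  simpa using this

lemma blocked_appW2 {c : ℤ → Bool} {j p : ℤ} (hc : Pad c) (h : Blocked c j)
    (a b : Bool) (hp : p = j + 2) : Blocked (appW [a, b] c) p := by
  have := blocked_appW hc h [a, b]
  simp only [List.length_cons, List.length_nil] at this
  convert this using 2 <;> omega

lemma blocked_appW3 {c : ℤ → Bool} {j p : ℤ} (hc : Pad c) (h : Blocked c j)
    (a b d : Bool) (hp : p = j + 3) : Blocked (appW [a, b, d] c) p := by
  have := blocked_appW hc h [a, b, d]
  simp only [List.length_cons, List.length_nil] at this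
  convert this using 2 <;> omega

lemma blocked_appW4 {c : ℤ → Bool} {j p : ℤ} (hc : Pad c) (h : Blocked c j)
    (a b d e : Bool) (hp : p = j + 4) : Blocked (appW [a, b, d, e] c) p := by
  have := blocked_appW hc h [a, b, d, e]
  simp only [List.length_cons, List.length_nil] at this
  convert this using 2 <;> omega
lemma good_b3 {c : ℤ → Bool} {M : ℕ} (hc : GoodW c M) :
    GoodW (appW [true, true, false] c) (M + 3) := by
  obtain ⟨hpad, hperm, hblk, hup⟩ := hc
  refine ⟨Pad.appW _ hpad, ?_, ?_, ?_⟩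
  · rintro ⟨i, h1, h2, h3⟩
    by_cases hi0 : i - 1 < 0
    · rw [appW_pad hpad hi0] at h1; simp at h1
    by_cases hiL : 4 ≤ i
    · rw [appW_shift3' _ _ _ c (by omega)] at h1 h2 h3
      exact hperm ⟨i - 3, by rw [show i - 3 - 1 = i - 1 - 3 by ring]; exact h1,
        h2, by rw [show i - 3 + 1 = i + 1 - 3 by ring]; exact h3⟩
    · have hi : i = 1 ∨ i = 2 ∨ i = 3 := by omega
      rcases hi with rfl | rfl | rfl
      · rw [show (1:ℤ) + 1 = 2 by norm_num, appW_val2] at h3; simp at h3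
      · rw [appW_val2] at h2; simp at h2
      · rw [show (3:ℤ) - 1 = 2 by norm_num, appW_val2] at h1; simp at h1
  · intro j hj0 hjM hj
    by_cases hj3 : 3 ≤ j
    · rw [appW_shift3' _ _ _ c (by omega)] at hj
      exact blocked_appW3 hpad (hblk (j - 3) (by omega) (by push_cast at hjM ⊢; omega) hj)
        _ _ _ (by ring)
    · have hj' : j = 0 ∨ j = 1 ∨ j = 2 := by omega
      rcases hj' with rfl | rfl | rfl
      · rw [appW_val0] at hj; simp at hj
      · rw [appW_val1] at hj; simp at hj
      · left
        refine ⟨?_, ?_⟩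
        · rw [show (2:ℤ) - 2 = 0 by norm_num, appW_val0]
        · rw [show (2:ℤ) - 1 = 1 by norm_num, appW_val1]
  · intro j hj
    push_cast at hj
    rw [appW_shift3' _ _ _ c (by omega)]
    exact hup _ (by omega)

lemma good_b4 {c : ℤ → Bool} {M : ℕ} (hc : GoodW c M) :
    GoodW (appW [false, true, true, false] c) (M + 4) := by
  obtain ⟨hpad, hperm, hblk, hup⟩ := hc
  refine ⟨Pad.appW _ hpad, ?_, ?_, ?_⟩
  · rintro ⟨i, h1, h2, h3⟩
    by_cases hi0 : i - 1 < 0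
    · rw [appW_pad hpad hi0] at h1; simp at h1
    by_cases hiL : 5 ≤ i
    · rw [appW_shift4' _ _ _ _ c (by omega)] at h1 h2 h3
      exact hperm ⟨i - 4, by rw [show i - 4 - 1 = i - 1 - 4 by ring]; exact h1,
        h2, by rw [show i - 4 + 1 = i + 1 - 4 by ring]; exact h3⟩
    · have hi : i = 1 ∨ i = 2 ∨ i = 3 ∨ i = 4 := by omega
      rcases hi with rfl | rfl | rfl | rfl
      · rw [show (1:ℤ) - 1 = 0 by norm_num, appW_val0] at h1; simp at h1
      · rw [show (2:ℤ) + 1 = 3 by norm_num, appW_val3] at h3; simp at h3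
      · rw [appW_val3] at h2; simp at h2
      · rw [show (4:ℤ) - 1 = 3 by norm_num, appW_val3] at h1; simp at h1
  · intro j hj0 hjM hj
    by_cases hj4 : 4 ≤ j
    · rw [appW_shift4' _ _ _ _ c (by omega)] at hj
      exact blocked_appW4 hpad (hblk (j - 4) (by omega) (by push_cast at hjM ⊢; omega) hj)
        _ _ _ _ (by ring)
    · have hj' : j = 0 ∨ j = 1 ∨ j = 2 ∨ j = 3 := by omega
      rcases hj' with rfl | rfl | rfl | rfl
      · right; right
        refine ⟨?_, ?_⟩
        · rw [show (0:ℤ) + 1 = 1 by norm_num, appW_val1]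
        · rw [show (0:ℤ) + 2 = 2 by norm_num, appW_val2]
      · rw [appW_val1] at hj; simp at hj
      · rw [appW_val2] at hj; simp at hj
      · left
        refine ⟨?_, ?_⟩
        · rw [show (3:ℤ) - 2 = 1 by norm_num, appW_val1]
        · rw [show (3:ℤ) - 1 = 2 by norm_num, appW_val2]
  · intro j hj
    push_cast at hj
    rw [appW_shift4' _ _ _ _ c (by omega)]
    exact hup _ (by omega)

lemma good_10 {c : ℤ → Bool} {M : ℕ} (hc : GoodW c M) (h0 : c 0 = true) :
    GoodW (appW [true, false] c) (M + 2) := by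
  obtain ⟨hpad, hperm, hblk, hup⟩ := hc
  refine ⟨Pad.appW _ hpad, ?_, ?_, ?_⟩
  · rintro ⟨i, h1, h2, h3⟩
    by_cases hi0 : i - 1 < 0
    · rw [appW_pad hpad hi0] at h1; simp at h1
    by_cases hiL : 3 ≤ i
    · rw [appW_shift2' _ _ c (by omega)] at h1 h2 h3
      exact hperm ⟨i - 2, by rw [show i - 2 - 1 = i - 1 - 2 by ring]; exact h1,
        h2, by rw [show i - 2 + 1 = i + 1 - 2 by ring]; exact h3⟩
    · have hi : i = 1 ∨ i = 2 := by omega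
      rcases hi with rfl | rfl
      · rw [appW_val1] at h2; simp at h2
      · rw [show (2:ℤ) - 1 = 1 by norm_num, appW_val1] at h1; simp at h1
  · intro j hj0 hjM hj
    by_cases hj2 : 2 ≤ j
    · rw [appW_shift2' _ _ c (by omega)] at hj
      exact blocked_appW2 hpad (hblk (j - 2) (by omega) (by push_cast at hjM ⊢; omega) hj)
        _ _ (by ring)
    · have hj' : j = 0 ∨ j = 1 := by omega
      rcases hj' with rfl | rfl
      · rw [appW_val0] at hj; simp at hj
      · right; left
        refine ⟨?_, ?_⟩
        · rw [show (1:ℤ) - 1 = 0 by norm_num, appW_val0]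
        · rw [show (1:ℤ) + 1 = 2 by norm_num, appW_shift2' _ _ c (by omega)]
          rw [show (2:ℤ) - 2 = 0 by norm_num]
          exact h0
  · intro j hj
    push_cast at hj
    rw [appW_shift2' _ _ c (by omega)]
    exact hup _ (by omega)
def wfun : List Code → ℤ → Bool
  | [] => fun _ => false
  | x :: s => appW (cwordL x) (wfun s)


lemma good_odd {c : ℤ → Bool} {M : ℕ} (k : ℕ) (hc : GoodW c M) :
    GoodW (appW (oddW k) c) (M + (2 * k + 5)) ∧ appW (oddW k) c 0 = true := by
  induction k with
  | zero =>
      have h3 := good_b3 hc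
      have h0 : appW w3 c 0 = true := by rw [show w3 = [true,true,false] from rfl, appW_val0]
      have := good_10 h3 h0
      constructor
      · rw [show oddW 0 = [true,false] ++ w3 from rfl, appW_append,
          show w3 = [true,true,false] from rfl]
        exact this
      · rw [show oddW 0 = [true,false] ++ w3 from rfl, appW_append, appW_val0]
  | succ k ih =>
      obtain ⟨ihg, ih0⟩ := ih
      have := good_10 ihg ih0
      constructor
      · rw [show oddW (k+1) = [true,false] ++ oddW k from rfl, appW_append]
        exact this
      · rw [show oddW (k+1) = [true,false] ++ oddW k from rfl, appW_append, appW_val0]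

lemma good_nil : GoodW (fun _ => false) 0 := by
  refine ⟨fun _ _ => rfl, ?_, ?_, fun _ _ => rfl⟩
  · rintro ⟨i, h, -, -⟩; simp at h
  · intro j h0 hM; omega

lemma good_wfun (s : List Code) : GoodW (wfun s) (wlen s) := by
  induction s with
  | nil => exact good_nil
  | cons x s ih =>
      cases x with
      | b3 =>
          have := good_b3 ih
          rw [wlen_cons, Nat.add_comm]
          exact this
      | b4 =>
          have := good_b4 ih
          rw [wlen_cons, Nat.add_comm]
          exact this
      | odd k =>
          have := (good_odd k ih).1
          rw [wlen_cons, Nat.add_comm]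
          exact this

lemma oddW_end (k : ℕ) (c : ℤ → Bool) :
    appW (oddW k) c (2*(k:ℤ)+4) = false ∧ appW (oddW k) c (2*(k:ℤ)+3) = true ∧
    appW (oddW k) c (2*(k:ℤ)+2) = true ∧ appW (oddW k) c (2*(k:ℤ)+1) = false := by
  induction k with
  | zero =>
      have e : oddW 0 = [true, false, true, true, false] := rfl
      refine ⟨?_, ?_, ?_, ?_⟩
      · rw [e, show 2*((0:ℕ):ℤ)+4 = 4 by norm_num, appW_val4]
      · rw [e, show 2*((0:ℕ):ℤ)+3 = 3 by norm_num, appW_val3]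
      · rw [e, show 2*((0:ℕ):ℤ)+2 = 2 by norm_num, appW_val2]
      · rw [e, show 2*((0:ℕ):ℤ)+1 = 1 by norm_num, appW_val1]
  | succ k ih =>
      obtain ⟨i1, i2, i3, i4⟩ := ih
      have e : oddW (k+1) = [true, false] ++ oddW k := rfl
      push_cast
      refine ⟨?_, ?_, ?_, ?_⟩
      · rw [e, appW_append, appW_shift2' _ _ _ (by push_cast; omega),
          show 2*((k:ℤ)+1)+4-2 = 2*(k:ℤ)+4 by ring]
        exact i1
      · rw [e, appW_append, appW_shift2' _ _ _ (by push_cast; omega),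
          show 2*((k:ℤ)+1)+3-2 = 2*(k:ℤ)+3 by ring]
        exact i2
      · rw [e, appW_append, appW_shift2' _ _ _ (by push_cast; omega),
          show 2*((k:ℤ)+1)+2-2 = 2*(k:ℤ)+2 by ring]
        exact i3
      · rw [e, appW_append, appW_shift2' _ _ _ (by push_cast; omega),
          show 2*((k:ℤ)+1)+1-2 = 2*(k:ℤ)+1 by ring]
        exact i4

lemma cword_last (x : Code) (c : ℤ → Bool) : appW (cwordL x) c ((clen x : ℤ) - 1) = false := by
  cases x with
  | b3 =>
      rw [show cwordL b3 = [true,true,false] from rfl, show ((clen b3:ℤ) - 1) = 2 by rfl,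
        appW_val2]
  | b4 =>
      rw [show cwordL b4 = [false,true,true,false] from rfl, show ((clen b4:ℤ) - 1) = 3 by rfl,
        appW_val3]
  | odd k =>
      have := (oddW_end k c).1
      rw [show cwordL (odd k) = oddW k from rfl]
      rw [show ((clen (odd k) : ℤ) - 1) = 2*(k:ℤ)+4 by simp [clen]; push_cast; ring]
      exact this

lemma wfun_end (s : List Code) (hs : s ≠ []) :
    3 ≤ wlen s ∧ wfun s ((wlen s : ℤ) - 1) = false ∧ wfun s ((wlen s : ℤ) - 2) = true ∧
      wfun s ((wlen s : ℤ) - 3) = true ∧ (4 ≤ wlen s → wfun s ((wlen s : ℤ) - 4) = false) := by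
  induction s with
  | nil => exact absurd rfl hs
  | cons x s ih =>
      cases s with
      | nil =>
          clear ih
          cases x with
          | b3 =>
              refine ⟨by simp only [wlen_cons, wlen_nil, clen]; omega, ?_, ?_, ?_, ?_⟩
              all_goals simp only [wfun, wlen_cons, wlen_nil, cwordL]
              · rw [show ((clen b3 + 0 : ℕ):ℤ) - 1 = 2 by rfl,
                  show w3 = [true,true,false] from rfl, appW_val2]
              · rw [show ((clen b3 + 0 : ℕ):ℤ) - 2 = 1 by rfl,
                  show w3 = [true,true,false] from rfl, appW_val1]
              · rw [show ((clen b3 + 0 : ℕ):ℤ) - 3 = 0 by rfl,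
                  show w3 = [true,true,false] from rfl, appW_val0]
              · intro h; simp [clen] at h
          | b4 =>
              refine ⟨by simp only [wlen_cons, wlen_nil, clen]; omega, ?_, ?_, ?_, ?_⟩
              all_goals simp only [wfun, wlen_cons, wlen_nil, cwordL]
              · rw [show ((clen b4 + 0 : ℕ):ℤ) - 1 = 3 by rfl,
                  show w4 = [false,true,true,false] from rfl, appW_val3]
              · rw [show ((clen b4 + 0 : ℕ):ℤ) - 2 = 2 by rfl,
                  show w4 = [false,true,true,false] from rfl, appW_val2]
              · rw [show ((clen b4 + 0 : ℕ):ℤ) - 3 = 1 by rfl,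
                  show w4 = [false,true,true,false] from rfl, appW_val1]
              · intro _
                rw [show ((clen b4 + 0 : ℕ):ℤ) - 4 = 0 by rfl,
                  show w4 = [false,true,true,false] from rfl, appW_val0]
          | odd k =>
              obtain ⟨o1, o2, o3, o4⟩ := oddW_end k (wfun [])
              refine ⟨by simp only [wlen_cons, wlen_nil, clen]; omega, ?_, ?_, ?_, ?_⟩
              all_goals simp only [wfun, wlen_cons, wlen_nil, cwordL]
              · rw [show ((clen (odd k) + 0 : ℕ):ℤ) - 1 = 2*(k:ℤ)+4 by simp [clen]; push_cast; ring]
                exact o1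
              · rw [show ((clen (odd k) + 0 : ℕ):ℤ) - 2 = 2*(k:ℤ)+3 by simp [clen]; push_cast; ring]
                exact o2
              · rw [show ((clen (odd k) + 0 : ℕ):ℤ) - 3 = 2*(k:ℤ)+2 by simp [clen]; push_cast; ring]
                exact o3
              · intro _
                rw [show ((clen (odd k) + 0 : ℕ):ℤ) - 4 = 2*(k:ℤ)+1 by simp [clen]; push_cast; ring]
                exact o4
      | cons y t =>
          obtain ⟨ih3, ihE1, ihE2, ihE3, ihE4⟩ := ih (by simp)
          have hcw : ∀ p : ℤ, (clen x : ℤ) ≤ p →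
              wfun (x :: y :: t) p = wfun (y :: t) (p - clen x) := by
            intro p hp
            show appW (cwordL x) (wfun (y :: t)) p = _
            rw [appW_shift' _ _ (by rwa [cwordL_length])]
            rw [cwordL_length]
          have hlen : wlen (x :: y :: t) = clen x + wlen (y :: t) := rfl
          have hc3 : 3 ≤ clen x := by cases x <;> simp [clen]
          refine ⟨by omega, ?_, ?_, ?_, ?_⟩
          · rw [hcw _ (by push_cast [hlen]; omega)]
            have : ((wlen (x :: y :: t) : ℤ)) - 1 - clen x = (wlen (y :: t) : ℤ) - 1 := by
              push_cast [hlen]; ring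
            rw [this]; exact ihE1
          · rw [hcw _ (by push_cast [hlen]; omega)]
            have : ((wlen (x :: y :: t) : ℤ)) - 2 - clen x = (wlen (y :: t) : ℤ) - 2 := by
              push_cast [hlen]; ring
            rw [this]; exact ihE2
          · rw [hcw _ (by push_cast [hlen]; omega)]
            have : ((wlen (x :: y :: t) : ℤ)) - 3 - clen x = (wlen (y :: t) : ℤ) - 3 := by
              push_cast [hlen]; ring
            rw [this]; exact ihE3
          · intro _
            by_cases h4 : 4 ≤ wlen (y :: t)
            · rw [hcw _ (by push_cast [hlen]; omega)]
              have : ((wlen (x :: y :: t) : ℤ)) - 4 - clen x = (wlen (y :: t) : ℤ) - 4 := by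
                push_cast [hlen]; ring
              rw [this]; exact ihE4 h4
            · have h34 : wlen (y :: t) = 3 := by omega
              have : ((wlen (x :: y :: t) : ℤ)) - 4 = (clen x : ℤ) - 1 := by
                push_cast [hlen, h34]; ring
              rw [this]
              exact cword_last x (wfun (y :: t))

def trunc (n : ℕ) (w : ℤ → Bool) : ℤ → Bool := fun j => if (n:ℤ) ≤ j then false else w j

lemma not_perm_update_iff {c : ℤ → Bool} (hperm : RivieraPermissible c) {j : ℤ}
    (hj : c j = false) :
    ¬ RivieraPermissible (Function.update c j true) ↔ Blocked c j := by
  have upd : ∀ x : ℤ, Function.update c j true x = if x = j then true else c x := by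
    intro x; exact Function.update_apply c j true x
  constructor
  · intro h
    rw [RivieraPermissible, not_not] at h
    obtain ⟨i, h1, h2, h3⟩ := h
    rw [upd] at h1 h2 h3
    by_cases e1 : i - 1 = j
    · right; right
      have hj1 : i = j + 1 := by omega
      constructor
      · rw [if_neg (by omega)] at h2; rw [← hj1]; exact h2
      · rw [if_neg (by omega)] at h3; rw [show j + 2 = i + 1 by omega]; exact h3
    · by_cases e2 : i = j
      · right; left
        subst e2
        constructor
        · rw [if_neg (by omega)] at h1; exact h1
        · rw [if_neg (by omega)] at h3; exact h3
      · by_cases e3 : i + 1 = j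
        · left
          constructor
          · rw [if_neg (by omega)] at h1; rw [show j - 2 = i - 1 by omega]; exact h1
          · rw [if_neg (by omega)] at h2; rw [show j - 1 = i by omega]; exact h2
        · exfalso
          rw [if_neg e1] at h1; rw [if_neg e2] at h2; rw [if_neg e3] at h3
          exact hperm ⟨i, h1, h2, h3⟩
  · intro hb
    rw [RivieraPermissible, not_not]
    rcases hb with ⟨hb1, hb2⟩ | ⟨hb1, hb2⟩ | ⟨hb1, hb2⟩
    · refine ⟨j - 1, ?_, ?_, ?_⟩
      · rw [upd, if_neg (by omega), show j - 1 - 1 = j - 2 by ring]; exact hb1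
      · rw [upd, if_neg (by omega)]; exact hb2
      · rw [upd, show j - 1 + 1 = j by ring, if_pos rfl]
    · refine ⟨j, ?_, ?_, ?_⟩
      · rw [upd, if_neg (by omega)]; exact hb1
      · rw [upd, if_pos rfl]
      · rw [upd, if_neg (by omega)]; exact hb2
    · refine ⟨j + 1, ?_, ?_, ?_⟩
      · rw [upd, show j + 1 - 1 = j by ring, if_pos rfl]
      · rw [upd, if_neg (by omega)]; exact hb1
      · rw [upd, if_neg (by omega), show j + 1 + 1 = j + 2 by ring]; exact hb2

lemma trunc_good {s : List Code} {n : ℕ} (h : wlen s = n + 4) :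
    RivieraConfig n (trunc n (wfun s)) ∧ RivieraMaximal n (trunc n (wfun s)) := by
  obtain ⟨hpad, hperm, hblk, hup⟩ := good_wfun s
  have hs : s ≠ [] := by rintro rfl; simp at h
  obtain ⟨h3, hE1, hE2, hE3, hE4⟩ := wfun_end s hs
  have hn : wfun s (n : ℤ) = false := by
    have := hE4 (by omega)
    rwa [show ((wlen s : ℤ)) - 4 = (n:ℤ) by rw [h]; push_cast; ring] at this
  have hcval : ∀ j : ℤ, j < (n:ℤ) → trunc n (wfun s) j = wfun s j := by
    intro j hj; exact if_neg (by omega)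
  have hcval2 : ∀ j : ℤ, (n:ℤ) ≤ j → trunc n (wfun s) j = false := by
    intro j hj; exact if_pos hj
  have hmono : ∀ x : ℤ, trunc n (wfun s) x = true → wfun s x = true := by
    intro x hx
    by_cases hxn : (n:ℤ) ≤ x
    · rw [hcval2 x hxn] at hx; exact absurd hx (by simp)
    · rwa [hcval x (by omega)] at hx
  have hpermc : RivieraPermissible (trunc n (wfun s)) := by
    rintro ⟨i, h1, h2, h3'⟩
    exact hperm ⟨i, hmono _ h1, hmono _ h2, hmono _ h3'⟩
  refine ⟨?_, hpermc, ?_⟩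
  · intro j hj
    rcases hj with hj | hj
    · rw [hcval j (by omega)]; exact hpad j hj
    · exact hcval2 j hj
  · intro j hj0 hjn hcj
    rw [not_perm_update_iff hpermc hcj]
    have hwj : wfun s j = false := by rwa [hcval j hjn] at hcj
    have hb := hblk j hj0 (by push_cast [h]; omega) hwj
    rcases hb with ⟨hb1, hb2⟩ | ⟨hb1, hb2⟩ | ⟨hb1, hb2⟩
    · left
      exact ⟨by rw [hcval _ (by omega)]; exact hb1, by rw [hcval _ (by omega)]; exact hb2⟩
    · right; left
      have hj1 : j + 1 ≠ (n:ℤ) := by rintro he; rw [he, hn] at hb2; exact absurd hb2 (by simp)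
      exact ⟨by rw [hcval _ (by omega)]; exact hb1, by rw [hcval _ (by omega)]; exact hb2⟩
    · right; right
      have hj1 : j + 1 ≠ (n:ℤ) := by rintro he; rw [he, hn] at hb1; exact absurd hb1 (by simp)
      have hj2 : j + 2 ≠ (n:ℤ) := by rintro he; rw [he, hn] at hb2; exact absurd hb2 (by simp)
      exact ⟨by rw [hcval _ (by omega)]; exact hb1, by rw [hcval _ (by omega)]; exact hb2⟩

lemma wfun_cons_val0 (x : Code) (s : List Code) :
    wfun (x :: s) 0 = (match x with | b4 => false | _ => true) := by
  cases x with
  | b3 => exact appW_val0 _ _ _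
  | b4 => exact appW_val0 _ _ _
  | odd k => cases k <;> exact appW_val0 _ _ _

lemma wfun_cons_val1 (x : Code) (s : List Code) :
    wfun (x :: s) 1 = (match x with | b3 => true | b4 => true | odd _ => false) := by
  cases x with
  | b3 => exact appW_val1 _ _ _ _
  | b4 => exact appW_val1 _ _ _ _
  | odd k => cases k <;> exact appW_val1 _ _ _ _

lemma oddW_oddpos (k : ℕ) (c : ℤ → Bool) :
    ∀ r : ℕ, r ≤ k → appW (oddW k) c (2*(r:ℤ)+1) = false := by
  induction k with
  | zero =>
      intro r hr
      have : r = 0 := by omega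
      subst this
      rw [show (2*((0:ℕ):ℤ)+1) = 1 by norm_num]
      exact appW_val1 _ _ _ _
  | succ k ih =>
      intro r hr
      rcases Nat.eq_zero_or_pos r with rfl | hrpos
      · rw [show (2*((0:ℕ):ℤ)+1) = 1 by norm_num]
        exact appW_val1 _ _ _ _
      · rw [show oddW (k+1) = [true,false] ++ oddW k from rfl, appW_append,
          appW_shift2' _ _ _ (by push_cast; omega)]
        have := ih (r - 1) (by omega)
        rw [show (2*((r:ℕ):ℤ)+1-2) = 2*(((r-1:ℕ)):ℤ)+1 by push_cast; omega]
        exact this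

lemma wfun_head_eq (x y : Code) (s t : List Code) (h : wfun (x :: s) = wfun (y :: t)) :
    x = y := by
  have h0 := congrFun h 0
  have h1 := congrFun h 1
  rw [wfun_cons_val0, wfun_cons_val0] at h0
  rw [wfun_cons_val1, wfun_cons_val1] at h1
  have hodd : ∀ (k k' : ℕ) (u v : List Code), k < k' →
      wfun (odd k :: u) = wfun (odd k' :: v) → False := by
    intro k k' u v hkk' he
    have hv := congrFun he (2*(k:ℤ)+3)
    have hx : wfun (odd k :: u) (2*(k:ℤ)+3) = true := (oddW_end k (wfun u)).2.1
    have hy : wfun (odd k' :: v) (2*(k:ℤ)+3) = false := by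
      have := oddW_oddpos k' (wfun v) (k+1) (by omega)
      rwa [show (2*((k+1:ℕ):ℤ)+1) = 2*(k:ℤ)+3 by push_cast; ring] at this
    rw [hx, hy] at hv
    exact absurd hv (by simp)
  cases x with
  | b3 =>
      cases y with
      | b3 => rfl
      | b4 => simp at h0
      | odd k => simp at h1
  | b4 =>
      cases y with
      | b3 => simp at h0
      | b4 => rfl
      | odd k => simp at h0
  | odd k =>
      cases y with
      | b3 => simp at h1
      | b4 => simp at h0
      | odd k' =>
          rcases lt_trichotomy k k' with hl | he | hl
          · exact absurd (hodd k k' s t hl h) id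
          · rw [he]
          · exact absurd (hodd k' k t s hl h.symm) id

lemma wfun_exists_true (y : Code) (t : List Code) :
    ∃ p : ℤ, wfun (y :: t) p = true := by
  cases y with
  | b3 => exact ⟨0, by rw [wfun_cons_val0]⟩
  | b4 => exact ⟨1, by rw [wfun_cons_val1]⟩
  | odd k => exact ⟨0, by rw [wfun_cons_val0]⟩

lemma wfun_inj : ∀ s t : List Code, wfun s = wfun t → s = t := by
  intro s
  induction s with
  | nil =>
      intro t h
      cases t with
      | nil => rfl
      | cons y t =>
          obtain ⟨p, hp⟩ := wfun_exists_true y t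
          rw [← h] at hp
          exact absurd hp (by simp [wfun])
  | cons x s ih =>
      intro t h
      cases t with
      | nil =>
          obtain ⟨p, hp⟩ := wfun_exists_true x s
          rw [h] at hp
          exact absurd hp (by simp [wfun])
      | cons y t =>
          have hxy := wfun_head_eq x y s t h
          subst hxy
          have htail : wfun s = wfun t := by
            funext j
            by_cases hj : j < 0
            · rw [(good_wfun s).1 j hj, (good_wfun t).1 j hj]
            · have h1 : wfun (x :: s) (j + clen x) = wfun s j := by
                show appW (cwordL x) (wfun s) _ = _
                rw [← cwordL_length x, appW_shift _ _ (by omega)]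
              have h2 : wfun (x :: t) (j + clen x) = wfun t j := by
                show appW (cwordL x) (wfun t) _ = _
                rw [← cwordL_length x, appW_shift _ _ (by omega)]
              rw [← h1, ← h2, h]
          rw [ih t htail]

def ext : List Code → List Code
  | b3 :: t => odd 0 :: t
  | odd k :: t => odd (k+1) :: t
  | s => s

lemma ext_spec (s : List Code) (hne : s ≠ []) (hhd : ∀ t, s ≠ b4 :: t) :
    wfun (ext s) = appW [true, false] (wfun s) ∧ wlen (ext s) = wlen s + 2 := by
  cases s with
  | nil => exact absurd rfl hne
  | cons x t =>
      cases x with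
      | b3 =>
          constructor
          · show appW (oddW 0) (wfun t) = _
            rw [show oddW 0 = [true,false] ++ w3 from rfl, appW_append]
            rfl
          · simp [ext, clen]; omega
      | b4 => exact absurd rfl (hhd t)
      | odd k =>
          constructor
          · show appW (oddW (k+1)) (wfun t) = _
            rw [show oddW (k+1) = [true,false] ++ oddW k from rfl, appW_append]
            rfl
          · simp [ext, clen]; omega

def shf (L : ℤ) (c : ℤ → Bool) : ℤ → Bool := fun j => if j < 0 then false else c (j + L)

lemma shf_pad (L : ℤ) (c : ℤ → Bool) : Pad (shf L c) := by
  intro j h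
  simp [shf, h]

lemma shf_val (L : ℤ) (c : ℤ → Bool) {j : ℤ} (h : 0 ≤ j) : shf L c j = c (j + L) :=
  if_neg (by omega)

lemma shf_perm (L : ℤ) (c : ℤ → Bool) (hperm : RivieraPermissible c) :
    RivieraPermissible (shf L c) := by
  rintro ⟨i, h1, h2, h3⟩
  have hi : 1 ≤ i := by
    by_contra hi
    rw [shf_pad L c (i-1) (by omega)] at h1
    · exact absurd h1 (by simp)
  rw [shf_val L c (by omega)] at h1 h2 h3
  exact hperm ⟨i + L, by rw [show i + L - 1 = i - 1 + L by ring]; exact h1, h2,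
    by rw [show i + L + 1 = i + 1 + L by ring]; exact h3⟩

lemma shf_config (L : ℕ) (n : ℕ) (c : ℤ → Bool) (hL : L ≤ n) (hconf : RivieraConfig n c) :
    RivieraConfig (n - L) (shf L c) := by
  intro j hj
  rcases hj with hj | hj
  · exact shf_pad L c j hj
  · by_cases hj0 : j < 0
    · exact shf_pad L c j hj0
    · rw [shf_val L c (by omega)]
      apply hconf
      right
      push_cast at hj ⊢
      omega

lemma trunc_surj (n : ℕ) : ∀ c : ℤ → Bool, RivieraConfig n c → RivieraMaximal n c →
    ∃ s : List Code, wlen s = n + 4 ∧ trunc n (wfun s) = c := by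
  induction n using Nat.strong_induction_on with
  | _ n IH =>
  intro c hconf hmax
  obtain ⟨hperm, hadd⟩ := hmax
  have hpad : ∀ j : ℤ, j < 0 → c j = false := fun j hj => hconf j (Or.inl hj)
  have hup : ∀ j : ℤ, (n:ℤ) ≤ j → c j = false := fun j hj => hconf j (Or.inr hj)
  have hblk : ∀ j : ℤ, 0 ≤ j → j < (n:ℤ) → c j = false → Blocked c j := by
    intro j h0 h1 hj
    exact (not_perm_update_iff hperm hj).1 (hadd j h0 h1 hj)
  have htrue_lt : ∀ j : ℤ, c j = true → j < (n:ℤ) := by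
    intro j hj
    by_contra hj'
    rw [hup j (by omega)] at hj
    exact absurd hj (by simp)
  rcases Nat.eq_zero_or_pos n with rfl | hn1
  · refine ⟨[b4], by simp [clen], ?_⟩
    funext j
    by_cases hj : (0:ℤ) ≤ j
    · rw [show trunc 0 (wfun [b4]) j = false from if_pos (by exact_mod_cast hj),
        hup j (by exact_mod_cast hj)]
    · rw [show trunc 0 (wfun [b4]) j = wfun [b4] j from if_neg (by omega),
        (good_wfun [b4]).1 j (by omega), hpad j (by omega)]
  by_cases hc0 : c 0 = true
  · by_cases hc1 : c 1 = true
    · -- c starts 1 1 (0)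
      have hn2 : 2 ≤ n := by have := htrue_lt 1 hc1; omega
      have hc2 : c 2 = false := by
        by_contra hc2
        exact hperm ⟨1, by norm_num; exact hc0, hc1, by norm_num; simpa using hc2⟩
      by_cases hn2' : n = 2
      · subst hn2'
        refine ⟨[b3, b3], by simp [clen], ?_⟩
        funext j
        by_cases hjn : (2:ℤ) ≤ j
        · rw [show trunc 2 (wfun [b3,b3]) j = false from if_pos (by exact_mod_cast hjn),
            hup j (by exact_mod_cast hjn)]
        by_cases hj0 : j < 0
        · rw [show trunc 2 (wfun [b3,b3]) j = wfun [b3,b3] j from if_neg (by omega),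
            (good_wfun [b3,b3]).1 j hj0, hpad j hj0]
        have hj : j = 0 ∨ j = 1 := by omega
        rcases hj with rfl | rfl
        · rw [show trunc 2 (wfun [b3,b3]) 0 = wfun [b3,b3] 0 from if_neg (by omega),
            wfun_cons_val0, hc0]
        · rw [show trunc 2 (wfun [b3,b3]) 1 = wfun [b3,b3] 1 from if_neg (by omega),
            wfun_cons_val1, hc1]
      · -- n ≥ 3, recurse with b3
        have hn3 : 3 ≤ n := by omega
        set c' := shf 3 c with hc'
        have hconf' : RivieraConfig (n - 3) c' := shf_config 3 n c (by omega) hconf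
        have hmax' : RivieraMaximal (n - 3) c' := by
          refine ⟨shf_perm 3 c hperm, ?_⟩
          intro j hj0 hjn hj
          rw [not_perm_update_iff (shf_perm 3 c hperm) hj]
          rw [hc'] at hj
          rw [shf_val 3 c hj0] at hj
          have hb := hblk (j + 3) (by omega) (by push_cast at hjn ⊢; omega) hj
          rcases hb with ⟨hb1, hb2⟩ | ⟨hb1, hb2⟩ | ⟨hb1, hb2⟩
          · -- left: c (j+1), c (j+2)
            by_cases hj2 : 2 ≤ j
            · left
              constructor
              · rw [shf_val 3 c (by omega), show j - 2 + 3 = j + 3 - 2 by ring]; exact hb1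
              · rw [shf_val 3 c (by omega), show j - 1 + 3 = j + 3 - 1 by ring]; exact hb2
            · exfalso
              have hj01 : j = 0 ∨ j = 1 := by omega
              rcases hj01 with rfl | rfl
              · rw [show (0:ℤ) + 3 - 1 = 2 by norm_num] at hb2
                rw [hc2] at hb2; exact absurd hb2 (by simp)
              · rw [show (1:ℤ) + 3 - 2 = 2 by norm_num] at hb1
                rw [hc2] at hb1; exact absurd hb1 (by simp)
          · by_cases hj2 : 1 ≤ j
            · right; left
              constructor
              · rw [shf_val 3 c (by omega), show j - 1 + 3 = j + 3 - 1 by ring]; exact hb1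
              · rw [shf_val 3 c (by omega), show j + 1 + 3 = j + 3 + 1 by ring]; exact hb2
            · exfalso
              have hj0' : j = 0 := by omega
              subst hj0'
              rw [show (0:ℤ) + 3 - 1 = 2 by norm_num] at hb1
              rw [hc2] at hb1; exact absurd hb1 (by simp)
          · right; right
            constructor
            · rw [shf_val 3 c (by omega), show j + 1 + 3 = j + 3 + 1 by ring]; exact hb1
            · rw [shf_val 3 c (by omega), show j + 2 + 3 = j + 3 + 2 by ring]; exact hb2
        obtain ⟨s', hs'len, hs'eq⟩ := IH (n - 3) (by omega) c' hconf' hmax'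
        refine ⟨b3 :: s', by simp [clen]; omega, ?_⟩
        funext j
        by_cases hjn : (n:ℤ) ≤ j
        · rw [show trunc n (wfun (b3 :: s')) j = false from if_pos hjn, hup j hjn]
        by_cases hj0 : j < 0
        · rw [show trunc n (wfun (b3 :: s')) j = wfun (b3 :: s') j from if_neg (by omega),
            (good_wfun _).1 j hj0, hpad j hj0]
        rw [show trunc n (wfun (b3 :: s')) j = wfun (b3 :: s') j from if_neg (by omega)]
        by_cases hj3 : j < 3
        · have hj' : j = 0 ∨ j = 1 ∨ j = 2 := by omega
          rcases hj' with rfl | rfl | rfl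
          · rw [wfun_cons_val0, hc0]
          · rw [wfun_cons_val1, hc1]
          · rw [show wfun (b3 :: s') 2 = false from appW_val2 _ _ _ _ _, hc2]
        · have h1 : wfun (b3 :: s') j = wfun s' (j - 3) := by
            show appW (cwordL b3) (wfun s') j = _
            rw [appW_shift' _ _ (by rw [cwordL_length]; push_cast [clen] at hj3 ⊢; omega)]
            rw [cwordL_length]
            rfl
          rw [h1]
          have h2 : trunc (n-3) (wfun s') (j - 3) = c' (j - 3) := by rw [hs'eq]
          rw [show trunc (n-3) (wfun s') (j-3) = wfun s' (j-3) from
            if_neg (by push_cast at hjn ⊢; omega)] at h2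
          rw [h2, hc', shf_val 3 c (by omega), show j - 3 + 3 = j by ring]
    · -- c starts 1 0
      by_cases hn1' : n = 1
      · subst hn1'
        refine ⟨[odd 0], by simp [clen], ?_⟩
        funext j
        by_cases hjn : (1:ℤ) ≤ j
        · rw [show trunc 1 (wfun [odd 0]) j = false from if_pos (by exact_mod_cast hjn),
            hup j (by exact_mod_cast hjn)]
        by_cases hj0 : j < 0
        · rw [show trunc 1 (wfun [odd 0]) j = wfun [odd 0] j from if_neg (by omega),
            (good_wfun _).1 j hj0, hpad j hj0]
        have hj' : j = 0 := by omega
        subst hj'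
        rw [show trunc 1 (wfun [odd 0]) 0 = wfun [odd 0] 0 from if_neg (by omega),
          wfun_cons_val0, hc0]
      · have hn2 : 2 ≤ n := by omega
        have hc1' : c 1 = false := by
          cases h : c 1
          · rfl
          · exact absurd h hc1
        have hc2 : c 2 = true := by
          have hb := hblk 1 (by omega) (by push_cast; omega) hc1'
          rcases hb with ⟨hb1, hb2⟩ | ⟨hb1, hb2⟩ | ⟨hb1, hb2⟩
          · rw [hpad (1-2) (by omega)] at hb1; exact absurd hb1 (by simp)
          · rwa [show (1:ℤ)+1 = 2 by norm_num] at hb2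
          · rwa [show (1:ℤ)+1 = 2 by norm_num] at hb1
        have hn3 : 3 ≤ n := by have := htrue_lt 2 hc2; omega
        set c' := shf 2 c with hc'
        have hconf' : RivieraConfig (n - 2) c' := shf_config 2 n c (by omega) hconf
        have hpermc' : RivieraPermissible c' := shf_perm 2 c hperm
        have hmax' : RivieraMaximal (n - 2) c' := by
          refine ⟨hpermc', ?_⟩
          intro j hj0 hjn hj
          rw [not_perm_update_iff hpermc' hj, hc']
          rw [hc'] at hj
          rw [shf_val 2 c hj0] at hj
          have hj0' : j ≠ 0 := by
            rintro rfl
            rw [show (0:ℤ)+2 = 2 by norm_num, hc2] at hj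
            exact absurd hj (by simp)
          have hb := hblk (j + 2) (by omega) (by push_cast at hjn ⊢; omega) hj
          rcases hb with ⟨hb1, hb2⟩ | ⟨hb1, hb2⟩ | ⟨hb1, hb2⟩
          · by_cases hj2 : 2 ≤ j
            · left
              constructor
              · rw [shf_val 2 c (by omega), show j - 2 + 2 = j + 2 - 2 by ring]; exact hb1
              · rw [shf_val 2 c (by omega), show j - 1 + 2 = j + 2 - 1 by ring]; exact hb2
            · exfalso
              have hj1 : j = 1 := by omega
              subst hj1
              rw [show (1:ℤ) + 2 - 2 = 1 by norm_num, hc1'] at hb1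
              exact absurd hb1 (by simp)
          · right; left
            constructor
            · rw [shf_val 2 c (by omega), show j - 1 + 2 = j + 2 - 1 by ring]; exact hb1
            · rw [shf_val 2 c (by omega), show j + 1 + 2 = j + 2 + 1 by ring]; exact hb2
          · right; right
            constructor
            · rw [shf_val 2 c (by omega), show j + 1 + 2 = j + 2 + 1 by ring]; exact hb1
            · rw [shf_val 2 c (by omega), show j + 2 + 2 = j + 2 + 2 by ring]; exact hb2
        obtain ⟨s', hs'len, hs'eq⟩ := IH (n - 2) (by omega) c' hconf' hmax'
        have hs'0 : wfun s' 0 = true := by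
          have h0 : trunc (n-2) (wfun s') 0 = c' 0 := by rw [hs'eq]
          rw [show trunc (n-2) (wfun s') 0 = wfun s' 0 from if_neg (by push_cast; omega)] at h0
          rw [h0, hc', shf_val 2 c (by omega), show (0:ℤ)+2 = 2 by norm_num]
          exact hc2
        have hs'ne : s' ≠ [] := by
          rintro rfl
          exact absurd hs'0 (by simp [wfun])
        have hs'hd : ∀ t, s' ≠ b4 :: t := by
          rintro t rfl
          rw [wfun_cons_val0] at hs'0
          exact absurd hs'0 (by simp)
        obtain ⟨hext1, hext2⟩ := ext_spec s' hs'ne hs'hd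
        refine ⟨ext s', by rw [hext2]; omega, ?_⟩
        funext j
        by_cases hjn : (n:ℤ) ≤ j
        · rw [show trunc n (wfun (ext s')) j = false from if_pos hjn, hup j hjn]
        by_cases hj0 : j < 0
        · rw [show trunc n (wfun (ext s')) j = wfun (ext s') j from if_neg (by omega),
            (good_wfun _).1 j hj0, hpad j hj0]
        rw [show trunc n (wfun (ext s')) j = wfun (ext s') j from if_neg (by omega), hext1]
        by_cases hj2 : j < 2
        · have hj' : j = 0 ∨ j = 1 := by omega
          rcases hj' with rfl | rfl
          · rw [appW_val0, hc0]
          · rw [appW_val1, hc1']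
        · rw [appW_shift2' _ _ _ (by omega)]
          have h2 : trunc (n-2) (wfun s') (j - 2) = c' (j - 2) := by rw [hs'eq]
          rw [show trunc (n-2) (wfun s') (j-2) = wfun s' (j-2) from
            if_neg (by push_cast at hjn ⊢; omega)] at h2
          rw [h2, hc', shf_val 2 c (by omega), show j - 2 + 2 = j by ring]
  · -- c starts 0 1 1 0
    have hc0' : c 0 = false := by cases h : c 0; rfl; exact absurd h hc0
    have hb := hblk 0 (by omega) (by push_cast; omega) hc0'
    have hc12 : c 1 = true ∧ c 2 = true := by
      rcases hb with ⟨hb1, hb2⟩ | ⟨hb1, hb2⟩ | ⟨hb1, hb2⟩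
      · rw [hpad (0-2) (by omega)] at hb1; exact absurd hb1 (by simp)
      · rw [hpad (0-1) (by omega)] at hb1; exact absurd hb1 (by simp)
      · rw [show (0:ℤ)+1 = 1 by norm_num] at hb1
        rw [show (0:ℤ)+2 = 2 by norm_num] at hb2
        exact ⟨hb1, hb2⟩
    obtain ⟨hc1, hc2⟩ := hc12
    have hn3 : 3 ≤ n := by have := htrue_lt 2 hc2; omega
    have hc3 : c 3 = false := by
      by_contra hc3
      exact hperm ⟨2, by norm_num; exact hc1, hc2, by norm_num; simpa using hc3⟩
    by_cases hn3' : n = 3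
    · subst hn3'
      refine ⟨[b4, b3], by simp [clen], ?_⟩
      funext j
      by_cases hjn : (3:ℤ) ≤ j
      · rw [show trunc 3 (wfun [b4,b3]) j = false from if_pos (by exact_mod_cast hjn),
          hup j (by exact_mod_cast hjn)]
      by_cases hj0 : j < 0
      · rw [show trunc 3 (wfun [b4,b3]) j = wfun [b4,b3] j from if_neg (by omega),
          (good_wfun _).1 j hj0, hpad j hj0]
      have hj' : j = 0 ∨ j = 1 ∨ j = 2 := by omega
      rcases hj' with rfl | rfl | rfl
      · rw [show trunc 3 (wfun [b4,b3]) 0 = wfun [b4,b3] 0 from if_neg (by omega),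
          wfun_cons_val0, hc0']
      · rw [show trunc 3 (wfun [b4,b3]) 1 = wfun [b4,b3] 1 from if_neg (by omega),
          wfun_cons_val1, hc1]
      · rw [show trunc 3 (wfun [b4,b3]) 2 = wfun [b4,b3] 2 from if_neg (by omega),
          show wfun (b4 :: [b3]) 2 = true from appW_val2 _ _ _ _ _, hc2]
    · have hn4 : 4 ≤ n := by omega
      set c' := shf 4 c with hc'
      have hconf' : RivieraConfig (n - 4) c' := shf_config 4 n c (by omega) hconf
      have hpermc' : RivieraPermissible c' := shf_perm 4 c hperm
      have hmax' : RivieraMaximal (n - 4) c' := by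
        refine ⟨hpermc', ?_⟩
        intro j hj0 hjn hj
        rw [not_perm_update_iff hpermc' hj, hc']
        rw [hc'] at hj
        rw [shf_val 4 c hj0] at hj
        have hb' := hblk (j + 4) (by omega) (by push_cast at hjn ⊢; omega) hj
        rcases hb' with ⟨hb1, hb2⟩ | ⟨hb1, hb2⟩ | ⟨hb1, hb2⟩
        · by_cases hj2 : 2 ≤ j
          · left
            constructor
            · rw [shf_val 4 c (by omega), show j - 2 + 4 = j + 4 - 2 by ring]; exact hb1
            · rw [shf_val 4 c (by omega), show j - 1 + 4 = j + 4 - 1 by ring]; exact hb2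
          · exfalso
            have hj01 : j = 0 ∨ j = 1 := by omega
            rcases hj01 with rfl | rfl
            · rw [show (0:ℤ) + 4 - 1 = 3 by norm_num, hc3] at hb2
              exact absurd hb2 (by simp)
            · rw [show (1:ℤ) + 4 - 2 = 3 by norm_num, hc3] at hb1
              exact absurd hb1 (by simp)
        · by_cases hj2 : 1 ≤ j
          · right; left
            constructor
            · rw [shf_val 4 c (by omega), show j - 1 + 4 = j + 4 - 1 by ring]; exact hb1
            · rw [shf_val 4 c (by omega), show j + 1 + 4 = j + 4 + 1 by ring]; exact hb2
          · exfalso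
            have hj0'' : j = 0 := by omega
            subst hj0''
            rw [show (0:ℤ) + 4 - 1 = 3 by norm_num, hc3] at hb1
            exact absurd hb1 (by simp)
        · right; right
          constructor
          · rw [shf_val 4 c (by omega), show j + 1 + 4 = j + 4 + 1 by ring]; exact hb1
          · rw [shf_val 4 c (by omega), show j + 2 + 4 = j + 4 + 2 by ring]; exact hb2
      obtain ⟨s', hs'len, hs'eq⟩ := IH (n - 4) (by omega) c' hconf' hmax'
      refine ⟨b4 :: s', by simp [clen]; omega, ?_⟩
      funext j
      by_cases hjn : (n:ℤ) ≤ j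
      · rw [show trunc n (wfun (b4 :: s')) j = false from if_pos hjn, hup j hjn]
      by_cases hj0 : j < 0
      · rw [show trunc n (wfun (b4 :: s')) j = wfun (b4 :: s') j from if_neg (by omega),
          (good_wfun _).1 j hj0, hpad j hj0]
      rw [show trunc n (wfun (b4 :: s')) j = wfun (b4 :: s') j from if_neg (by omega)]
      by_cases hj4 : j < 4
      · have hj' : j = 0 ∨ j = 1 ∨ j = 2 ∨ j = 3 := by omega
        rcases hj' with rfl | rfl | rfl | rfl
        · rw [wfun_cons_val0, hc0']
        · rw [wfun_cons_val1, hc1]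
        · rw [show wfun (b4 :: s') 2 = true from appW_val2 _ _ _ _ _, hc2]
        · rw [show wfun (b4 :: s') 3 = false from appW_val3 _ _ _ _ _ _, hc3]
      · have h1 : wfun (b4 :: s') j = wfun s' (j - 4) := by
          show appW (cwordL b4) (wfun s') j = _
          rw [appW_shift' _ _ (by rw [cwordL_length]; push_cast [clen] at hj4 ⊢; omega)]
          rw [cwordL_length]
          rfl
        rw [h1]
        have h2 : trunc (n-4) (wfun s') (j - 4) = c' (j - 4) := by rw [hs'eq]
        rw [show trunc (n-4) (wfun s') (j-4) = wfun s' (j-4) from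
          if_neg (by push_cast at hjn ⊢; omega)] at h2
        rw [h2, hc', shf_val 4 c (by omega), show j - 4 + 4 = j by ring]

/-! ### Permutation side -/

def P3f (f : ℕ → ℕ) : ℕ → ℕ
  | 0 => 2
  | 1 => 0
  | 2 => 1
  | (i+3) => f i + 3

def Q3f (g : ℕ → ℕ) : ℕ → ℕ
  | 0 => 1
  | 1 => 2
  | 2 => 0
  | (i+3) => g i + 3

def P4f (f : ℕ → ℕ) : ℕ → ℕ
  | 0 => 2
  | 1 => 3
  | 2 => 0
  | 3 => 1
  | (i+4) => f i + 4

def Q4f (g : ℕ → ℕ) : ℕ → ℕ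
  | 0 => 2
  | 1 => 3
  | 2 => 0
  | 3 => 1
  | (i+4) => g i + 4

def P2f (f : ℕ → ℕ) : ℕ → ℕ
  | 0 => 2
  | 1 => 0
  | (i+2) => if f i = 0 then 1 else f i + 2

def Q2f (g : ℕ → ℕ) : ℕ → ℕ
  | 0 => 1
  | 1 => g 0 + 2
  | 2 => 0
  | (v+3) => g (v+1) + 2

def oddP : ℕ → (ℕ → ℕ) → (ℕ → ℕ)
  | 0, f => P2f (P3f f)
  | (k+1), f => P2f (oddP k f)

def oddQ : ℕ → (ℕ → ℕ) → (ℕ → ℕ)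
  | 0, g => Q2f (Q3f g)
  | (k+1), g => Q2f (oddQ k g)

def pmf : List Code → ℕ → ℕ
  | [] => id
  | b3 :: s => P3f (pmf s)
  | b4 :: s => P4f (pmf s)
  | odd k :: s => oddP k (pmf s)

def pmg : List Code → ℕ → ℕ
  | [] => id
  | b3 :: s => Q3f (pmg s)
  | b4 :: s => Q4f (pmg s)
  | odd k :: s => oddQ k (pmg s)

lemma P3_Q3 {f g : ℕ → ℕ} (h : ∀ i, f (g i) = i) : ∀ v, P3f f (Q3f g v) = v := by
  intro v
  match v with
  | 0 => rfl
  | 1 => rfl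
  | 2 => rfl
  | (v+3) => show P3f f (g v + 3) = v + 3; show f (g v) + 3 = v + 3; rw [h]

lemma Q3_P3 {f g : ℕ → ℕ} (h : ∀ i, g (f i) = i) : ∀ i, Q3f g (P3f f i) = i := by
  intro i
  match i with
  | 0 => rfl
  | 1 => rfl
  | 2 => rfl
  | (i+3) => show Q3f g (f i + 3) = i + 3; show g (f i) + 3 = i + 3; rw [h]

lemma P4_Q4 {f g : ℕ → ℕ} (h : ∀ i, f (g i) = i) : ∀ v, P4f f (Q4f g v) = v := by
  intro v
  match v with
  | 0 => rfl
  | 1 => rfl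
  | 2 => rfl
  | 3 => rfl
  | (v+4) => show P4f f (g v + 4) = v + 4; show f (g v) + 4 = v + 4; rw [h]

lemma Q4_P4 {f g : ℕ → ℕ} (h : ∀ i, g (f i) = i) : ∀ i, Q4f g (P4f f i) = i := by
  intro i
  match i with
  | 0 => rfl
  | 1 => rfl
  | 2 => rfl
  | 3 => rfl
  | (i+4) => show Q4f g (f i + 4) = i + 4; show g (f i) + 4 = i + 4; rw [h]

lemma P2_Q2 {f g : ℕ → ℕ} (h : ∀ i, f (g i) = i) : ∀ v, P2f f (Q2f g v) = v := by
  intro v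
  match v with
  | 0 => rfl
  | 1 =>
      show P2f f (g 0 + 2) = 1
      show (if f (g 0) = 0 then 1 else f (g 0) + 2) = 1
      rw [h]
      simp
  | 2 => rfl
  | (v+3) =>
      show P2f f (g (v+1) + 2) = v + 3
      show (if f (g (v+1)) = 0 then 1 else f (g (v+1)) + 2) = v + 3
      rw [h]
      simp

lemma Q2_P2 {f g : ℕ → ℕ} (h : ∀ i, g (f i) = i) : ∀ i, Q2f g (P2f f i) = i := by
  intro i
  match i with
  | 0 => rfl
  | 1 => rfl
  | (w+2) =>
      show Q2f g (if f w = 0 then 1 else f w + 2) = w + 2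
      by_cases hw : f w = 0
      · rw [if_pos hw]
        show g 0 + 2 = w + 2
        rw [← hw, h]
      · rw [if_neg hw]
        obtain ⟨u, hu⟩ : ∃ u, f w = u + 1 := ⟨f w - 1, by omega⟩
        rw [hu]
        show Q2f g (u + 3) = w + 2
        show g (u + 1) + 2 = w + 2
        rw [← hu, h]

lemma oddP_oddQ {f g : ℕ → ℕ} (h : ∀ i, f (g i) = i) (k : ℕ) :
    ∀ v, oddP k f (oddQ k g v) = v := by
  induction k with
  | zero => exact P2_Q2 (P3_Q3 h)
  | succ k ih => exact P2_Q2 ih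

lemma oddQ_oddP {f g : ℕ → ℕ} (h : ∀ i, g (f i) = i) (k : ℕ) :
    ∀ i, oddQ k g (oddP k f i) = i := by
  induction k with
  | zero => exact Q2_P2 (Q3_P3 h)
  | succ k ih => exact Q2_P2 ih

lemma pmf_pmg (s : List Code) : ∀ v, pmf s (pmg s v) = v := by
  induction s with
  | nil => intro v; rfl
  | cons x s ih =>
      cases x with
      | b3 => exact P3_Q3 ih
      | b4 => exact P4_Q4 ih
      | odd k => exact oddP_oddQ ih k

lemma pmg_pmf (s : List Code) : ∀ i, pmg s (pmf s i) = i := by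
  induction s with
  | nil => intro v; rfl
  | cons x s ih =>
      cases x with
      | b3 => exact Q3_P3 ih
      | b4 => exact Q4_P4 ih
      | odd k => exact oddQ_oddP ih k

lemma pmf_inj (s : List Code) : Function.Injective (pmf s) :=
  Function.LeftInverse.injective (pmg_pmf s)

lemma pmf_surj' (s : List Code) : Function.Surjective (pmf s) :=
  Function.RightInverse.surjective (pmf_pmg s)

-- identity beyond wlen
lemma P3_id {f : ℕ → ℕ} {B : ℕ} (h : ∀ i, B ≤ i → f i = i) :
    ∀ i, B + 3 ≤ i → P3f f i = i := by
  intro i hi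
  obtain ⟨w, rfl⟩ : ∃ w, i = w + 3 := ⟨i - 3, by omega⟩
  show f w + 3 = w + 3
  rw [h w (by omega)]

lemma P4_id {f : ℕ → ℕ} {B : ℕ} (h : ∀ i, B ≤ i → f i = i) :
    ∀ i, B + 4 ≤ i → P4f f i = i := by
  intro i hi
  obtain ⟨w, rfl⟩ : ∃ w, i = w + 4 := ⟨i - 4, by omega⟩
  show f w + 4 = w + 4
  rw [h w (by omega)]

lemma P2_id {f : ℕ → ℕ} {B : ℕ} (hB : 1 ≤ B) (h : ∀ i, B ≤ i → f i = i) :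
    ∀ i, B + 2 ≤ i → P2f f i = i := by
  intro i hi
  obtain ⟨w, rfl⟩ : ∃ w, i = w + 2 := ⟨i - 2, by omega⟩
  show (if f w = 0 then 1 else f w + 2) = w + 2
  rw [h w (by omega), if_neg (by omega)]

lemma oddP_id {f : ℕ → ℕ} {B : ℕ} (h : ∀ i, B ≤ i → f i = i) (k : ℕ) :
    ∀ i, B + (2*k+5) ≤ i → oddP k f i = i := by
  induction k with
  | zero =>
      intro i hi
      exact P2_id (by omega) (P3_id h) i (by omega)
  | succ k ih =>
      intro i hi
      exact P2_id (by omega) ih i (by omega)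

lemma pmf_id (s : List Code) : ∀ i, wlen s ≤ i → pmf s i = i := by
  induction s with
  | nil => intro i _; rfl
  | cons x s ih =>
      cases x with
      | b3 => exact fun i hi => P3_id ih i (by simp [clen] at hi ⊢; omega)
      | b4 => exact fun i hi => P4_id ih i (by simp [clen] at hi ⊢; omega)
      | odd k => exact fun i hi => oddP_id ih k i (by simp [clen] at hi ⊢; omega)

lemma pmf_lt (s : List Code) {i : ℕ} (hi : i < wlen s) : pmf s i < wlen s := by
  by_contra h
  have h1 : pmf s (pmf s i) = pmf s i := pmf_id s _ (by omega)
  have := pmf_inj s h1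
  omega

-- small values
lemma pmf_zero (x : Code) (s : List Code) : pmf (x :: s) 0 = 2 := by
  cases x with
  | b3 => rfl
  | b4 => rfl
  | odd k => cases k <;> rfl

lemma oddP_one (k : ℕ) (f : ℕ → ℕ) : oddP k f 1 = 0 := by
  cases k <;> rfl

lemma pmf_one (x : Code) (s : List Code) :
    pmf (x :: s) 1 = (match x with | b4 => 3 | _ => 0) := by
  cases x with
  | b3 => rfl
  | b4 => rfl
  | odd k => exact oddP_one k (pmf s)

lemma oddP_zero (k : ℕ) (f : ℕ → ℕ) : oddP k f 0 = 2 := by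
  cases k <;> rfl

lemma oddP_two (k : ℕ) (f : ℕ → ℕ) : oddP k f 2 = 4 := by
  cases k with
  | zero =>
      show (if P3f f 0 = 0 then 1 else P3f f 0 + 2) = 4
      rfl
  | succ k =>
      show (if oddP k f 0 = 0 then 1 else oddP k f 0 + 2) = 4
      rw [oddP_zero]
      norm_num

lemma pmf_two (x : Code) (s : List Code) :
    pmf (x :: s) 2 = (match x with | b3 => 1 | b4 => 0 | odd _ => 4) := by
  cases x with
  | b3 => rfl
  | b4 => rfl
  | odd k => exact oddP_two k (pmf s)

lemma oddP_even (k : ℕ) (f : ℕ → ℕ) : ∀ j, 1 ≤ j → j ≤ k + 1 → oddP k f (2*j) = 2*j + 2 := by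
  induction k with
  | zero =>
      intro j h1 h2
      have : j = 1 := by omega
      subst this
      exact oddP_two 0 f
  | succ k ih =>
      intro j h1 h2
      rcases Nat.eq_or_lt_of_le h1 with h | h
      · rw [← h]
        exact oddP_two (k+1) f
      · have hj2 : 2 ≤ j := by omega
        show P2f (oddP k f) (2*j) = 2*j+2
        obtain ⟨w, hw⟩ : ∃ w, 2*j = w + 2 := ⟨2*j - 2, by omega⟩
        rw [hw]
        show (if oddP k f w = 0 then 1 else oddP k f w + 2) = w + 2 + 2
        have hw2 : w = 2*(j-1) := by omega
        have := ih (j-1) (by omega) (by omega)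
        rw [hw2, this]
        rw [if_neg (by omega)]

lemma oddP_last (k : ℕ) (f : ℕ → ℕ) : oddP k f (2*k+4) = 2*k+3 := by
  induction k with
  | zero =>
      show (if P3f f 2 = 0 then 1 else P3f f 2 + 2) = 3
      rfl
  | succ k ih =>
      show P2f (oddP k f) (2*(k+1)+4) = 2*(k+1)+3
      obtain ⟨w, hw⟩ : ∃ w, 2*(k+1)+4 = w + 2 := ⟨2*k+4, by omega⟩
      rw [hw]
      show (if oddP k f w = 0 then 1 else oddP k f w + 2) = 2*(k+1)+3
      have hww : w = 2*k+4 := by omega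
      rw [hww, ih, if_neg (by omega)]
      omega

-- operator injectivity on functions
lemma P3_cancel {f g : ℕ → ℕ} (h : P3f f = P3f g) : f = g := by
  funext i
  have := congrFun h (i + 3)
  show f i = g i
  have h1 : f i + 3 = g i + 3 := this
  omega

lemma P4_cancel {f g : ℕ → ℕ} (h : P4f f = P4f g) : f = g := by
  funext i
  have := congrFun h (i + 4)
  have h1 : f i + 4 = g i + 4 := this
  omega

lemma P2_cancel {f g : ℕ → ℕ} (h : P2f f = P2f g) : f = g := by
  funext i
  have h1 : (if f i = 0 then 1 else f i + 2) = (if g i = 0 then 1 else g i + 2) :=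
    congrFun h (i + 2)
  by_cases hf : f i = 0 <;> by_cases hg : g i = 0 <;>
    simp [hf, hg] at h1 <;> omega

lemma oddP_cancel (k : ℕ) {f g : ℕ → ℕ} (h : oddP k f = oddP k g) : f = g := by
  induction k with
  | zero => exact P3_cancel (P2_cancel h)
  | succ k ih => exact ih (P2_cancel h)

lemma pmf_list_inj : ∀ s t : List Code, pmf s = pmf t → s = t := by
  intro s
  induction s with
  | nil =>
      intro t h
      cases t with
      | nil => rfl
      | cons y t =>
          have := congrFun h 0
          rw [pmf_zero] at this
          exact absurd this (by simp [pmf])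
  | cons x s ih =>
      intro t h
      cases t with
      | nil =>
          have := congrFun h 0
          rw [pmf_zero] at this
          exact absurd this (by simp [pmf])
      | cons y t =>
          have h1 := congrFun h 1
          have h2 := congrFun h 2
          rw [pmf_one, pmf_one] at h1
          rw [pmf_two, pmf_two] at h2
          have hodd : ∀ (k k' : ℕ) (u v : List Code), k < k' →
              pmf (odd k :: u) = pmf (odd k' :: v) → False := by
            intro k k' u v hkk' he
            have hv := congrFun he (2*k+4)
            have hx : pmf (odd k :: u) (2*k+4) = 2*k+3 := oddP_last k (pmf u)
            have hy : pmf (odd k' :: v) (2*k+4) = 2*k+6 := by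
              have := oddP_even k' (pmf v) (k+2) (by omega) (by omega)
              show oddP k' (pmf v) (2*k+4) = 2*k+6
              rw [show 2*k+4 = 2*(k+2) by omega, this]
              omega
            rw [hx, hy] at hv
            omega
          have hxy : x = y := by
            cases x with
            | b3 =>
                cases y with
                | b3 => rfl
                | b4 => simp at h1
                | odd k => simp at h2
            | b4 =>
                cases y with
                | b3 => simp at h1
                | b4 => rfl
                | odd k => simp at h1
            | odd k =>
                cases y with
                | b3 => simp at h2
                | b4 => simp at h1
                | odd k' =>
                    rcases lt_trichotomy k k' with hl | heq | hl
                    · exact absurd (hodd k k' s t hl h) id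
                    · rw [heq]
                    · exact absurd (hodd k' k t s hl h.symm) id
          subst hxy
          have htail : pmf s = pmf t := by
            cases x with
            | b3 => exact P3_cancel h
            | b4 => exact P4_cancel h
            | odd k => exact oddP_cancel k h
          rw [ih t htail]

-- displacement
def DispOK (f : ℕ → ℕ) (m : ℕ) : Prop :=
  ∀ i, i < m → ((f i : ℤ) - i = -2 ∨ (f i : ℤ) - i = -1 ∨ (f i : ℤ) - i = 2)

lemma P3_disp {f : ℕ → ℕ} {B : ℕ} (h : DispOK f B) : DispOK (P3f f) (B + 3) := by
  intro i hi
  match i with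
  | 0 => right; right; rfl
  | 1 => right; left; rfl
  | 2 => right; left; rfl
  | (w+3) =>
      have := h w (by omega)
      have e : P3f f (w+3) = f w + 3 := rfl
      rw [e]
      push_cast at this ⊢
      omega

lemma P4_disp {f : ℕ → ℕ} {B : ℕ} (h : DispOK f B) : DispOK (P4f f) (B + 4) := by
  intro i hi
  match i with
  | 0 => right; right; rfl
  | 1 => right; right; rfl
  | 2 => left; rfl
  | 3 => left; rfl
  | (w+4) =>
      have := h w (by omega)
      have e : P4f f (w+4) = f w + 4 := rfl
      rw [e]
      push_cast at this ⊢
      omega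

lemma P2_disp {f : ℕ → ℕ} {B : ℕ} (hinj : Function.Injective f) (h1 : f 1 = 0)
    (h : DispOK f B) : DispOK (P2f f) (B + 2) := by
  intro i hi
  match i with
  | 0 => right; right; rfl
  | 1 => right; left; rfl
  | (w+2) =>
      have e : P2f f (w+2) = if f w = 0 then 1 else f w + 2 := rfl
      rw [e]
      by_cases hw : f w = 0
      · have : w = 1 := hinj (by rw [hw, h1])
        subst this
        rw [if_pos hw]
        left; rfl
      · rw [if_neg hw]
        have := h w (by omega)
        push_cast at this ⊢
        omega

lemma pmf_disp (s : List Code) : DispOK (pmf s) (wlen s) := by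
  induction s with
  | nil => intro i hi; simp at hi
  | cons x s ih =>
      cases x with
      | b3 =>
          have := P3_disp ih
          intro i hi
          exact this i (by simp [clen] at hi ⊢; omega)
      | b4 =>
          have := P4_disp ih
          intro i hi
          exact this i (by simp [clen] at hi ⊢; omega)
      | odd k =>
          have hchain : ∀ k', DispOK (pmf (odd k' :: s)) (wlen s + (2*k'+5)) := by
            intro k'
            induction k' with
            | zero =>
                have h0 : DispOK (pmf (b3 :: s)) (wlen s + 3) := P3_disp ih
                have := P2_disp (f := pmf (b3 :: s)) (pmf_inj _) rfl h0
                exact fun i hi => this i (by omega)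
            | succ k' ihk =>
                have := P2_disp (f := pmf (odd k' :: s)) (pmf_inj _) (oddP_one k' (pmf s)) ihk
                exact fun i hi => this i (by omega)
          intro i hi
          exact hchain k i (by simp [clen] at hi ⊢; omega)

lemma pmf_ext (s : List Code) (hne : s ≠ []) (hhd : ∀ t, s ≠ b4 :: t) :
    pmf (ext s) = P2f (pmf s) ∧ wlen (ext s) = wlen s + 2 := by
  cases s with
  | nil => exact absurd rfl hne
  | cons x t =>
      cases x with
      | b3 => exact ⟨rfl, by simp [ext, clen]; omega⟩
      | b4 => exact absurd rfl (hhd t)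
      | odd k => exact ⟨rfl, by simp [ext, clen]; omega⟩

lemma pmf_full_surj : ∀ m : ℕ, ∀ f : ℕ → ℕ, Function.Bijective f →
    (∀ i, m ≤ i → f i = i) → DispOK f m → ∃ s, wlen s = m ∧ pmf s = f := by
  intro m
  induction m using Nat.strong_induction_on with
  | _ m IH =>
  intro f hbij hid hdisp
  obtain ⟨hinj, hsurj⟩ := hbij
  rcases Nat.eq_zero_or_pos m with rfl | hm1
  · exact ⟨[], rfl, funext fun i => (hid i (by omega)).symm⟩
  have hflt : ∀ i, i < m → f i < m := by
    intro i him
    by_contra hge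
    have h1 : f (f i) = f i := hid (f i) (by omega)
    have := hinj h1
    omega
  have hpre : ∀ v, v < m → ∃ j, j < m ∧ f j = v ∧
      ((v:ℤ) - j = -2 ∨ (v:ℤ) - j = -1 ∨ (v:ℤ) - j = 2) := by
    intro v hv
    obtain ⟨j, hj⟩ := hsurj v
    have hjm : j < m := by
      by_contra h
      rw [hid j (by omega)] at hj
      omega
    have hd := hdisp j hjm
    rw [hj] at hd
    exact ⟨j, hjm, hj, hd⟩
  have hf0 : f 0 = 2 := by have := hdisp 0 (by omega); omega
  have hm3 : 3 ≤ m := by have := hflt 0 (by omega); omega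
  have hf1 : f 1 = 0 ∨ f 1 = 3 := by have := hdisp 1 (by omega); omega
  rcases hf1 with hf1 | hf1
  · -- f 1 = 0
    have hf2 : f 2 = 1 ∨ f 2 = 4 := by
      have hd := hdisp 2 (by omega)
      have h0 : f 2 ≠ 0 := fun h => by have := hinj (h.trans hf1.symm); omega
      omega
    rcases hf2 with hf2 | hf2
    · -- b3 block
      have hge3 : ∀ i : ℕ, 3 ≤ f (i+3) := by
        intro i
        have h0 : f (i+3) ≠ 0 := fun h => by have := hinj (h.trans hf1.symm); omega
        have h1 : f (i+3) ≠ 1 := fun h => by have := hinj (h.trans hf2.symm); omega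
        have h2 : f (i+3) ≠ 2 := fun h => by have := hinj (h.trans hf0.symm); omega
        omega
      set f' : ℕ → ℕ := fun i => f (i+3) - 3 with hf'
      have hbij' : Function.Bijective f' := by
        constructor
        · intro a b hab
          simp only [hf'] at hab
          have ha := hge3 a
          have hb := hge3 b
          have : f (a+3) = f (b+3) := by omega
          have := hinj this
          omega
        · intro v
          obtain ⟨j, hj⟩ := hsurj (v+3)
          have hj0 : j ≠ 0 := by rintro rfl; rw [hf0] at hj; omega
          have hj1 : j ≠ 1 := by rintro rfl; rw [hf1] at hj; omega
          have hj2 : j ≠ 2 := by rintro rfl; rw [hf2] at hj; omega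
          obtain ⟨u, rfl⟩ : ∃ u, j = u + 3 := ⟨j - 3, by omega⟩
          exact ⟨u, by simp only [hf']; omega⟩
      have hid' : ∀ i, m - 3 ≤ i → f' i = i := by
        intro i hi
        simp only [hf']
        rw [hid (i+3) (by omega)]
        omega
      have hdisp' : DispOK f' (m - 3) := by
        intro i hi
        have hd := hdisp (i+3) (by omega)
        have hc : ((f' i : ℕ) : ℤ) = ((f (i+3) : ℕ) : ℤ) - 3 := by
          simp only [hf']
          have := hge3 i
          push_cast [Nat.cast_sub this]
          ring
        rw [hc]
        push_cast at hd ⊢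
        omega
      obtain ⟨s', hs'len, hs'pmf⟩ := IH (m - 3) (by omega) f' hbij' hid' hdisp'
      refine ⟨b3 :: s', by simp [clen]; omega, ?_⟩
      show P3f (pmf s') = f
      rw [hs'pmf]
      funext i
      match i with
      | 0 => show 2 = f 0; rw [hf0]
      | 1 => show 0 = f 1; rw [hf1]
      | 2 => show 1 = f 2; rw [hf2]
      | (w+3) =>
          show f' w + 3 = f (w+3)
          simp only [hf']
          have := hge3 w
          omega
    · -- odd extension : f 2 = 4
      have hm5 : 5 ≤ m := by have := hflt 2 (by omega); omega
      have hf3 : f 3 = 1 := by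
        obtain ⟨j, hjm, hj, hjd⟩ := hpre 1 (by omega)
        have hj23 : j = 2 ∨ j = 3 := by omega
        rcases hj23 with rfl | rfl
        · rw [hf2] at hj; omega
        · exact hj
      set f' : ℕ → ℕ := fun i => if i = 1 then 0 else f (i+2) - 2 with hf'
      have hge2 : ∀ i : ℕ, 2 ≤ f (i+2) ∧ f (i+2) ≠ 2 ∨ i = 1 := by
        intro i
        by_cases hi : i = 1
        · right; exact hi
        left
        have h0 : f (i+2) ≠ 0 := fun h => by have := hinj (h.trans hf1.symm); omega
        have h1 : f (i+2) ≠ 1 := fun h => by have := hinj (h.trans hf3.symm); omega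
        have h2 : f (i+2) ≠ 2 := fun h => by have := hinj (h.trans hf0.symm); omega
        omega
      have hge3' : ∀ i : ℕ, i ≠ 1 → 3 ≤ f (i+2) := by
        intro i hi
        rcases hge2 i with ⟨h1, h2⟩ | h
        · omega
        · exact absurd h hi
      have hbij' : Function.Bijective f' := by
        constructor
        · intro a b hab
          simp only [hf'] at hab
          by_cases ha : a = 1 <;> by_cases hb : b = 1
          · omega
          · rw [if_pos ha, if_neg hb] at hab
            have := hge3' b hb
            omega
          · rw [if_neg ha, if_pos hb] at hab
            have := hge3' a ha
            omega
          · rw [if_neg ha, if_neg hb] at hab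
            have h3a := hge3' a ha
            have h3b := hge3' b hb
            have : f (a+2) = f (b+2) := by omega
            have := hinj this
            omega
        · intro v
          rcases Nat.eq_zero_or_pos v with rfl | hv
          · exact ⟨1, by simp [hf']⟩
          obtain ⟨j, hj⟩ := hsurj (v+2)
          have hj0 : j ≠ 0 := by rintro rfl; rw [hf0] at hj; omega
          have hj1 : j ≠ 1 := by rintro rfl; rw [hf1] at hj; omega
          have hj3 : j ≠ 3 := by rintro rfl; rw [hf3] at hj; omega
          obtain ⟨u, rfl⟩ : ∃ u, j = u + 2 := ⟨j - 2, by omega⟩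
          have hu1 : u ≠ 1 := by omega
          refine ⟨u, ?_⟩
          simp only [hf', if_neg hu1]
          omega
      have hid' : ∀ i, m - 2 ≤ i → f' i = i := by
        intro i hi
        have hi1 : i ≠ 1 := by omega
        simp only [hf', if_neg hi1]
        rw [hid (i+2) (by omega)]
        omega
      have hdisp' : DispOK f' (m - 2) := by
        intro i hi
        by_cases hi1 : i = 1
        · subst hi1
          right; left
          simp [hf']
        rcases Nat.eq_zero_or_pos i with rfl | hipos
        · right; right
          simp [hf', hf2]
        have hd := hdisp (i+2) (by omega)
        have h3 := hge3' i hi1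
        have hc : ((f' i : ℕ) : ℤ) = ((f (i+2) : ℕ) : ℤ) - 2 := by
          simp only [hf', if_neg hi1]
          push_cast [Nat.cast_sub (by omega : 2 ≤ f (i+2))]
          ring
        rw [hc]
        push_cast at hd ⊢
        omega
      obtain ⟨s', hs'len, hs'pmf⟩ := IH (m - 2) (by omega) f' hbij' hid' hdisp'
      have hne : s' ≠ [] := by
        rintro rfl
        have := congrFun hs'pmf 1
        simp [pmf, hf'] at this
      have hhd : ∀ t, s' ≠ b4 :: t := by
        rintro t rfl
        have := congrFun hs'pmf 1
        rw [pmf_one] at this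
        simp [hf'] at this
      obtain ⟨he1, he2⟩ := pmf_ext s' hne hhd
      refine ⟨ext s', by rw [he2]; omega, ?_⟩
      rw [he1, hs'pmf]
      funext i
      match i with
      | 0 => show 2 = f 0; rw [hf0]
      | 1 => show 0 = f 1; rw [hf1]
      | (w+2) =>
          show (if f' w = 0 then 1 else f' w + 2) = f (w+2)
          by_cases hw : w = 1
          · subst hw
            rw [if_pos (by simp [hf'])]
            rw [show (1:ℕ)+2 = 3 from rfl, hf3]
          · have h3 := hge3' w hw
            have hv : f' w = f (w+2) - 2 := by simp [hf', hw]
            rw [hv, if_neg (by omega)]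
            omega
  · -- f 1 = 3 : b4 block
    have hm4 : 4 ≤ m := by have := hflt 1 (by omega); omega
    have hf2 : f 2 = 0 := by
      obtain ⟨j, hjm, hj, hjd⟩ := hpre 0 (by omega)
      have hj12 : j = 1 ∨ j = 2 := by omega
      rcases hj12 with rfl | rfl
      · rw [hf1] at hj; omega
      · exact hj
    have hf3 : f 3 = 1 := by
      obtain ⟨j, hjm, hj, hjd⟩ := hpre 1 (by omega)
      have hj23 : j = 2 ∨ j = 3 := by omega
      rcases hj23 with rfl | rfl
      · rw [hf2] at hj; omega
      · exact hj
    have hge4 : ∀ i : ℕ, 4 ≤ f (i+4) := by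
      intro i
      have h0 : f (i+4) ≠ 0 := fun h => by have := hinj (h.trans hf2.symm); omega
      have h1 : f (i+4) ≠ 1 := fun h => by have := hinj (h.trans hf3.symm); omega
      have h2 : f (i+4) ≠ 2 := fun h => by have := hinj (h.trans hf0.symm); omega
      have h3 : f (i+4) ≠ 3 := fun h => by have := hinj (h.trans hf1.symm); omega
      omega
    set f' : ℕ → ℕ := fun i => f (i+4) - 4 with hf'
    have hbij' : Function.Bijective f' := by
      constructor
      · intro a b hab
        simp only [hf'] at hab
        have ha := hge4 a
        have hb := hge4 b
        have : f (a+4) = f (b+4) := by omega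
        have := hinj this
        omega
      · intro v
        obtain ⟨j, hj⟩ := hsurj (v+4)
        have hj0 : j ≠ 0 := by rintro rfl; rw [hf0] at hj; omega
        have hj1 : j ≠ 1 := by rintro rfl; rw [hf1] at hj; omega
        have hj2 : j ≠ 2 := by rintro rfl; rw [hf2] at hj; omega
        have hj3 : j ≠ 3 := by rintro rfl; rw [hf3] at hj; omega
        obtain ⟨u, rfl⟩ : ∃ u, j = u + 4 := ⟨j - 4, by omega⟩
        exact ⟨u, by simp only [hf']; omega⟩
    have hid' : ∀ i, m - 4 ≤ i → f' i = i := by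
      intro i hi
      simp only [hf']
      rw [hid (i+4) (by omega)]
      omega
    have hdisp' : DispOK f' (m - 4) := by
      intro i hi
      have hd := hdisp (i+4) (by omega)
      have hc : ((f' i : ℕ) : ℤ) = ((f (i+4) : ℕ) : ℤ) - 4 := by
        simp only [hf']
        push_cast [Nat.cast_sub (hge4 i)]
        ring
      rw [hc]
      push_cast at hd ⊢
      omega
    obtain ⟨s', hs'len, hs'pmf⟩ := IH (m - 4) (by omega) f' hbij' hid' hdisp'
    refine ⟨b4 :: s', by simp [clen]; omega, ?_⟩
    show P4f (pmf s') = f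
    rw [hs'pmf]
    funext i
    match i with
    | 0 => show 2 = f 0; rw [hf0]
    | 1 => show 3 = f 1; rw [hf1]
    | 2 => show 0 = f 2; rw [hf2]
    | 3 => show 1 = f 3; rw [hf3]
    | (w+4) =>
        show f' w + 4 = f (w+4)
        simp only [hf']
        have := hge4 w
        omega

lemma wfun_tail_vals {u : List Code} {n : ℕ} (hu : wlen u = n + 4) :
    ∀ j : ℤ, (n:ℤ) ≤ j →
      wfun u j = if j = (n:ℤ)+1 ∨ j = (n:ℤ)+2 then true else false := by
  have hne : u ≠ [] := by rintro rfl; simp at hu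
  obtain ⟨h3, hE1, hE2, hE3, hE4⟩ := wfun_end u hne
  have hup := (good_wfun u).2.2.2
  intro j hj
  have hcast : ((wlen u : ℤ)) = (n:ℤ) + 4 := by rw [hu]; push_cast; ring
  by_cases h1 : j = (n:ℤ)+1
  · subst h1
    rw [if_pos (by left; rfl)]
    rw [show (n:ℤ)+1 = (wlen u : ℤ) - 3 by omega]
    exact hE3
  by_cases h2 : j = (n:ℤ)+2
  · subst h2
    rw [if_pos (by right; rfl)]
    rw [show (n:ℤ)+2 = (wlen u : ℤ) - 2 by omega]
    exact hE2
  rw [if_neg (by tauto)]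
  by_cases h0 : j = (n:ℤ)
  · subst h0
    rw [show (n:ℤ) = (wlen u : ℤ) - 4 by omega]
    exact hE4 (by omega)
  by_cases h3' : j = (n:ℤ)+3
  · subst h3'
    rw [show (n:ℤ)+3 = (wlen u : ℤ) - 1 by omega]
    exact hE1
  · exact hup j (by omega)

def cfgMap (n : ℕ) (s : {s : List Code // wlen s = n + 4}) :
    {c : ℤ → Bool // RivieraConfig n c ∧ RivieraMaximal n c} :=
  ⟨trunc n (wfun s.1), trunc_good s.2⟩

lemma cfgMap_bij (n : ℕ) : Function.Bijective (cfgMap n) := by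
  constructor
  · rintro ⟨s, hs⟩ ⟨t, ht⟩ h
    have hval : trunc n (wfun s) = trunc n (wfun t) := congrArg Subtype.val h
    have hw : wfun s = wfun t := by
      funext j
      by_cases hj : j < (n:ℤ)
      · have := congrFun hval j
        rwa [show trunc n (wfun s) j = wfun s j from if_neg (by omega),
          show trunc n (wfun t) j = wfun t j from if_neg (by omega)] at this
      · rw [wfun_tail_vals hs j (by omega), wfun_tail_vals ht j (by omega)]
    exact Subtype.ext (wfun_inj s t hw)
  · rintro ⟨c, hconf, hmax⟩
    obtain ⟨s, hslen, hseq⟩ := trunc_surj n c hconf hmax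
    exact ⟨⟨s, hslen⟩, Subtype.ext hseq⟩

def RPred (n : ℕ) (π : Equiv.Perm (Fin (n + 4))) : Prop :=
  ∀ i : Fin (n + 4),
    ((π i : ℕ) : ℤ) - ((i : ℕ) : ℤ) = -2 ∨
    ((π i : ℕ) : ℤ) - ((i : ℕ) : ℤ) = -1 ∨
    ((π i : ℕ) : ℤ) - ((i : ℕ) : ℤ) = 2

noncomputable def toPermFin (s : List Code) (n : ℕ) (hs : wlen s = n + 4) : Equiv.Perm (Fin (n + 4)) :=
  Equiv.ofBijective
    (fun i => ⟨pmf s i, by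
      have := pmf_lt s (i := (i : ℕ)) (by rw [hs]; exact i.isLt)
      rwa [hs] at this⟩)
    (by
      have hinj : Function.Injective
          (fun i : Fin (n+4) => (⟨pmf s i, by
            have := pmf_lt s (i := (i : ℕ)) (by rw [hs]; exact i.isLt)
            rwa [hs] at this⟩ : Fin (n+4))) := by
        intro a b hab
        exact Fin.ext (pmf_inj s (congrArg Fin.val hab))
      exact Finite.injective_iff_bijective.1 hinj)

lemma toPermFin_apply (s : List Code) (n : ℕ) (hs : wlen s = n + 4) (i : Fin (n+4)) :
    (toPermFin s n hs i : ℕ) = pmf s i := rfl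

noncomputable def prmMap (n : ℕ) (s : {s : List Code // wlen s = n + 4}) :
    {π : Equiv.Perm (Fin (n + 4)) // RPred n π} :=
  ⟨toPermFin s.1 n s.2, by
    intro i
    rw [toPermFin_apply]
    have := pmf_disp s.1 (i : ℕ) (by rw [s.2]; exact i.isLt)
    exact this⟩

lemma prmMap_bij (n : ℕ) : Function.Bijective (prmMap n) := by
  constructor
  · rintro ⟨s, hs⟩ ⟨t, ht⟩ h
    have hval : toPermFin s n hs = toPermFin t n ht := congrArg Subtype.val h
    have hw : pmf s = pmf t := by
      funext i
      by_cases hi : i < n + 4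
      · have := DFunLike.congr_fun hval ⟨i, hi⟩
        have h2 := congrArg Fin.val this
        rwa [toPermFin_apply, toPermFin_apply] at h2
      · rw [pmf_id s i (by omega), pmf_id t i (by omega)]
    exact Subtype.ext (pmf_list_inj s t hw)
  · rintro ⟨π, hR⟩
    set fN : ℕ → ℕ := fun i => if h : i < n + 4 then (π ⟨i, h⟩ : ℕ) else i with hfN
    have hval : ∀ (i : ℕ) (h : i < n + 4), fN i = (π ⟨i, h⟩ : ℕ) := by
      intro i h
      simp only [hfN, dif_pos h]
    have hvalge : ∀ i : ℕ, n + 4 ≤ i → fN i = i := by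
      intro i h
      simp only [hfN, dif_neg (by omega : ¬ i < n + 4)]
    have hbij : Function.Bijective fN := by
      set gN : ℕ → ℕ := fun i => if h : i < n + 4 then (π.symm ⟨i, h⟩ : ℕ) else i with hgN
      have hgf : ∀ i, gN (fN i) = i := by
        intro i
        by_cases h : i < n + 4
        · rw [hval i h]
          have hlt : ((π ⟨i, h⟩ : Fin (n+4)) : ℕ) < n + 4 := (π ⟨i, h⟩).isLt
          simp only [hgN, dif_pos hlt]
          have : (⟨(π ⟨i, h⟩ : ℕ), hlt⟩ : Fin (n+4)) = π ⟨i, h⟩ := rfl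
          rw [this, Equiv.symm_apply_apply]
        · rw [hvalge i (by omega)]
          simp only [hgN, dif_neg h]
      have hfg : ∀ i, fN (gN i) = i := by
        intro i
        by_cases h : i < n + 4
        · simp only [hgN, dif_pos h]
          have hlt : ((π.symm ⟨i, h⟩ : Fin (n+4)) : ℕ) < n + 4 := (π.symm ⟨i, h⟩).isLt
          rw [hval _ hlt]
          have : (⟨(π.symm ⟨i, h⟩ : ℕ), hlt⟩ : Fin (n+4)) = π.symm ⟨i, h⟩ := rfl
          rw [this, Equiv.apply_symm_apply]
        · simp only [hgN, dif_neg h]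
          rw [hvalge i (by omega)]
      exact ⟨Function.LeftInverse.injective hgf, Function.RightInverse.surjective hfg⟩
    have hdisp : DispOK fN (n + 4) := by
      intro i hi
      rw [hval i hi]
      exact hR ⟨i, hi⟩
    obtain ⟨s, hslen, hspmf⟩ := pmf_full_surj (n + 4) fN hbij hvalge hdisp
    refine ⟨⟨s, hslen⟩, Subtype.ext ?_⟩
    apply Equiv.ext
    intro x
    apply Fin.ext
    show pmf s (x : ℕ) = _
    rw [hspmf, hval (x : ℕ) x.isLt]

end Riv

theorem rivieraCount_eq_restrictedPermCount (n : ℕ) :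
    Nat.card {c : ℤ → Bool // RivieraConfig n c ∧ RivieraMaximal n c} =
      Nat.card {π : Equiv.Perm (Fin (n + 4)) //
        ∀ i : Fin (n + 4),
          ((π i : ℕ) : ℤ) - ((i : ℕ) : ℤ) = -2 ∨
          ((π i : ℕ) : ℤ) - ((i : ℕ) : ℤ) = -1 ∨
          ((π i : ℕ) : ℤ) - ((i : ℕ) : ℤ) = 2} := by
  have e1 := Nat.card_congr (Equiv.ofBijective _ (Riv.cfgMap_bij n))
  have e2 := Nat.card_congr (Equiv.ofBijective _ (Riv.prmMap_bij n))
  rw [← e1]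
  exact e2
end

section
/- Fix k ≥ 1. The set of pairs (n, c), where n ∈ ℕ and c is a maximal Riviera configuration of length n having exactly k occupied lots, is finite, and its cardinality equals the number of closed walks of length k+4 on the graph P starting and ending at vertex 0, i.e. the number of functions w : {0, 1, …, k+4} → {0, 1, 2} with w(0) = 0, w(k+4) = 0, and (w(t), w(t+1)) an edge of P for every 0 ≤ t < k+4. -/
/-- The number of occupied lots of a configuration of length `n`. -/
noncomputable def rivieraOccupancy (n : ℕ) (c : ℤ → Bool) : ℕ :=
  ((Finset.Ico (0 : ℤ) (n : ℤ)).filter fun j => c j = true).card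

/-- The edge relation of the path graph on `{0,1,2}` with a loop added at `2`. -/
def PEdge (a b : Fin 3) : Prop :=
  (a = 0 ∧ b = 1) ∨ (a = 1 ∧ b = 0) ∨ (a = 1 ∧ b = 2) ∨ (a = 2 ∧ b = 1) ∨ (a = 2 ∧ b = 2)

/-!
Encode each house of a configuration by a vertex of `P` recording how many empty lots precede
it: none (`1`), one (`2`) or two (`0`). Maximality only constrains windows of five consecutive
lots, and in this encoding it says exactly that consecutive houses are joined by edges of `P`: a
pair of houses cannot be followed by a third (no loop at `1`), and a double gap must lie between
two pairs (`0` is adjacent only to `1`). Two virtual houses and an empty lot in front of the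
configuration account for the first step `0 → 1` of the walk. If the last house is entered by a
step into `v`, the configuration ends with no empty lot (possible iff `v ≠ 0`) or with one
(possible iff `v = 1`); these endings are as many as the walks `v → 2 → 1 → 0` and
`1 → 0 → 1 → 0` that form the last three steps.
-/

namespace Riviera

/-- The lot `x`, with left neighbours `a b` and right neighbours `c d`, is not the middle of three
houses and, if empty, cannot take a house. -/
def goodWindow (a b x c d : Bool) : Bool :=
  !(b && x && c) && (x || (c && d) || (b && c) || (a && b))

theorem goodWindow_eq_true {a b x c d : Bool} :
    goodWindow a b x c d = true ↔
      ¬(b = true ∧ x = true ∧ c = true) ∧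
        (x = false → (c = true ∧ d = true) ∨ (b = true ∧ c = true) ∨ (a = true ∧ b = true)) := by
  cases a <;> cases b <;> cases x <;> cases c <;> cases d <;> decide

theorem rivieraPermissible_update_iff {c : ℤ → Bool} {j : ℤ} (hc : RivieraPermissible c)
    (hj : c j = false) :
    RivieraPermissible (Function.update c j true) ↔
      ¬((c (j + 1) = true ∧ c (j + 2) = true) ∨ (c (j - 1) = true ∧ c (j + 1) = true) ∨
        (c (j - 2) = true ∧ c (j - 1) = true)) := by
  simp only [RivieraPermissible, not_iff_not, Function.update_apply]
  constructor
  · rintro ⟨i, h₁, h₂, h₃⟩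
    split_ifs at h₁ h₂ h₃ <;> try omega
    · obtain rfl : i = j + 1 := by omega
      exact Or.inl ⟨h₂, by rwa [add_assoc] at h₃⟩
    · obtain rfl : i = j := by omega
      exact Or.inr (Or.inl ⟨h₁, h₃⟩)
    · obtain rfl : i = j - 1 := by omega
      exact Or.inr (Or.inr ⟨by rwa [sub_sub] at h₁, h₂⟩)
    · exact (hc ⟨i, h₁, h₂, h₃⟩).elim
  · rintro (⟨h₁, h₂⟩ | ⟨h₁, h₂⟩ | ⟨h₁, h₂⟩)
    · exact ⟨j + 1, by simp, by simp [h₁], by simp [add_assoc, h₂]⟩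
    · exact ⟨j, by simp [h₁], by simp, by simp [h₂]⟩
    · exact ⟨j - 1, by simp [sub_sub, h₁], by simp [h₂], by simp⟩

theorem rivieraPermissible_iff {n : ℕ} {c : ℤ → Bool} (hc : RivieraConfig n c) :
    RivieraPermissible c ↔
      ∀ j : ℤ, 0 ≤ j → j < n → ¬(c (j - 1) = true ∧ c j = true ∧ c (j + 1) = true) := by
  refine ⟨fun h j _ _ hj => h ⟨j, hj⟩, fun h ⟨j, hj⟩ => ?_⟩
  by_cases hjn : 0 ≤ j ∧ j < n
  · exact h j hjn.1 hjn.2 hj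
  · simp [hc j (by omega)] at hj

theorem rivieraMaximal_iff_goodWindow {n : ℕ} {c : ℤ → Bool} (hc : RivieraConfig n c) :
    RivieraMaximal n c ↔ ∀ j : ℤ, 0 ≤ j → j < n →
      goodWindow (c (j - 2)) (c (j - 1)) (c j) (c (j + 1)) (c (j + 2)) = true := by
  simp only [goodWindow_eq_true]
  constructor
  · rintro ⟨hp, hmax⟩ j h₀ hn
    refine ⟨(rivieraPermissible_iff hc).1 hp j h₀ hn, fun hj => ?_⟩
    by_contra hw
    exact hmax j h₀ hn hj ((rivieraPermissible_update_iff hp hj).2 hw)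
  · intro h
    have hp := (rivieraPermissible_iff hc).2 fun j h₀ hn => (h j h₀ hn).1
    refine ⟨hp, fun j h₀ hn hj => ?_⟩
    rw [rivieraPermissible_update_iff hp hj, not_not]
    exact (h j h₀ hn).2 hj

def configOf (w : List Bool) : ℤ → Bool
  | .ofNat i => w.getD i false
  | .negSucc _ => false

theorem configOf_natCast (w : List Bool) (i : ℕ) : configOf w i = w.getD i false := rfl

theorem rivieraConfig_configOf (w : List Bool) : RivieraConfig w.length (configOf w) := by
  rintro (i | i) h
  · rw [Int.ofNat_eq_natCast] at h
    exact List.getD_eq_default _ _ (by omega)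
  · rfl

theorem configOf_ofFn {n : ℕ} {c : ℤ → Bool} (hc : RivieraConfig n c) :
    configOf (List.ofFn fun i : Fin n => c i) = c := by
  funext j
  rcases j with i | i
  · by_cases hi : i < n
    · simp [configOf, hi]
    · simp [configOf, hi, hc i (by omega)]
  · exact (hc _ (Or.inl (Int.negSucc_lt_zero i))).symm

theorem length_configOf_injective :
    Function.Injective fun w : List Bool => (w.length, configOf w) := by
  intro v w h
  obtain ⟨hlen, hc⟩ := Prod.mk.inj h
  refine List.ext_getElem hlen fun i hv hw => ?_
  have := congrFun hc i
  rwa [configOf_natCast, configOf_natCast, List.getD_eq_getElem _ _ hv,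
    List.getD_eq_getElem _ _ hw] at this

theorem rivieraOccupancy_eq_card_filter (n : ℕ) (c : ℤ → Bool) :
    rivieraOccupancy n c = (Finset.univ.filter fun i : Fin n => c i = true).card := by
  unfold rivieraOccupancy
  symm
  apply Finset.card_bij (fun (i : Fin n) _ => ((i : ℕ) : ℤ))
  · intro i hi
    simp only [Finset.mem_filter, Finset.mem_univ, true_and] at hi
    simp [hi]
  · intro a _ b _ h
    exact Fin.ext (by exact_mod_cast h)
  · intro j hj
    simp only [Finset.mem_filter, Finset.mem_Ico] at hj
    refine ⟨⟨j.toNat, by omega⟩, by simp [Int.toNat_of_nonneg hj.1.1, hj.2], Int.toNat_of_nonneg hj.1.1⟩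

theorem rivieraOccupancy_configOf (w : List Bool) :
    rivieraOccupancy w.length (configOf w) = w.count true := by
  rw [rivieraOccupancy_eq_card_filter]
  convert Fin.card_filter_univ_eq_vector_get_eq_count true ⟨w, rfl⟩ using 3
  · simp [configOf_natCast, List.Vector.get]
  · rfl

/-- `w`, preceded by the lots `a b` and followed by empty lots, passes `goodWindow` at each of its
own lots. -/
def maximalAfter : Bool → Bool → List Bool → Bool
  | _, _, [] => true
  | a, b, x :: w => goodWindow a b x (w.getD 0 false) (w.getD 1 false) && maximalAfter b x w

def goodPrefix (u : List Bool) : Bool :=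
  goodWindow (u.getD 0 false) (u.getD 1 false) (u.getD 2 false) (u.getD 3 false) (u.getD 4 false)

theorem maximalAfter_iff {a b : Bool} {w : List Bool} :
    maximalAfter a b w = true ↔ ∀ i < w.length, goodPrefix ((a :: b :: w).drop i) = true := by
  induction w generalizing a b with
  | nil => simp [maximalAfter]
  | cons x w ih =>
    simp only [List.length_cons, Nat.forall_lt_succ_left, List.drop_succ_cons, ← ih]
    simp [maximalAfter, goodPrefix]

theorem configOf_eq_getD (w : List Bool) (j : ℤ) :
    configOf w j = (false :: false :: w).getD (j + 2).toNat false := by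
  rcases j with i | i
  · rw [Int.ofNat_eq_natCast, show ((i : ℤ) + 2).toNat = i + 2 by omega]
    rfl
  · obtain h | h : (Int.negSucc i + 2).toNat = 0 ∨ (Int.negSucc i + 2).toNat = 1 := by omega
    all_goals simp [configOf, h]

theorem rivieraMaximal_configOf_iff (w : List Bool) :
    RivieraMaximal w.length (configOf w) ↔ maximalAfter false false w = true := by
  have window (i : ℕ) : goodPrefix ((false :: false :: w).drop i) =
      goodWindow (configOf w (i - 2)) (configOf w (i - 1)) (configOf w i) (configOf w (i + 1))
        (configOf w (i + 2)) := by
    have shift (k : ℕ) : ((false :: false :: w).drop i).getD k false = configOf w (i + k - 2) := by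
      rw [configOf_eq_getD, List.getD_eq_getElem?_getD, List.getElem?_drop,
        ← List.getD_eq_getElem?_getD, show ((i : ℤ) + k - 2 + 2).toNat = i + k by omega]
    simp only [goodPrefix, shift]
    push_cast
    ring_nf
  rw [rivieraMaximal_iff_goodWindow (rivieraConfig_configOf w), maximalAfter_iff]
  constructor
  · intro h i hi
    rw [window]
    exact h i (by omega) (by omega)
  · intro h j h₀ hj
    lift j to ℕ using h₀
    rw [← window]
    exact h j (by omega)

/-- The lots contributed by a step into `v`: a house preceded by two, no or one empty lot. -/
def stepWord : Fin 3 → List Bool := ![[false, false, true], [true], [false, true]]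

/-- `w` may follow a house entered by a step into `v`. The two lots before that house are encoded
by their contents: the nearer one is occupied iff `v = 1`, the farther one iff `v = 2`; when
`v = 0` the nearer empty lot still needs the next house to follow at once. -/
def validAfter (v : Fin 3) (w : List Bool) : Bool :=
  maximalAfter false (decide (v = 2)) (decide (v = 1) :: true :: w)

theorem validAfter_stepWord_append (v u : Fin 3) (w : List Bool) :
    validAfter v (stepWord u ++ w) = true ↔ PEdge v u ∧ validAfter u w = true := by
  fin_cases v <;> fin_cases u <;> rcases w with _ | ⟨a, _ | ⟨b, w⟩⟩ <;>
    simp [validAfter, stepWord, maximalAfter, goodWindow, PEdge]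

theorem validAfter_cases {v : Fin 3} {w : List Bool} (h : validAfter v w = true) :
    w = [] ∨ w = [false] ∨ ∃ u w', w = stepWord u ++ w' := by
  rcases w with _ | ⟨_ | _, w⟩
  · exact Or.inl rfl
  · rcases w with _ | ⟨_ | _, w⟩
    · exact Or.inr (Or.inl rfl)
    · rcases w with _ | ⟨_ | _, w⟩
      · fin_cases v <;> simp [validAfter, maximalAfter, goodWindow] at h
      · fin_cases v <;> simp [validAfter, maximalAfter, goodWindow] at h
      · exact Or.inr (Or.inr ⟨0, w, rfl⟩)
    · exact Or.inr (Or.inr ⟨2, w, rfl⟩)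
  · exact Or.inr (Or.inr ⟨1, w, rfl⟩)

theorem count_stepWord_append (u : Fin 3) (w : List Bool) :
    (stepWord u ++ w).count true = w.count true + 1 := by
  fin_cases u <;> simp [stepWord]

theorem stepWord_append_inj {u u' : Fin 3} {w w' : List Bool}
    (h : stepWord u ++ w = stepWord u' ++ w') : u = u' ∧ w = w' := by
  fin_cases u <;> fin_cases u' <;> simp_all [stepWord]

def Continuation (v : Fin 3) (k : ℕ) : Type :=
  {w : List Bool // validAfter v w = true ∧ w.count true = k}

noncomputable def continuationSuccEquiv (v : Fin 3) (k : ℕ) :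
    Continuation v (k + 1) ≃ Σ u : {u // PEdge v u}, Continuation u k :=
  .symm <| .ofBijective
    (fun p => ⟨stepWord p.1 ++ p.2.1, (validAfter_stepWord_append _ _ _).2 ⟨p.1.2, p.2.2.1⟩,
      by rw [count_stepWord_append, p.2.2.2]⟩) <| by
    constructor
    · rintro ⟨⟨u, hu⟩, ⟨w, hw⟩⟩ ⟨⟨u', hu'⟩, ⟨w', hw'⟩⟩ h
      obtain ⟨rfl, rfl⟩ := stepWord_append_inj (congrArg Subtype.val h)
      rfl
    · rintro ⟨w, hw, hk⟩
      obtain rfl | rfl | ⟨u, w', rfl⟩ := validAfter_cases hw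
      · simp at hk
      · simp at hk
      obtain ⟨hu, hw'⟩ := (validAfter_stepWord_append _ _ _).1 hw
      rw [count_stepWord_append, Nat.add_right_cancel_iff] at hk
      exact ⟨⟨⟨u, hu⟩, ⟨w', hw', hk⟩⟩, rfl⟩

instance : DecidableRel PEdge := fun a b => by unfold PEdge; infer_instance

def PWalk (v : Fin 3) (m : ℕ) : Type :=
  {ω : Fin (m + 1) → Fin 3 //
    ω 0 = v ∧ ω (Fin.last m) = 0 ∧ ∀ t : Fin m, PEdge (ω t.castSucc) (ω t.succ)}

instance (v : Fin 3) (m : ℕ) : Fintype (PWalk v m) := by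
  unfold PWalk
  infer_instance

def pWalkSuccEquiv (v : Fin 3) (m : ℕ) :
    PWalk v (m + 1) ≃ Σ u : {u // PEdge v u}, PWalk u m where
  toFun ω := ⟨⟨ω.1 1, by simpa [← ω.2.1] using ω.2.2.2 0⟩, Fin.tail ω.1, rfl,
    by simpa [Fin.tail] using ω.2.2.1, fun t => by simpa [Fin.tail] using ω.2.2.2 t.succ⟩
  invFun p := ⟨Fin.cons v p.2.1, rfl, by simpa using p.2.2.2.1,
    Fin.cases (by simpa [← p.2.2.1] using p.1.2) (by simpa using p.2.2.2.2)⟩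
  left_inv ω := Subtype.ext <| by
    conv_rhs => rw [← Fin.cons_self_tail ω.1, ω.2.1]
  right_inv p :=
    Sigma.subtype_ext (Subtype.ext p.2.2.1) (Fin.tail_cons (α := fun _ => Fin 3) v _)

theorem nonempty_continuation_equiv_pWalk (k : ℕ) (v : Fin 3) :
    Nonempty (Continuation v k ≃ PWalk v (k + 3)) := by
  induction k generalizing v with
  | zero =>
    let ends : Finset (List Bool) := ({[], [false]} : Finset _).filter (validAfter v ·)
    have hends : Continuation v 0 ≃ ends := Equiv.subtypeEquivRight fun w => by
      constructor
      · rintro ⟨hw, hk⟩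
        obtain rfl | rfl | ⟨u, w', rfl⟩ := validAfter_cases hw
        · simp [ends, hw]
        · simp [ends, hw]
        · rw [count_stepWord_append] at hk
          exact absurd hk (Nat.succ_ne_zero _)
      · intro hw
        simp only [ends, Finset.mem_filter, Finset.mem_insert, Finset.mem_singleton] at hw
        obtain ⟨rfl | rfl, hw⟩ := hw <;> exact ⟨hw, rfl⟩
    -- both sides have `[v ≠ 0] + [v = 1]` elements
    refine ⟨hends.trans (Fintype.equivOfCardEq ?_)⟩
    rw [Fintype.card_coe]
    fin_cases v <;> decide
  | succ k ih =>
    exact ⟨(continuationSuccEquiv v k).trans <|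
      (Equiv.sigmaCongrRight fun u : {u // PEdge v u} => (ih u).some).trans
        (pWalkSuccEquiv v (k + 3)).symm⟩

theorem validAfter_one_cons_false (w : List Bool) :
    validAfter 1 (false :: w) = maximalAfter false false w := by
  rcases w with _ | ⟨x, w⟩ <;> simp [validAfter, maximalAfter, goodWindow]

def maximalWords (k : ℕ) : Set (List Bool) :=
  {w | maximalAfter false false w = true ∧ w.count true = k}

noncomputable def maximalWordsEquiv {k : ℕ} (hk : 1 ≤ k) : maximalWords k ≃ Continuation 1 k :=
  .ofBijective (fun w => ⟨false :: w.1, (validAfter_one_cons_false w.1).trans w.2.1,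
      by simpa using w.2.2⟩) <| by
    constructor
    · intro w w' h
      exact Subtype.ext (List.cons_injective (congrArg Subtype.val h))
    · rintro ⟨_ | ⟨_ | _, w⟩, hw, hcount⟩
      · rw [List.count_nil] at hcount
        omega
      · rw [validAfter_one_cons_false] at hw
        exact ⟨⟨w, hw, by simpa using hcount⟩, rfl⟩
      · simp [validAfter, maximalAfter, goodWindow] at hw

instance : Unique {u // PEdge 0 u} where
  default := ⟨1, by decide⟩
  uniq := fun ⟨u, hu⟩ => Subtype.ext (by revert u; decide)

def pWalkZeroEquiv (m : ℕ) : PWalk 0 (m + 1) ≃ PWalk 1 m :=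
  (pWalkSuccEquiv 0 m).trans (Equiv.uniqueSigma fun u : {u // PEdge 0 u} => PWalk u m)

theorem setOf_rivieraMaximal_eq_image (k : ℕ) :
    {p : ℕ × (ℤ → Bool) |
        RivieraConfig p.1 p.2 ∧ RivieraMaximal p.1 p.2 ∧ rivieraOccupancy p.1 p.2 = k} =
      (fun w => (w.length, configOf w)) '' maximalWords k := by
  ext ⟨n, c⟩
  constructor
  · rintro ⟨hc, hmax, hocc⟩
    obtain ⟨w, rfl, rfl⟩ : ∃ w : List Bool, w.length = n ∧ configOf w = c :=
      ⟨_, List.length_ofFn, configOf_ofFn hc⟩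
    rw [rivieraMaximal_configOf_iff] at hmax
    rw [rivieraOccupancy_configOf] at hocc
    exact ⟨w, ⟨hmax, hocc⟩, rfl⟩
  · rintro ⟨w, ⟨hmax, hcount⟩, h⟩
    cases h
    exact ⟨rivieraConfig_configOf w, (rivieraMaximal_configOf_iff w).2 hmax,
      (rivieraOccupancy_configOf w).trans hcount⟩

end Riviera

theorem rivieraOccupancy_count_eq_walkCount (k : ℕ) (hk : 1 ≤ k) :
    {p : ℕ × (ℤ → Bool) |
        RivieraConfig p.1 p.2 ∧ RivieraMaximal p.1 p.2 ∧ rivieraOccupancy p.1 p.2 = k}.Finite ∧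
    {p : ℕ × (ℤ → Bool) |
        RivieraConfig p.1 p.2 ∧ RivieraMaximal p.1 p.2 ∧ rivieraOccupancy p.1 p.2 = k}.ncard =
      Nat.card {w : Fin (k + 5) → Fin 3 //
        w 0 = 0 ∧ w (Fin.last (k + 4)) = 0 ∧
        ∀ t : Fin (k + 4), PEdge (w t.castSucc) (w t.succ)} := by
  have e : Riviera.maximalWords k ≃ Riviera.PWalk 0 (k + 4) :=
    (Riviera.maximalWordsEquiv hk).trans <|
      (Riviera.nonempty_continuation_equiv_pWalk k 1).some.trans
        (Riviera.pWalkZeroEquiv (k + 3)).symm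
  rw [Riviera.setOf_rivieraMaximal_eq_image]
  refine ⟨(Set.finite_coe_iff.1 (Finite.of_equiv _ e.symm)).image _, ?_⟩
  rw [Set.ncard_image_of_injective _ Riviera.length_configOf_injective, ← Nat.card_coe_set_eq,
    Nat.card_congr e]
  rfl
end

section
/- For k ≥ 1 let h_k denote the number of maximal Riviera configurations of any length having exactly k occupied lots (the cardinality of the finite set of pairs (n, c) with c a maximal Riviera configuration of length n with exactly k occupied lots). Then h_1 = 1, h_2 = 5, h_3 = 5, and for every k ≥ 4 one has h_k + h_{k−3} = h_{k−1} + 2·h_{k−2} (equivalently, h_k = h_{k−1} + 2h_{k−2} − h_{k−3}). -/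
/-- `hCount k` = the number of maximal Riviera configurations (of any length)
with exactly `k` occupied lots. -/
noncomputable def hCount (k : ℕ) : ℕ :=
  Nat.card {p : ℕ × (ℤ → Bool) //
    RivieraConfig p.1 p.2 ∧ RivieraMaximal p.1 p.2 ∧ rivieraOccupancy p.1 p.2 = k}

/-!
Sort the maximal configurations with `k` houses by how they end, writing `1` for a house. An
empty last lot must be blocked from the left, so a configuration ends in `1` or in `110`, and
dropping the final `0` matches the second kind with those ending in `11`. A configuration ending
in `1` ends in `11` or in `01`. Removing `01` leaves a maximal configuration ending in `1`
(the lot before `01` must hold a house), and removing `011` (its `0` is forced by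
permissibility) leaves an arbitrary maximal configuration. With `t k` and `b k` counting those
ending in `1` and in `11`, this gives for `k ≥ 1`
  `h k = t k + b k`,  `t (k + 1) = b (k + 1) + t k`,  `b (k + 2) = h k`,
hence `h k - h (k - 1) = 2 b k - b (k - 1) = 2 h (k - 2) - h (k - 3)`. The initial values come
from `t 1 = 1` (the configuration `1`), `b 1 = 0` and `b 2 = 2` (`11` and `011`). All these sets
are finite because every lot is within distance one of a house, so the length is at most `3 k`.
-/

open Function Set

theorem Set.ncard_sep_add_ncard_sep {α : Type*} {s : Set α} (hs : s.Finite) (f : α → Bool) :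
    {x ∈ s | f x = true}.ncard + {x ∈ s | f x = false}.ncard = s.ncard := by
  rw [← ncard_inter_add_ncard_sdiff_eq_ncard s {x | f x = true} hs]
  congr 2
  ext x
  simp

namespace Riviera

def Blocked (c : ℤ → Bool) (j : ℤ) : Prop :=
  c (j - 2) = true ∧ c (j - 1) = true ∨ c (j - 1) = true ∧ c (j + 1) = true ∨
    c (j + 1) = true ∧ c (j + 2) = true

variable {n m k : ℕ} {c d e : ℤ → Bool}

theorem Blocked.mono (hde : ∀ x, d x = true → e x = true) {j : ℤ} (h : Blocked d j) :
    Blocked e j := by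
  rcases h with ⟨h1, h2⟩ | ⟨h1, h2⟩ | ⟨h1, h2⟩ <;> simp [Blocked, hde _ h1, hde _ h2]

theorem _root_.RivieraPermissible.anti (hde : ∀ x, e x = true → d x = true)
    (hd : RivieraPermissible d) : RivieraPermissible e :=
  fun ⟨i, h1, h2, h3⟩ => hd ⟨i, hde _ h1, hde _ h2, hde _ h3⟩

theorem permissible_update_iff (hc : RivieraPermissible c) (j : ℤ) :
    RivieraPermissible (update c j true) ↔ ¬Blocked c j := by
  refine not_congr ⟨fun ⟨i, h1, h2, h3⟩ => ?_, fun h => ?_⟩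
  · obtain rfl | rfl | rfl : j = i - 1 ∨ j = i ∨ j = i + 1 := by
      by_contra! hj
      rw [update_of_ne hj.1.symm] at h1
      rw [update_of_ne hj.2.1.symm] at h2
      rw [update_of_ne hj.2.2.symm] at h3
      exact hc ⟨i, h1, h2, h3⟩
    · rw [update_of_ne (by omega)] at h2 h3
      exact Or.inr (Or.inr ⟨by simpa using h2, by convert h3 using 2; ring⟩)
    · rw [update_of_ne (by omega)] at h1 h3
      exact Or.inr (Or.inl ⟨h1, h3⟩)
    · rw [update_of_ne (by omega)] at h1 h2
      exact Or.inl ⟨by convert h1 using 2; ring, by simpa using h2⟩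
  · rcases h with ⟨h1, h2⟩ | ⟨h1, h2⟩ | ⟨h1, h2⟩
    · rw [show j - 2 = j - 1 - 1 by ring] at h1
      exact ⟨j - 1, by simp [update_apply, h1, h2]⟩
    · exact ⟨j, by simp [h1, h2]⟩
    · rw [show j + 2 = j + 1 + 1 by ring] at h2
      exact ⟨j + 1, by simp [update_apply, h1, h2]⟩

theorem not_blocked_of_eq_false {j : ℤ} (h₁ : c (j + 1) = false)
    (h₂ : c (j - 2) = false ∨ c (j - 1) = false) : ¬Blocked c j := by
  rintro (⟨a, b⟩ | ⟨a, b⟩ | ⟨a, b⟩) <;> simp_all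

theorem rivieraMaximal_iff : RivieraMaximal n c ↔
    RivieraPermissible c ∧ ∀ j : ℤ, 0 ≤ j → j < n → c j = false → Blocked c j :=
  and_congr_right fun hc => by simp only [permissible_update_iff hc, not_not]

theorem _root_.RivieraMaximal.occupied_near (hc : RivieraMaximal n c) {j : ℤ} (h0 : 0 ≤ j)
    (hn : j < n) : c (j - 1) = true ∨ c j = true ∨ c (j + 1) = true := by
  cases hj : c j
  · rcases (rivieraMaximal_iff.1 hc).2 j h0 hn hj with ⟨-, h⟩ | ⟨h, -⟩ | ⟨h, -⟩ <;> simp [h]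
  · simp

theorem _root_.RivieraConfig.bounds (hc : RivieraConfig n c) {j : ℤ} (hj : c j = true) :
    0 ≤ j ∧ j < n := by
  by_contra h
  simp [hc j (by omega)] at hj

theorem _root_.RivieraConfig.mono (hc : RivieraConfig m c) (h : m ≤ n) : RivieraConfig n c :=
  fun j hj => hc j (by omega)

theorem _root_.RivieraConfig.of_eq_false (hc : RivieraConfig (m + 1) c) (h : c m = false) :
    RivieraConfig m c :=
  fun j hj => if hjm : j = m then hjm ▸ h else hc j (by push_cast; omega)

theorem _root_.RivieraConfig.update (hc : RivieraConfig m c) (hmn : m ≤ n) {j : ℤ} (h0 : 0 ≤ j)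
    (hj : j < n) (b : Bool) : RivieraConfig n (update c j b) :=
  fun i hi => by rw [update_of_ne (by omega)]; exact hc i (by omega)

theorem _root_.RivieraConfig.ext (hc : RivieraConfig n c) (hd : RivieraConfig n d)
    (h : ∀ j : ℤ, 0 ≤ j → j < n → c j = d j) : c = d := by
  funext j
  by_cases hj : 0 ≤ j ∧ j < n
  · exact h j hj.1 hj.2
  · rw [hc j (by omega), hd j (by omega)]

theorem update_eq_true_of_eq_true {x j : ℤ} (h : c x = true) : update c j true x = true := by
  rw [update_apply]; split_ifs <;> simp [h]

theorem permissible_update_succ (hd : RivieraConfig m d) (hp : RivieraPermissible d) :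
    RivieraPermissible (update d (m + 1) true) :=
  (permissible_update_iff hp _).2 <| not_blocked_of_eq_false (hd _ (Or.inr (by omega)))
    (Or.inr (by simpa using hd m (Or.inr le_rfl)))

theorem rivieraOccupancy_le : rivieraOccupancy n c ≤ n := by
  unfold rivieraOccupancy
  simpa using Finset.card_filter_le (Finset.Ico (0 : ℤ) n) (fun j => c j = true)

theorem two_le_rivieraOccupancy (hc : RivieraConfig n c) {i j : ℤ} (hij : i ≠ j)
    (hi : c i = true) (hj : c j = true) : 2 ≤ rivieraOccupancy n c := by
  rw [← Finset.card_pair hij]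
  refine Finset.card_le_card fun x hx => ?_
  rcases Finset.mem_insert.1 hx with rfl | hx
  · simpa [hi] using hc.bounds hi
  · rw [Finset.mem_singleton.1 hx]
    simpa [hj] using hc.bounds hj

theorem rivieraOccupancy_update {j : ℤ} (h0 : 0 ≤ j) (hn : j < n) (hj : c j = false) :
    rivieraOccupancy n (update c j true) = rivieraOccupancy n c + 1 := by
  unfold rivieraOccupancy
  rw [← Finset.card_insert_of_notMem (a := j) (by simp [hj])]
  congr 1
  ext i
  by_cases hi : i = j <;> simp [update_apply, hi, h0, hn]

theorem _root_.RivieraConfig.rivieraOccupancy_eq (hc : RivieraConfig m c) (h : m ≤ n) :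
    rivieraOccupancy n c = rivieraOccupancy m c := by
  unfold rivieraOccupancy
  congr 1
  ext j
  simp only [Finset.mem_filter, Finset.mem_Ico]
  exact ⟨fun ⟨⟨h0, _⟩, hj⟩ => ⟨⟨h0, (hc.bounds hj).2⟩, hj⟩,
    fun ⟨⟨h0, _⟩, hj⟩ => ⟨⟨h0, by omega⟩, hj⟩⟩

def trunc (m : ℕ) (c : ℤ → Bool) : ℤ → Bool := fun j => if j < m then c j else false

theorem trunc_of_lt {j : ℤ} (h : j < m) : trunc m c j = c j := if_pos h

theorem trunc_eq_self (hc : RivieraConfig m c) : trunc m c = c :=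
  funext fun j => if h : j < m then if_pos h else by rw [trunc, if_neg h, hc j (by omega)]

theorem trunc_update_of_le {j : ℤ} {b : Bool} (h : m ≤ j) :
    trunc m (update c j b) = trunc m c :=
  funext fun i => by unfold trunc; split_ifs <;> simp [update_apply]; omega

theorem _root_.RivieraConfig.trunc (hc : RivieraConfig n c) : RivieraConfig m (trunc m c) :=
  fun j hj => by unfold Riviera.trunc; split_ifs <;> first | rfl | exact hc j (by omega)

theorem _root_.RivieraMaximal.trunc (hc : RivieraMaximal n c) (hmn : m ≤ n) (hcm : c m = false) :
    RivieraMaximal m (trunc m c) := by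
  obtain ⟨hperm, hblocked⟩ := rivieraMaximal_iff.1 hc
  refine rivieraMaximal_iff.2 ⟨hperm.anti fun x hx => ?_, fun j h0 hj hcj => ?_⟩
  · unfold Riviera.trunc at hx; split_ifs at hx; exact hx
  -- every occupied lot of a blocking pair lies below `m`, since the lot `m` is empty
  have below : ∀ x : ℤ, x ≤ m → c x = true → Riviera.trunc m c x = true := fun x hx hcx =>
    (trunc_of_lt (lt_of_le_of_ne hx fun h => by simp [h, hcm] at hcx)).trans hcx
  rw [trunc_of_lt hj] at hcj
  rcases hblocked j h0 (by omega) hcj with ⟨h1, h2⟩ | ⟨h1, h2⟩ | ⟨h1, h2⟩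
  · exact Or.inl ⟨below _ (by omega) h1, below _ (by omega) h2⟩
  · exact Or.inr (Or.inl ⟨below _ (by omega) h1, below _ (by omega) h2⟩)
  · have : j + 1 ≠ m := fun h => by simp [h, hcm] at h1
    exact Or.inr (Or.inr ⟨below _ (by omega) h1, below _ (by omega) h2⟩)

theorem _root_.RivieraMaximal.extend (hd : RivieraMaximal m d)
    (hde : ∀ x, d x = true → e x = true) (he : RivieraPermissible e)
    (hnew : ∀ j : ℤ, m ≤ j → j < n → e j = false → Blocked e j) : RivieraMaximal n e := by
  refine rivieraMaximal_iff.2 ⟨he, fun j h0 hj hej => ?_⟩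
  by_cases hjm : j < m
  · have hdj : d j = false := by
      cases hdj : d j
      · rfl
      · simp [hde j hdj] at hej
    exact ((rivieraMaximal_iff.1 hd).2 j h0 hjm hdj).mono hde
  · exact hnew j (by omega) hj hej

theorem length_le_three_mul_rivieraOccupancy (hc : RivieraConfig n c) (hmax : RivieraMaximal n c) :
    n ≤ 3 * rivieraOccupancy n c := by
  classical
  let occupied := (Finset.Ico (0 : ℤ) n).filter fun j => c j = true
  have cover : Finset.Ico (0 : ℤ) n ⊆ occupied.biUnion fun b => Finset.Icc (b - 1) (b + 1) := by
    intro j hj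
    obtain ⟨h0, hn⟩ := Finset.mem_Ico.1 hj
    simp only [Finset.mem_biUnion, Finset.mem_Icc, occupied, Finset.mem_filter, Finset.mem_Ico]
    rcases hmax.occupied_near h0 hn with h | h | h
    all_goals exact ⟨_, ⟨hc.bounds h, h⟩, by omega, by omega⟩
  calc n = (Finset.Ico (0 : ℤ) n).card := by simp
    _ ≤ (occupied.biUnion fun b => Finset.Icc (b - 1) (b + 1)).card := Finset.card_le_card cover
    _ ≤ ∑ b ∈ occupied, (Finset.Icc (b - 1) (b + 1)).card := Finset.card_biUnion_le
    _ = 3 * rivieraOccupancy n c := by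
      simp [Int.card_Icc, show ∀ b : ℤ, b + 1 + 1 - (b - 1) = 3 by intro; ring, mul_comm,
        rivieraOccupancy, occupied]

def maxConf (k : ℕ) : Set (ℕ × (ℤ → Bool)) :=
  {p | RivieraConfig p.1 p.2 ∧ RivieraMaximal p.1 p.2 ∧ rivieraOccupancy p.1 p.2 = k}

theorem hCount_eq_ncard (k : ℕ) : hCount k = (maxConf k).ncard := rfl

theorem le_of_mem_maxConf {p : ℕ × (ℤ → Bool)} (hp : p ∈ maxConf k) : k ≤ p.1 :=
  hp.2.2 ▸ rivieraOccupancy_le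

theorem maxConf_finite (k : ℕ) : (maxConf k).Finite := by
  classical
  let encode : ℕ × Finset ℤ → ℕ × (ℤ → Bool) := fun q => (q.1, fun j => decide (j ∈ q.2))
  refine ((Finset.range (3 * k + 1) ×ˢ (Finset.Ico (0 : ℤ) (3 * k)).powerset).finite_toSet.image
    encode).subset ?_
  rintro ⟨n, c⟩ ⟨hc, hmax, hocc⟩
  have hn := length_le_three_mul_rivieraOccupancy hc hmax
  refine ⟨(n, (Finset.Ico (0 : ℤ) n).filter fun j => c j = true), ?_, ?_⟩
  · simp only [Finset.coe_product, Set.mem_prod, Finset.mem_coe, Finset.mem_range,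
      Finset.mem_powerset]
    exact ⟨by omega, fun j hj => by simp at hj ⊢; omega⟩
  · refine Prod.ext rfl (funext fun j => ?_)
    cases hj : c j
    · simp [encode, hj]
    · simpa [encode, hj] using hc.bounds hj

def maxConfEnd1 (k : ℕ) : Set (ℕ × (ℤ → Bool)) := {p ∈ maxConf k | p.2 (p.1 - 1) = true}
def maxConfEnd0 (k : ℕ) : Set (ℕ × (ℤ → Bool)) := {p ∈ maxConf k | p.2 (p.1 - 1) = false}
def maxConfEnd11 (k : ℕ) : Set (ℕ × (ℤ → Bool)) := {p ∈ maxConfEnd1 k | p.2 (p.1 - 2) = true}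
def maxConfEnd01 (k : ℕ) : Set (ℕ × (ℤ → Bool)) := {p ∈ maxConfEnd1 k | p.2 (p.1 - 2) = false}

def dropLast (i : ℕ) (p : ℕ × (ℤ → Bool)) : ℕ × (ℤ → Bool) := (p.1 - i, trunc (p.1 - i) p.2)

def append0 (p : ℕ × (ℤ → Bool)) : ℕ × (ℤ → Bool) := (p.1 + 1, p.2)

theorem bijOn_append0 (hk : 1 ≤ k) : BijOn append0 (maxConfEnd11 k) (maxConfEnd0 k) := by
  refine InvOn.bijOn (f' := dropLast 1) ⟨?_, ?_⟩ ?_ ?_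
  · rintro ⟨m, d⟩ ⟨⟨⟨hd, -⟩, -⟩, -⟩
    simp [append0, dropLast, trunc_eq_self hd]
  · rintro ⟨n, c⟩ ⟨hp, hlast⟩
    obtain ⟨m, rfl⟩ := Nat.exists_eq_add_of_le' (hk.trans (le_of_mem_maxConf hp))
    simp only [Nat.cast_add, Nat.cast_one, add_sub_cancel_right] at hlast
    simp [append0, dropLast, trunc_eq_self (hp.1.of_eq_false hlast)]
  · rintro ⟨m, d⟩ ⟨⟨⟨hd, hmax, hocc⟩, h1⟩, h2⟩
    refine ⟨⟨hd.mono m.le_succ, hmax.extend (fun _ h => h) hmax.1 fun j hj hj' _ => ?_, ?_⟩, ?_⟩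
    · obtain rfl : j = m := by simp only [append0] at hj'; push_cast at hj'; omega
      exact Or.inl ⟨h2, h1⟩
    · rwa [append0, hd.rivieraOccupancy_eq m.le_succ]
    · simpa [append0] using hd m (Or.inr le_rfl)
  · rintro ⟨n, c⟩ ⟨hp, hlast⟩
    obtain ⟨m, rfl⟩ := Nat.exists_eq_add_of_le' (hk.trans (le_of_mem_maxConf hp))
    obtain ⟨hc, hmax, hocc⟩ := hp
    simp only [Nat.cast_add, Nat.cast_one, add_sub_cancel_right] at hlast
    have hc' := hc.of_eq_false hlast
    simp only [dropLast, Nat.add_sub_cancel, trunc_eq_self hc']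
    have h12 : c (m - 2) = true ∧ c (m - 1) = true := by
      rcases (rivieraMaximal_iff.1 hmax).2 m (by omega) (by push_cast; omega) hlast with
        h | ⟨-, h⟩ | ⟨h, -⟩
      · exact h
      all_goals have := (hc.bounds h).2; push_cast at this; omega
    refine ⟨⟨⟨hc', ?_, ?_⟩, h12.2⟩, h12.1⟩
    · simpa [trunc_eq_self hc'] using hmax.trunc m.le_succ hlast
    · rwa [← hc'.rivieraOccupancy_eq m.le_succ]

def append01 (p : ℕ × (ℤ → Bool)) : ℕ × (ℤ → Bool) := (p.1 + 2, update p.2 (p.1 + 1) true)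

theorem rivieraOccupancy_append01 (hd : RivieraConfig m d) :
    rivieraOccupancy (m + 2) (update d (m + 1) true) = rivieraOccupancy m d + 1 := by
  rw [rivieraOccupancy_update (by omega) (by push_cast; omega) (hd _ (Or.inr (by omega))),
    hd.rivieraOccupancy_eq (by omega)]

theorem append01_mem {p : ℕ × (ℤ → Bool)} (hp : p ∈ maxConfEnd1 k) :
    append01 p ∈ maxConfEnd01 (k + 1) := by
  obtain ⟨m, d⟩ := p
  obtain ⟨⟨hd, hmax, hocc⟩, hlast⟩ := hp
  dsimp only [append01] at hd hmax hocc hlast ⊢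
  have hm : d m = false := hd m (Or.inr le_rfl)
  refine ⟨⟨⟨hd.update (by omega) (by omega) (by push_cast; omega) _, ?_, ?_⟩, ?_⟩, ?_⟩
  · refine hmax.extend (fun _ => update_eq_true_of_eq_true) (permissible_update_succ hd hmax.1)
      fun j hj hj' hej => ?_
    dsimp only at hj' hej
    obtain rfl : j = m := by
      by_contra
      rw [show j = m + 1 by push_cast at hj'; omega, update_self] at hej
      contradiction
    exact Or.inr (Or.inl ⟨update_eq_true_of_eq_true hlast, update_self _ _ _⟩)
  · simpa [hocc] using rivieraOccupancy_append01 hd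
  · simp [add_sub_assoc]
  · simp [hm]

theorem append01_dropLast {p : ℕ × (ℤ → Bool)} (hp : p ∈ maxConfEnd01 k) (hn : 2 ≤ p.1) :
    append01 (dropLast 2 p) = p := by
  obtain ⟨n, c⟩ := p
  obtain ⟨m, rfl⟩ := Nat.exists_eq_add_of_le' hn
  obtain ⟨⟨⟨hc, -, -⟩, hlast⟩, hsnd⟩ := hp
  simp [add_sub_assoc] at hlast hsnd
  simp only [dropLast, append01, Nat.add_sub_cancel, Prod.mk.injEq, true_and]
  funext j
  simp only [update_apply, trunc]
  split_ifs with h1 h2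
  · rw [h1, hlast]
  · rfl
  · obtain rfl | hj : j = m ∨ m + 2 ≤ j := by omega
    · exact hsnd.symm
    · exact (hc j (Or.inr (by push_cast; omega))).symm

theorem dropLast_two_mem {p : ℕ × (ℤ → Bool)} (hp : p ∈ maxConfEnd01 (k + 1)) (hn : 2 ≤ p.1) :
    dropLast 2 p ∈ maxConfEnd1 k := by
  have hrebuild := append01_dropLast hp hn
  obtain ⟨n, c⟩ := p
  obtain ⟨m, rfl⟩ := Nat.exists_eq_add_of_le' hn
  obtain ⟨⟨⟨hc, hmax, hocc⟩, -⟩, hsnd⟩ := hp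
  dsimp only at hc hmax hocc
  simp at hsnd
  simp only [dropLast, append01, Nat.add_sub_cancel, Prod.mk.injEq, maxConfEnd1, maxConf,
    mem_ofPred_eq] at hrebuild ⊢
  refine ⟨⟨hc.trunc, hmax.trunc (by omega) hsnd, ?_⟩, ?_⟩
  · rw [← hrebuild.2, rivieraOccupancy_append01 hc.trunc] at hocc
    omega
  · rw [trunc_of_lt (by omega)]
    rcases (rivieraMaximal_iff.1 hmax).2 m (by omega) (by push_cast; omega) hsnd with
      ⟨-, h⟩ | ⟨h, -⟩ | ⟨-, h⟩
    · exact h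
    · exact h
    · have := (hc.bounds h).2
      push_cast at this
      omega

theorem bijOn_append01 (hk : 1 ≤ k) : BijOn append01 (maxConfEnd1 k) (maxConfEnd01 (k + 1)) :=
  InvOn.bijOn (f' := dropLast 2)
    ⟨fun p hp => by
      obtain ⟨m, d⟩ := p
      simp [append01, dropLast, trunc_update_of_le, trunc_eq_self hp.1.1],
      fun _ hp => append01_dropLast hp (by have := le_of_mem_maxConf hp.1.1; omega)⟩
    (fun _ => append01_mem)
    (fun _ hp => dropLast_two_mem hp (by have := le_of_mem_maxConf hp.1.1; omega))

def append011 (p : ℕ × (ℤ → Bool)) : ℕ × (ℤ → Bool) :=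
  (p.1 + 3, update (update p.2 (p.1 + 1) true) (p.1 + 2) true)

theorem rivieraOccupancy_append011 (hd : RivieraConfig m d) :
    rivieraOccupancy (m + 3) (update (update d (m + 1) true) (m + 2) true) =
      rivieraOccupancy m d + 2 := by
  rw [rivieraOccupancy_update (by omega) (by push_cast; omega)
      (by rw [update_of_ne (by omega)]; exact hd _ (Or.inr (by omega))),
    rivieraOccupancy_update (by omega) (by push_cast; omega) (hd _ (Or.inr (by omega))),
    hd.rivieraOccupancy_eq (by omega)]

theorem append011_mem {p : ℕ × (ℤ → Bool)} (hp : p ∈ maxConf k) :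
    append011 p ∈ maxConfEnd11 (k + 2) := by
  obtain ⟨m, d⟩ := p
  obtain ⟨hd, hmax, hocc⟩ := hp
  dsimp only [append011] at hd hmax hocc ⊢
  have hperm : RivieraPermissible (update (update d (m + 1) true) (m + 2) true) :=
    (permissible_update_iff (permissible_update_succ hd hmax.1) _).2 <| not_blocked_of_eq_false
      (by rw [update_of_ne (by omega)]; exact hd _ (Or.inr (by omega)))
      (Or.inl (by rw [update_of_ne (by omega)]; simpa using hd m (Or.inr le_rfl)))
  refine ⟨⟨⟨(hd.update (by omega) (by omega) (by push_cast; omega) _).update le_rfl (by omega)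
    (by push_cast; omega) _, ?_, ?_⟩, ?_⟩, ?_⟩
  · refine hmax.extend (fun _ h => update_eq_true_of_eq_true (update_eq_true_of_eq_true h)) hperm
      fun j hj hj' hej => ?_
    dsimp only at hj' hej
    obtain rfl : j = m := by
      by_contra
      obtain rfl | rfl : j = m + 1 ∨ j = m + 2 := by push_cast at hj'; omega
      all_goals simp at hej
    exact Or.inr (Or.inr ⟨update_eq_true_of_eq_true (update_self _ _ _), update_self _ _ _⟩)
  · simpa [hocc] using rivieraOccupancy_append011 hd
  · simp [add_sub_assoc]
  · simp [add_sub_assoc]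

theorem eq_false_of_mem_maxConfEnd11 {n : ℕ} {c : ℤ → Bool} (hp : (n, c) ∈ maxConfEnd11 k) :
    c (n - 3) = false := by
  obtain ⟨⟨⟨-, hmax, -⟩, hlast⟩, hsnd⟩ := hp
  cases h : c (n - 3)
  · rfl
  · exact absurd ⟨n - 2, by convert h using 2; ring, hsnd, by convert hlast using 2; ring⟩ hmax.1

theorem append011_dropLast {p : ℕ × (ℤ → Bool)} (hp : p ∈ maxConfEnd11 k) (hn : 3 ≤ p.1) :
    append011 (dropLast 3 p) = p := by
  obtain ⟨n, c⟩ := p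
  obtain ⟨m, rfl⟩ := Nat.exists_eq_add_of_le' hn
  have hm := eq_false_of_mem_maxConfEnd11 hp
  obtain ⟨⟨⟨hc, -, -⟩, hlast⟩, hsnd⟩ := hp
  simp [add_sub_assoc] at hlast hsnd hm
  simp only [dropLast, append011, Nat.add_sub_cancel, Prod.mk.injEq, true_and]
  funext j
  simp only [update_apply, trunc]
  split_ifs with h1 h2 h3
  · rw [h1, hlast]
  · rw [h2, hsnd]
  · rfl
  · obtain rfl | hj : j = m ∨ m + 3 ≤ j := by omega
    · exact hm.symm
    · exact (hc j (Or.inr (by push_cast; omega))).symm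

theorem dropLast_three_mem {p : ℕ × (ℤ → Bool)} (hp : p ∈ maxConfEnd11 (k + 2)) (hn : 3 ≤ p.1) :
    dropLast 3 p ∈ maxConf k := by
  have hrebuild := append011_dropLast hp hn
  obtain ⟨n, c⟩ := p
  obtain ⟨m, rfl⟩ := Nat.exists_eq_add_of_le' hn
  have hm := eq_false_of_mem_maxConfEnd11 hp
  obtain ⟨⟨⟨hc, hmax, hocc⟩, -⟩, -⟩ := hp
  dsimp only at hc hmax hocc
  simp at hm
  simp only [dropLast, append011, Nat.add_sub_cancel, Prod.mk.injEq, maxConf, mem_ofPred_eq]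
    at hrebuild ⊢
  refine ⟨hc.trunc, hmax.trunc (by omega) hm, ?_⟩
  rw [← hrebuild.2, rivieraOccupancy_append011 hc.trunc] at hocc
  omega

theorem bijOn_append011 (hk : 1 ≤ k) : BijOn append011 (maxConf k) (maxConfEnd11 (k + 2)) :=
  InvOn.bijOn (f' := dropLast 3)
    ⟨fun p hp => by
      obtain ⟨m, d⟩ := p
      simp [append011, dropLast, trunc_update_of_le, trunc_eq_self hp.1],
      fun _ hp => append011_dropLast hp (by have := le_of_mem_maxConf hp.1.1; omega)⟩
    (fun _ => append011_mem)
    (fun _ hp => dropLast_three_mem hp (by have := le_of_mem_maxConf hp.1.1; omega))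

def full (n : ℕ) : ℤ → Bool := fun j => decide (0 ≤ j ∧ j < n)

theorem rivieraConfig_full : RivieraConfig n (full n) :=
  fun j hj => by simp [full]; omega

theorem _root_.RivieraConfig.eq_full (hc : RivieraConfig n c)
    (h : ∀ j : ℤ, 0 ≤ j → j < n → c j = true) : c = full n :=
  hc.ext rivieraConfig_full fun j h0 hj => by simp [full, h j h0 hj, h0, hj]

theorem full_mem_maxConf (hn : n ≤ 2) : (n, full n) ∈ maxConf n := by
  refine ⟨rivieraConfig_full, rivieraMaximal_iff.2 ⟨?_, fun j h0 hj hfj => ?_⟩, ?_⟩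
  · rintro ⟨i, h1, -, h3⟩
    simp [full] at h1 h3
    omega
  · simp [full, h0, hj] at hfj
  · unfold rivieraOccupancy
    rw [Finset.filter_true_of_mem fun j hj => by simpa [full] using Finset.mem_Ico.1 hj]
    simp

theorem maxConf_zero : maxConf 0 = {(0, full 0)} := by
  refine Subset.antisymm (fun ⟨n, c⟩ ⟨hc, hmax, hocc⟩ => ?_)
    (by simpa using full_mem_maxConf (by omega))
  dsimp only at hc hmax hocc
  have hn : n = 0 := by simpa [hocc] using length_le_three_mul_rivieraOccupancy hc hmax
  subst hn
  exact Prod.ext rfl (hc.eq_full fun j h0 hj => by omega)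

theorem maxConfEnd1_one : maxConfEnd1 1 = {(1, full 1)} := by
  refine Subset.antisymm (fun ⟨n, c⟩ ⟨⟨hc, hmax, hocc⟩, hlast⟩ => ?_)
    (by simpa [maxConfEnd1, full] using full_mem_maxConf (by omega))
  dsimp only at hc hmax hocc hlast
  have hn : n = 1 := by
    have := (hc.bounds hlast).1
    by_contra hn
    cases h : c (n - 2)
    · rcases (rivieraMaximal_iff.1 hmax).2 (n - 2) (by omega) (by omega) h with
        ⟨h', -⟩ | ⟨h', -⟩ | ⟨-, h'⟩
      · have := two_le_rivieraOccupancy hc (by omega) h' hlast; omega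
      · have := two_le_rivieraOccupancy hc (by omega) h' hlast; omega
      · have := (hc.bounds h').2; omega
    · have := two_le_rivieraOccupancy hc (by omega) h hlast; omega
  subst hn
  simp [hc.eq_full fun j h0 hj => by simpa [show j = 0 by omega] using hlast]

theorem maxConfEnd11_one : maxConfEnd11 1 = ∅ :=
  eq_empty_of_forall_notMem fun ⟨_, _⟩ ⟨⟨⟨hc, _, hocc⟩, hlast⟩, hsnd⟩ => by
    have := two_le_rivieraOccupancy hc (by omega) hsnd hlast
    omega

theorem maxConfEnd11_two : maxConfEnd11 2 = {(2, full 2), append011 (0, full 0)} := by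
  refine Subset.antisymm (fun ⟨n, c⟩ hp => ?_) (insert_subset ?_ (singleton_subset_iff.2 ?_))
  · have hn := (hp.1.1.1.bounds hp.2).1
    dsimp only at hn
    obtain hn | hn : n = 2 ∨ 3 ≤ n := by omega
    · subst hn
      obtain ⟨⟨⟨hc, -, -⟩, hlast⟩, hsnd⟩ := hp
      refine Or.inl (Prod.ext rfl (hc.eq_full fun j h0 hj => ?_))
      obtain rfl | rfl : j = 0 ∨ j = 1 := by omega
      exacts [hsnd, hlast]
    · have hdrop := dropLast_three_mem hp hn
      rw [maxConf_zero, mem_singleton_iff] at hdrop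
      exact Or.inr (by rw [← append011_dropLast hp hn, hdrop]; rfl)
  · exact ⟨⟨full_mem_maxConf le_rfl, by simp [full]⟩, by simp [full]⟩
  · simpa using append011_mem (full_mem_maxConf (n := 0) (by omega))

theorem ncard_maxConf_eq (hk : 1 ≤ k) :
    (maxConf k).ncard = (maxConfEnd1 k).ncard + (maxConfEnd11 k).ncard := by
  rw [(bijOn_append0 hk).ncard_eq]
  exact (ncard_sep_add_ncard_sep (maxConf_finite k) _).symm

theorem ncard_maxConfEnd1_succ (hk : 1 ≤ k) :
    (maxConfEnd1 (k + 1)).ncard = (maxConfEnd11 (k + 1)).ncard + (maxConfEnd1 k).ncard := by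
  rw [(bijOn_append01 hk).ncard_eq]
  exact (ncard_sep_add_ncard_sep ((maxConf_finite _).subset (sep_subset _ _)) _).symm

theorem ncard_maxConfEnd11_add_two (hk : 1 ≤ k) :
    (maxConfEnd11 (k + 2)).ncard = (maxConf k).ncard :=
  (bijOn_append011 hk).ncard_eq.symm

end Riviera

open Riviera in
theorem hCount_recurrence :
    hCount 1 = 1 ∧ hCount 2 = 5 ∧ hCount 3 = 5 ∧
    ∀ k : ℕ, 4 ≤ k →
      hCount k + hCount (k - 3) = hCount (k - 1) + 2 * hCount (k - 2) := by
  simp only [hCount_eq_ncard]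
  have t1 : (maxConfEnd1 1).ncard = 1 := by simp [maxConfEnd1_one]
  have b1 : (maxConfEnd11 1).ncard = 0 := by simp [maxConfEnd11_one]
  have b2 : (maxConfEnd11 2).ncard = 2 := by
    rw [maxConfEnd11_two, Set.ncard_pair (by simp [append011])]
  have t2 : (maxConfEnd1 2).ncard = (maxConfEnd11 2).ncard + (maxConfEnd1 1).ncard :=
    ncard_maxConfEnd1_succ le_rfl
  have t3 : (maxConfEnd1 3).ncard = (maxConfEnd11 3).ncard + (maxConfEnd1 2).ncard :=
    ncard_maxConfEnd1_succ (by norm_num)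
  have b3 : (maxConfEnd11 3).ncard = (maxConf 1).ncard := ncard_maxConfEnd11_add_two le_rfl
  have h1 := ncard_maxConf_eq (k := 1) le_rfl
  refine ⟨by omega, by rw [ncard_maxConf_eq (by norm_num)]; omega,
    by rw [ncard_maxConf_eq (by norm_num)]; omega, fun k hk => ?_⟩
  obtain ⟨j, rfl⟩ := Nat.exists_eq_add_of_le' hk
  have tj : (maxConfEnd1 (j + 4)).ncard = (maxConfEnd11 (j + 4)).ncard +
      (maxConfEnd1 (j + 3)).ncard := ncard_maxConfEnd1_succ (by omega)
  have bj4 : (maxConfEnd11 (j + 4)).ncard = (maxConf (j + 2)).ncard :=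
    ncard_maxConfEnd11_add_two (by omega)
  have bj3 : (maxConfEnd11 (j + 3)).ncard = (maxConf (j + 1)).ncard :=
    ncard_maxConfEnd11_add_two (by omega)
  rw [show j + 4 - 3 = j + 1 by omega, show j + 4 - 1 = j + 3 by omega,
    show j + 4 - 2 = j + 2 by omega, ncard_maxConf_eq (k := j + 4) (by omega),
    ncard_maxConf_eq (k := j + 3) (by omega)]
  omega
end
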